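/- arXiv:2102.11834 — 7 statements merged into one kernel-verified Lean document; each statement's English description precedes it below -/
import Mathlib

section
/- In a two-sided matching market (M, W, P) with strict preferences, the set of matched persons is the same in every stable matching: for any two stable matchings μ and λ, a person p ∈ M ∪ W is matched (to someone other than themselves) in μ if and only if p is matched in λ. -/
namespace Stmt0

/-- Strict preferences of a person over potential partners in `W`, together with the
option of staying single (`none`), encoded by a rank function that is injective on the
relevant alternatives; a higher rank means more preferred. -/
def StrictPref {β : Type*} (pref : Option β → ℕ) (W : Finset β) : Prop :=
  Set.InjOn pref (insert none (Option.some '' (W : Set β)))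

/-- A (one-to-one) matching on the two-sided market with men `M` and women `W`:
`mu m` is the partner of man `m` (`none` = single) and `nu w` the partner of woman `w`. -/
structure Matching {α β : Type*} (M : Finset α) (W : Finset β) where
  mu : α → Option β
  nu : β → Option α
  consistent : ∀ m w, mu m = some w ↔ nu w = some m
  suppM : ∀ m, m ∉ M → mu m = none
  suppW : ∀ w, w ∉ W → nu w = none

variable {α β : Type*} (M : Finset α) (W : Finset β)
  (prefM : α → Option β → ℕ) (prefW : β → Option α → ℕ)

/-- Individual rationality: everyone prefers their partner to staying single. -/
def IndRational (μ : Matching M W) : Prop :=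
  (∀ m ∈ M, ∀ w, μ.mu m = some w → prefM m none < prefM m (some w)) ∧
  (∀ w ∈ W, ∀ m, μ.nu w = some m → prefW w none < prefW w (some m))

/-- The pair `(m, w)` blocks `μ` if both prefer each other to their current partners. -/
def Blocks (μ : Matching M W) (m : α) (w : β) : Prop :=
  m ∈ M ∧ w ∈ W ∧ prefM m (μ.mu m) < prefM m (some w) ∧
    prefW w (μ.nu w) < prefW w (some m)

/-- A matching is stable if it is individually rational and not blocked by any pair. -/
def Stable (μ : Matching M W) : Prop :=
  IndRational M W prefM prefW μ ∧ ∀ m w, ¬ Blocks M W prefM prefW μ m w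

/-!
Let `S` be the men who strictly prefer their `μ`-partner to their `lam`-partner and `T` the women
who strictly prefer their `lam`-partner to their `μ`-partner. Stability of `lam` forces the
`μ`-partner of a man in `S` to exist and to lie in `T`; symmetrically, stability of `μ` forces the
`lam`-partner of a woman in `T` to exist and to lie in `S`. Both assignments are injective, so
`#S ≤ #T ≤ #{m ∈ S | m is lam-matched}`, and every man in `S` is `lam`-matched. A man matched in `μ`
but single in `lam` would lie in `S` by individual rationality of `μ`.
-/

def Matching.swap (μ : Matching M W) : Matching W M where
  mu := μ.nu
  nu := μ.mu
  consistent := fun w m => (μ.consistent m w).symm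
  suppM := μ.suppW
  suppW := μ.suppM

section

variable {M W prefM prefW}

theorem Stable.swap {μ : Matching M W} (h : Stable M W prefM prefW μ) :
    Stable W M prefW prefM (μ.swap M W) := by
  obtain ⟨⟨hIRM, hIRW⟩, hNoBlock⟩ := h
  exact ⟨⟨hIRW, hIRM⟩, fun w m ⟨hw, hm, hpw, hpm⟩ => hNoBlock m w ⟨hm, hw, hpm, hpw⟩⟩

namespace Matching

theorem mem_left_of_mu_eq_some (μ : Matching M W) {m : α} {w : β} (h : μ.mu m = some w) :
    m ∈ M := by
  by_contra hm
  simp [μ.suppM m hm] at h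

theorem mem_right_of_mu_eq_some (μ : Matching M W) {m : α} {w : β} (h : μ.mu m = some w) :
    w ∈ W :=
  (μ.swap M W).mem_left_of_mu_eq_some ((μ.consistent m w).mp h)

theorem mu_mem_insert_none_image_some (μ : Matching M W) (m : α) :
    μ.mu m ∈ insert none (Option.some '' (W : Set β)) := by
  cases h : μ.mu m with
  | none => exact Set.mem_insert _ _
  | some w => exact Set.mem_insert_of_mem _ ⟨w, μ.mem_right_of_mu_eq_some h, rfl⟩

theorem eq_of_mu_eq_some (μ : Matching M W) {m₁ m₂ : α} {w : β} (h₁ : μ.mu m₁ = some w)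
    (h₂ : μ.mu m₂ = some w) : m₁ = m₂ :=
  Option.some_injective _ <| ((μ.consistent m₁ w).mp h₁).symm.trans ((μ.consistent m₂ w).mp h₂)

theorem eq_of_nu_eq_some (μ : Matching M W) {w₁ w₂ : β} {m : α} (h₁ : μ.nu w₁ = some m)
    (h₂ : μ.nu w₂ = some m) : w₁ = w₂ :=
  (μ.swap M W).eq_of_mu_eq_some h₁ h₂

end Matching

theorem IndRational.pref_none_le {μ : Matching M W} (h : IndRational M W prefM prefW μ)
    {m : α} (hm : m ∈ M) : prefM m none ≤ prefM m (μ.mu m) := by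
  cases hμm : μ.mu m with
  | none => exact le_rfl
  | some w => exact (h.1 m hm w hμm).le

theorem Stable.partner_prefers_of_prefers (hW : ∀ w ∈ W, StrictPref (prefW w) M)
    {lam : Matching M W} (hlam : Stable M W prefM prefW lam) (μ : Matching M W) {m : α}
    (hm : m ∈ M) (hpref : prefM m (lam.mu m) < prefM m (μ.mu m)) :
    ∃ w, μ.mu m = some w ∧ prefW w (μ.nu w) < prefW w (lam.nu w) := by
  cases hμm : μ.mu m with
  | none =>
    rw [hμm] at hpref
    exact absurd (hlam.1.pref_none_le hm) hpref.not_ge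
  | some w =>
    have hw : w ∈ W := μ.mem_right_of_mu_eq_some hμm
    have hμw : μ.nu w = some m := (μ.consistent m w).mp hμm
    rw [hμm] at hpref
    have hle : prefW w (some m) ≤ prefW w (lam.nu w) :=
      not_lt.mp fun hlt => hlam.2 m w ⟨hm, hw, hpref, hlt⟩
    have hne : lam.nu w ≠ some m := fun hlw => by
      rw [(lam.consistent m w).mpr hlw] at hpref
      exact hpref.false
    have hlt : prefW w (some m) < prefW w (lam.nu w) := hle.lt_of_ne fun heq =>
      hne (hW w hw (Set.mem_insert_of_mem _ ⟨m, hm, rfl⟩)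
        ((lam.swap M W).mu_mem_insert_none_image_some w) heq).symm
    exact ⟨w, rfl, hμw ▸ hlt⟩

theorem Stable.isSome_mu_of_prefers (hM : ∀ m ∈ M, StrictPref (prefM m) W)
    (hW : ∀ w ∈ W, StrictPref (prefW w) M) {μ lam : Matching M W}
    (hμ : Stable M W prefM prefW μ) (hlam : Stable M W prefM prefW lam) {m : α} (hm : m ∈ M)
    (hpref : prefM m (lam.mu m) < prefM m (μ.mu m)) : (lam.mu m).isSome := by
  classical
  set S := {x ∈ M | prefM x (lam.mu x) < prefM x (μ.mu x)}
  set T := {y ∈ W | prefW y (μ.nu y) < prefW y (lam.nu y)}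
  set S₀ := {x ∈ S | (lam.mu x).isSome}
  have hST : S.card ≤ T.card := by
    refine Finset.card_le_card_of_forall_subsingleton (fun m w => μ.mu m = some w) ?_ ?_
    · intro m hmS
      obtain ⟨hm, hpref⟩ := Finset.mem_filter.mp hmS
      obtain ⟨w, hμm, hw⟩ := hlam.partner_prefers_of_prefers hW μ hm hpref
      exact ⟨w, Finset.mem_filter.mpr ⟨μ.mem_right_of_mu_eq_some hμm, hw⟩, hμm⟩
    · exact fun _ _ _ h₁ _ h₂ => μ.eq_of_mu_eq_some h₁.2 h₂.2
  have hTS₀ : T.card ≤ S₀.card := by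
    refine Finset.card_le_card_of_forall_subsingleton (fun w m => lam.nu w = some m) ?_ ?_
    · intro w hwT
      obtain ⟨hw, hpref⟩ := Finset.mem_filter.mp hwT
      obtain ⟨m, hlw, hm⟩ :=
        hμ.swap.partner_prefers_of_prefers hM (lam.swap M W) hw hpref
      have hlm : lam.mu m = some w := (lam.consistent m w).mpr hlw
      exact ⟨m, Finset.mem_filter.mpr ⟨Finset.mem_filter.mpr ⟨lam.mem_left_of_mu_eq_some hlm, hm⟩,
        by rw [hlm]; rfl⟩, hlw⟩
    · exact fun _ _ _ h₁ _ h₂ => lam.eq_of_nu_eq_some h₁.2 h₂.2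
  have hS₀ : S₀ = S := Finset.eq_of_subset_of_card_le (Finset.filter_subset _ _) (hST.trans hTS₀)
  have hmS₀ : m ∈ S₀ := hS₀ ▸ Finset.mem_filter.mpr ⟨hm, hpref⟩
  exact (Finset.mem_filter.mp hmS₀).2

theorem Stable.isSome_mu_of_isSome (hM : ∀ m ∈ M, StrictPref (prefM m) W)
    (hW : ∀ w ∈ W, StrictPref (prefW w) M) {μ lam : Matching M W}
    (hμ : Stable M W prefM prefW μ) (hlam : Stable M W prefM prefW lam) {m : α} (hm : m ∈ M)
    (hμm : (μ.mu m).isSome) : (lam.mu m).isSome := by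
  obtain ⟨w, hw⟩ := Option.isSome_iff_exists.mp hμm
  by_contra hlm
  rw [Option.not_isSome_iff_eq_none] at hlm
  have hpref : prefM m (lam.mu m) < prefM m (μ.mu m) := by
    rw [hlm, hw]
    exact hμ.1.1 m hm w hw
  simpa [hlm] using hμ.isSome_mu_of_prefers hM hW hlam hm hpref

end

/-- In a two-sided matching market with strict preferences, the set
of matched persons is the same in every stable matching. -/
theorem matched_set_invariant
    (hM : ∀ m ∈ M, StrictPref (prefM m) W) (hW : ∀ w ∈ W, StrictPref (prefW w) M)
    (μ lam : Matching M W)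
    (hμ : Stable M W prefM prefW μ) (hlam : Stable M W prefM prefW lam) :
    (∀ m ∈ M, (μ.mu m).isSome ↔ (lam.mu m).isSome) ∧
    (∀ w ∈ W, (μ.nu w).isSome ↔ (lam.nu w).isSome) :=
  ⟨fun _ hm => ⟨hμ.isSome_mu_of_isSome hM hW hlam hm, hlam.isSome_mu_of_isSome hM hW hμ hm⟩,
    fun _ hw => ⟨hμ.swap.isSome_mu_of_isSome hW hM hlam.swap hw,
      hlam.swap.isSome_mu_of_isSome hW hM hμ.swap hw⟩⟩

end Stmt0
end

section
/- Let (M, W, P) be a two-sided matching market with strict preferences and let M₁ ⊆ M. Fix a side σ ∈ {men, women}, let μ be the σ-optimal stable matching on (M, W, P) and μ₁ the σ-optimal stable matching on the restricted market (M₁, W, P|_(M₁,W)). Then μ₁(m) ≥_m μ(m) for every m ∈ M₁ and μ₁(w) ≤_w μ(w) for every w ∈ W. -/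
namespace Stmt1

/-- Strict preferences over partners in `W` plus staying single (`none`), encoded by a
rank function injective on the relevant alternatives; higher rank = more preferred. -/
def StrictPref {β : Type*} (pref : Option β → ℕ) (W : Finset β) : Prop :=
  Set.InjOn pref (insert none (Option.some '' (W : Set β)))

/-- A (one-to-one) matching on the two-sided market with men `M` and women `W`. -/
structure Matching {α β : Type*} (M : Finset α) (W : Finset β) where
  mu : α → Option β
  nu : β → Option α
  consistent : ∀ m w, mu m = some w ↔ nu w = some m
  suppM : ∀ m, m ∉ M → mu m = none
  suppW : ∀ w, w ∉ W → nu w = none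

variable {α β : Type*} (M : Finset α) (W : Finset β)
  (prefM : α → Option β → ℕ) (prefW : β → Option α → ℕ)

def IndRational (μ : Matching M W) : Prop :=
  (∀ m ∈ M, ∀ w, μ.mu m = some w → prefM m none < prefM m (some w)) ∧
  (∀ w ∈ W, ∀ m, μ.nu w = some m → prefW w none < prefW w (some m))

def Blocks (μ : Matching M W) (m : α) (w : β) : Prop :=
  m ∈ M ∧ w ∈ W ∧ prefM m (μ.mu m) < prefM m (some w) ∧
    prefW w (μ.nu w) < prefW w (some m)

def Stable (μ : Matching M W) : Prop :=
  IndRational M W prefM prefW μ ∧ ∀ m w, ¬ Blocks M W prefM prefW μ m w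

/-- Man-optimal stable matching (the output of Gale–Shapley with men proposing). -/
def ManOpt (μ : Matching M W) : Prop :=
  Stable M W prefM prefW μ ∧
    ∀ lam : Matching M W, Stable M W prefM prefW lam →
      ∀ m ∈ M, prefM m (lam.mu m) ≤ prefM m (μ.mu m)

/-- Woman-optimal stable matching (the output of Gale–Shapley with women proposing). -/
def WomanOpt (μ : Matching M W) : Prop :=
  Stable M W prefM prefW μ ∧
    ∀ lam : Matching M W, Stable M W prefM prefW lam →
      ∀ w ∈ W, prefW w (lam.nu w) ≤ prefW w (μ.nu w)

open Classical in
/-- Most preferred option among `none` and the elements of `s` (as `some`),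
according to the rank function `f`. -/
noncomputable def best {γ : Type*} (f : Option γ → ℕ) (s : Finset γ) : Option γ :=
  if h : ∃ w ∈ s, f none ≤ f (some w) ∧ ∀ w' ∈ s, f (some w') ≤ f (some w)
  then some h.choose else none

lemma best_spec {γ : Type*} (f : Option γ → ℕ) (s : Finset γ) :
    f none ≤ f (best f s) ∧ (∀ w ∈ s, f (some w) ≤ f (best f s)) ∧
      (best f s = none ∨ ∃ w ∈ s, best f s = some w) := by
  unfold best
  split
  · rename_i h
    obtain ⟨hw, hnone, hmax⟩ := h.choose_spec
    exact ⟨hnone, hmax, Or.inr ⟨h.choose, hw, rfl⟩⟩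
  · rename_i h
    refine ⟨le_rfl, fun w hw => ?_, Or.inl rfl⟩
    by_contra hc
    push_neg at hc
    obtain ⟨w', hw', hmax⟩ := s.exists_max_image (fun w => f (some w)) ⟨w, hw⟩
    exact h ⟨w', hw', le_trans hc.le (hmax w hw), hmax⟩

lemma best_ge_none {γ : Type*} (f : Option γ → ℕ) (s : Finset γ) :
    f none ≤ f (best f s) := (best_spec f s).1

lemma best_ge_some {γ : Type*} (f : Option γ → ℕ) {s : Finset γ} {w : γ} (hw : w ∈ s) :
    f (some w) ≤ f (best f s) := (best_spec f s).2.1 w hw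

lemma best_cases {γ : Type*} (f : Option γ → ℕ) (s : Finset γ) :
    best f s = none ∨ ∃ w ∈ s, best f s = some w := (best_spec f s).2.2

lemma best_mono {γ : Type*} (f : Option γ → ℕ) {s t : Finset γ} (h : s ⊆ t) :
    f (best f s) ≤ f (best f t) := by
  rcases best_cases f s with h0 | ⟨w, hw, h0⟩ <;> rw [h0]
  · exact best_ge_none f t
  · exact best_ge_some f (h hw)

open scoped Classical

variable (A : Finset α)

/-- One step of the Adachi operator, men's side: `m` points to his favorite woman among
those currently willing to accept him (or stays single). -/
noncomputable def stepM (y : β → Option α) (m : α) : Option β :=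
  if m ∈ A then
    best (prefM m) (W.filter fun w => prefW w (y w) ≤ prefW w (some m)) else none

/-- One step of the Adachi operator, women's side. -/
noncomputable def stepW (x : α → Option β) (w : β) : Option α :=
  if w ∈ W then
    best (prefW w) (A.filter fun m => prefM m (x m) ≤ prefM m (some w)) else none

/-- The Adachi operator on prematchings. -/
noncomputable def stepZ (z : (α → Option β) × (β → Option α)) :
    (α → Option β) × (β → Option α) :=
  (stepM W prefM prefW A z.2, stepW W prefM prefW A z.1)

/-- Top prematching: every man points to his overall favorite, every woman is single. -/
noncomputable def topZ : (α → Option β) × (β → Option α) :=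
  (fun m => if m ∈ A then best (prefM m) W else none, fun _ => none)

/-- Bottom prematching: every man is single, every woman points to her overall favorite. -/
noncomputable def botZ : (α → Option β) × (β → Option α) :=
  (fun _ => none, fun w => if w ∈ W then best (prefW w) A else none)

noncomputable def chain (z0 : (α → Option β) × (β → Option α)) :
    ℕ → (α → Option β) × (β → Option α)
  | 0 => z0
  | n + 1 => stepZ W prefM prefW A (chain z0 n)

/-- Support/range invariant of prematchings. -/
def Inv (z : (α → Option β) × (β → Option α)) : Prop :=
  (∀ m, m ∉ A → z.1 m = none) ∧ (∀ m w, z.1 m = some w → w ∈ W) ∧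
  (∀ w, w ∉ W → z.2 w = none) ∧ (∀ w m, z.2 w = some m → m ∈ A)

/-- Order on prematchings: men weakly better in `z'`, women weakly better in `z`. -/
def PLE (z z' : (α → Option β) × (β → Option α)) : Prop :=
  (∀ m ∈ A, prefM m (z.1 m) ≤ prefM m (z'.1 m)) ∧
  (∀ w ∈ W, prefW w (z'.2 w) ≤ prefW w (z.2 w))

variable {A}

lemma PLE.trans' {z₁ z₂ z₃ : (α → Option β) × (β → Option α)}
    (h1 : PLE W prefM prefW A z₁ z₂) (h2 : PLE W prefM prefW A z₂ z₃) :
    PLE W prefM prefW A z₁ z₃ :=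
  ⟨fun m hm => le_trans (h1.1 m hm) (h2.1 m hm),
   fun w hw => le_trans (h2.2 w hw) (h1.2 w hw)⟩

lemma stepM_some {y : β → Option α} {m : α} {w : β}
    (h : stepM W prefM prefW A y m = some w) :
    m ∈ A ∧ w ∈ W ∧ prefW w (y w) ≤ prefW w (some m) := by
  unfold stepM at h
  split at h
  · rename_i hm
    rcases best_cases (prefM m) _ with h0 | ⟨w', hw', h0⟩ <;> rw [h0] at h
    · exact absurd h (by simp)
    · obtain rfl : w' = w := Option.some.inj h
      simp only [Finset.mem_filter] at hw'
      exact ⟨hm, hw'.1, hw'.2⟩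
  · exact absurd h (by simp)

lemma stepW_some {x : α → Option β} {m : α} {w : β}
    (h : stepW W prefM prefW A x w = some m) :
    w ∈ W ∧ m ∈ A ∧ prefM m (x m) ≤ prefM m (some w) := by
  unfold stepW at h
  split at h
  · rename_i hw
    rcases best_cases (prefW w) _ with h0 | ⟨m', hm', h0⟩ <;> rw [h0] at h
    · exact absurd h (by simp)
    · obtain rfl : m' = m := Option.some.inj h
      simp only [Finset.mem_filter] at hm'
      exact ⟨hw, hm'.1, hm'.2⟩
  · exact absurd h (by simp)

lemma stepM_none_le {y : β → Option α} {m : α} (hm : m ∈ A) :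
    prefM m none ≤ prefM m (stepM W prefM prefW A y m) := by
  unfold stepM; rw [if_pos hm]; exact best_ge_none _ _

lemma stepW_none_le {x : α → Option β} {w : β} (hw : w ∈ W) :
    prefW w none ≤ prefW w (stepW W prefM prefW A x w) := by
  unfold stepW; rw [if_pos hw]; exact best_ge_none _ _

lemma stepM_le {y : β → Option α} {m : α} {w : β} (hm : m ∈ A) (hw : w ∈ W)
    (h : prefW w (y w) ≤ prefW w (some m)) :
    prefM m (some w) ≤ prefM m (stepM W prefM prefW A y m) := by
  unfold stepM; rw [if_pos hm]
  exact best_ge_some _ (Finset.mem_filter.2 ⟨hw, h⟩)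

lemma stepW_le {x : α → Option β} {m : α} {w : β} (hw : w ∈ W) (hm : m ∈ A)
    (h : prefM m (x m) ≤ prefM m (some w)) :
    prefW w (some m) ≤ prefW w (stepW W prefM prefW A x w) := by
  unfold stepW; rw [if_pos hw]
  exact best_ge_some _ (Finset.mem_filter.2 ⟨hm, h⟩)

lemma inv_stepZ (z : (α → Option β) × (β → Option α)) :
    Inv W A (stepZ W prefM prefW A z) := by
  refine ⟨fun m hm => ?_, fun m w h => (stepM_some W prefM prefW h).2.1,
    fun w hw => ?_, fun w m h => (stepW_some W prefM prefW h).2.1⟩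
  · show stepM W prefM prefW A z.2 m = none
    unfold stepM; rw [if_neg hm]
  · show stepW W prefM prefW A z.1 w = none
    unfold stepW; rw [if_neg hw]

lemma inv_topZ : Inv W A (topZ W prefM A) := by
  refine ⟨fun m hm => by simp [topZ, hm], fun m w h => ?_, fun _ _ => rfl, by simp [topZ]⟩
  simp only [topZ] at h
  split at h
  · rcases best_cases (prefM m) W with h0 | ⟨w', hw', h0⟩ <;> rw [h0] at h
    · exact absurd h (by simp)
    · obtain rfl : w' = w := Option.some.inj h
      exact hw'
  · exact absurd h (by simp)

lemma inv_botZ : Inv W A (botZ W prefW A) := by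
  refine ⟨by simp [botZ], by simp [botZ], fun w hw => by simp [botZ, hw], fun w m h => ?_⟩
  simp only [botZ] at h
  split at h
  · rcases best_cases (prefW w) A with h0 | ⟨m', hm', h0⟩ <;> rw [h0] at h
    · exact absurd h (by simp)
    · obtain rfl : m' = m := Option.some.inj h
      exact hm'
  · exact absurd h (by simp)

lemma inv_chain {z0 : (α → Option β) × (β → Option α)} (h0 : Inv W A z0) :
    ∀ n, Inv W A (chain W prefM prefW A z0 n)
  | 0 => h0
  | n + 1 => inv_stepZ W prefM prefW _

/-- Key monotonicity: the operator is monotone, simultaneously across a market and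
a submarket. -/
lemma stepZ_mono {A₁ : Finset α} (hA : A₁ ⊆ A)
    {z z₁ : (α → Option β) × (β → Option α)} (h : PLE W prefM prefW A₁ z z₁) :
    PLE W prefM prefW A₁ (stepZ W prefM prefW A z) (stepZ W prefM prefW A₁ z₁) := by
  constructor
  · intro m hm
    show prefM m (stepM W prefM prefW A z.2 m) ≤ prefM m (stepM W prefM prefW A₁ z₁.2 m)
    unfold stepM
    rw [if_pos (hA hm), if_pos hm]
    refine best_mono _ (fun w hw => ?_)
    simp only [Finset.mem_filter] at hw ⊢
    exact ⟨hw.1, le_trans (h.2 w hw.1) hw.2⟩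
  · intro w hw
    show prefW w (stepW W prefM prefW A₁ z₁.1 w) ≤ prefW w (stepW W prefM prefW A z.1 w)
    unfold stepW
    rw [if_pos hw, if_pos hw]
    refine best_mono _ (fun m hm => ?_)
    simp only [Finset.mem_filter] at hm ⊢
    exact ⟨hA hm.1, le_trans (h.1 m hm.1) hm.2⟩

lemma chain_top_antitone :
    ∀ n, PLE W prefM prefW A (chain W prefM prefW A (topZ W prefM A) (n + 1))
      (chain W prefM prefW A (topZ W prefM A) n)
  | 0 => by
      constructor
      · intro m hm
        show prefM m (stepM W prefM prefW A (topZ W prefM A).2 m) ≤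
          prefM m ((topZ W prefM A).1 m)
        simp only [topZ, if_pos hm]
        unfold stepM; rw [if_pos hm]
        exact best_mono _ (Finset.filter_subset _ _)
      · intro w hw
        exact stepW_none_le W prefM prefW hw
  | n + 1 => stepZ_mono W prefM prefW (le_refl A) (chain_top_antitone n)

lemma chain_bot_monotone :
    ∀ n, PLE W prefM prefW A (chain W prefM prefW A (botZ W prefW A) n)
      (chain W prefM prefW A (botZ W prefW A) (n + 1))
  | 0 => by
      constructor
      · intro m hm
        exact stepM_none_le W prefM prefW hm
      · intro w hw
        show prefW w (stepW W prefM prefW A (botZ W prefW A).1 w) ≤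
          prefW w ((botZ W prefW A).2 w)
        simp only [botZ, if_pos hw]
        unfold stepW; rw [if_pos hw]
        exact best_mono _ (Finset.filter_subset _ _)
  | n + 1 => stepZ_mono W prefM prefW (le_refl A) (chain_bot_monotone n)

lemma chain_cross_top {A₁ : Finset α} (hA : A₁ ⊆ A) :
    ∀ n, PLE W prefM prefW A₁ (chain W prefM prefW A (topZ W prefM A) n)
      (chain W prefM prefW A₁ (topZ W prefM A₁) n)
  | 0 => by
      constructor
      · intro m hm
        show prefM m ((topZ W prefM A).1 m) ≤ prefM m ((topZ W prefM A₁).1 m)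
        simp only [topZ, if_pos hm, if_pos (hA hm)]
        exact le_rfl
      · intro w _
        exact le_rfl
  | n + 1 => stepZ_mono W prefM prefW hA (chain_cross_top hA n)

lemma chain_cross_bot {A₁ : Finset α} (hA : A₁ ⊆ A) :
    ∀ n, PLE W prefM prefW A₁ (chain W prefM prefW A (botZ W prefW A) n)
      (chain W prefM prefW A₁ (botZ W prefW A₁) n)
  | 0 => by
      constructor
      · intro m _
        exact le_rfl
      · intro w hw
        show prefW w ((botZ W prefW A₁).2 w) ≤ prefW w ((botZ W prefW A).2 w)
        simp only [botZ, if_pos hw]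
        exact best_mono _ hA
  | n + 1 => stepZ_mono W prefM prefW hA (chain_cross_bot hA n)

variable (A) in
/-- A potential function, strictly monotone w.r.t. `PLE` on invariant prematchings. -/
noncomputable def Phi (z : (α → Option β) × (β → Option α)) : ℕ :=
  (∑ m ∈ A, prefM m (z.1 m)) +
    ∑ w ∈ W, (prefW w (best (prefW w) M) - prefW w (z.2 w))

lemma inv_bound_women (hA : A ⊆ M) {z : (α → Option β) × (β → Option α)}
    (hz : Inv W A z) {w : β} : prefW w (z.2 w) ≤ prefW w (best (prefW w) M) := by
  cases h : z.2 w with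
  | none => exact best_ge_none _ _
  | some m => exact best_ge_some _ (hA (hz.2.2.2 w m h))

lemma inv_bound_men {z : (α → Option β) × (β → Option α)}
    (hz : Inv W A z) {m : α} : prefM m (z.1 m) ≤ prefM m (best (prefM m) W) := by
  cases h : z.1 m with
  | none => exact best_ge_none _ _
  | some w => exact best_ge_some _ (hz.2.1 m w h)

lemma phi_bound (hA : A ⊆ M) {z : (α → Option β) × (β → Option α)} (hz : Inv W A z) :
    Phi M W prefM prefW A z ≤
      (∑ m ∈ A, prefM m (best (prefM m) W)) +
        ∑ w ∈ W, prefW w (best (prefW w) M) := by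
  refine Nat.add_le_add (Finset.sum_le_sum fun m _ => inv_bound_men W prefM hz)
    (Finset.sum_le_sum fun w _ => Nat.sub_le _ _)

lemma phi_mono (hA : A ⊆ M) {z z' : (α → Option β) × (β → Option α)}
    (hz : Inv W A z) (hz' : Inv W A z') (h : PLE W prefM prefW A z z') :
    Phi M W prefM prefW A z ≤ Phi M W prefM prefW A z' ∧
      (Phi M W prefM prefW A z = Phi M W prefM prefW A z' →
        (∀ m ∈ A, prefM m (z.1 m) = prefM m (z'.1 m)) ∧
        (∀ w ∈ W, prefW w (z.2 w) = prefW w (z'.2 w))) := by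
  have hm1 : ∀ m ∈ A, prefM m (z.1 m) ≤ prefM m (z'.1 m) := h.1
  have hw1 : ∀ w ∈ W, prefW w (best (prefW w) M) - prefW w (z.2 w) ≤
      prefW w (best (prefW w) M) - prefW w (z'.2 w) :=
    fun w hw => Nat.sub_le_sub_left (h.2 w hw) _
  have hs1 : (∑ m ∈ A, prefM m (z.1 m)) ≤ ∑ m ∈ A, prefM m (z'.1 m) :=
    Finset.sum_le_sum hm1
  have hs2 : (∑ w ∈ W, (prefW w (best (prefW w) M) - prefW w (z.2 w))) ≤
      ∑ w ∈ W, (prefW w (best (prefW w) M) - prefW w (z'.2 w)) :=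
    Finset.sum_le_sum hw1
  constructor
  · exact Nat.add_le_add hs1 hs2
  · intro heq
    unfold Phi at heq
    have e1 : (∑ m ∈ A, prefM m (z.1 m)) = ∑ m ∈ A, prefM m (z'.1 m) := by omega
    have e2 : (∑ w ∈ W, (prefW w (best (prefW w) M) - prefW w (z.2 w))) =
        ∑ w ∈ W, (prefW w (best (prefW w) M) - prefW w (z'.2 w)) := by omega
    refine ⟨(Finset.sum_eq_sum_iff_of_le hm1).1 e1, fun w hw => ?_⟩
    have := (Finset.sum_eq_sum_iff_of_le hw1).1 e2 w hw
    have b1 := inv_bound_women M W prefW hA hz (w := w)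
    have b2 := h.2 w hw
    omega

lemma nat_down (a : ℕ → ℕ) (h : ∀ n, a (n + 1) ≤ a n) : ∃ n, a (n + 1) = a n := by
  by_contra hc
  push_neg at hc
  have key : ∀ n, a n + n ≤ a 0 := by
    intro n
    induction n with
    | zero => omega
    | succ k ih => have h1 := h k; have h2 := hc k; omega
  have := key (a 0 + 1); omega

lemma nat_up (a : ℕ → ℕ) (B : ℕ) (hB : ∀ n, a n ≤ B) (h : ∀ n, a n ≤ a (n + 1)) :
    ∃ n, a (n + 1) = a n := by
  by_contra hc
  push_neg at hc
  have key : ∀ n, a 0 + n ≤ a n := by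
    intro n
    induction n with
    | zero => omega
    | succ k ih => have h1 := h k; have h2 := hc k; omega
  have := key (B + 1); have := hB (B + 1); omega

lemma inv_mem_domM {z : (α → Option β) × (β → Option α)} (hz : Inv W A z) (m : α) :
    z.1 m ∈ insert none (Option.some '' (W : Set β)) := by
  cases h : z.1 m with
  | none => exact Set.mem_insert _ _
  | some w => exact Set.mem_insert_of_mem _ ⟨w, hz.2.1 m w h, rfl⟩

lemma inv_mem_domW (hA : A ⊆ M) {z : (α → Option β) × (β → Option α)}
    (hz : Inv W A z) (w : β) :
    z.2 w ∈ insert none (Option.some '' (M : Set α)) := by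
  cases h : z.2 w with
  | none => exact Set.mem_insert _ _
  | some m => exact Set.mem_insert_of_mem _ ⟨m, hA (hz.2.2.2 w m h), rfl⟩

lemma eq_of_ranks (hM : ∀ m ∈ M, StrictPref (prefM m) W) (hW : ∀ w ∈ W, StrictPref (prefW w) M)
    (hA : A ⊆ M) {z z' : (α → Option β) × (β → Option α)}
    (hz : Inv W A z) (hz' : Inv W A z')
    (h1 : ∀ m ∈ A, prefM m (z.1 m) = prefM m (z'.1 m))
    (h2 : ∀ w ∈ W, prefW w (z.2 w) = prefW w (z'.2 w)) : z = z' := by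
  have e1 : z.1 = z'.1 := by
    funext m
    by_cases hm : m ∈ A
    · exact hM m (hA hm) (inv_mem_domM W hz m) (inv_mem_domM W hz' m) (h1 m hm)
    · rw [hz.1 m hm, hz'.1 m hm]
  have e2 : z.2 = z'.2 := by
    funext w
    by_cases hw : w ∈ W
    · exact hW w hw (inv_mem_domW M W hA hz w) (inv_mem_domW M W hA hz' w) (h2 w hw)
    · rw [hz.2.2.1 w hw, hz'.2.2.1 w hw]
  exact Prod.ext e1 e2

lemma chain_fix_after {z0 : (α → Option β) × (β → Option α)} {n : ℕ}
    (h : chain W prefM prefW A z0 (n + 1) = chain W prefM prefW A z0 n) :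
    ∀ k, n ≤ k → chain W prefM prefW A z0 k = chain W prefM prefW A z0 n := by
  intro k hk
  induction k with
  | zero => cases Nat.le_zero.1 hk; rfl
  | succ j ih =>
    rcases Nat.lt_or_ge n (j + 1) with hlt | hge
    · have hj : n ≤ j := Nat.lt_succ_iff.1 hlt
      have := ih hj
      show stepZ W prefM prefW A (chain W prefM prefW A z0 j) = _
      rw [this]
      exact h
    · have heq : n = j + 1 := le_antisymm hk hge
      rw [heq]

/-- Any `PLE`-antitone invariant chain eventually hits a fixed point. -/
lemma exists_fix_down (hM : ∀ m ∈ M, StrictPref (prefM m) W)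
    (hW : ∀ w ∈ W, StrictPref (prefW w) M) (hA : A ⊆ M)
    {z0 : (α → Option β) × (β → Option α)} (h0 : Inv W A z0)
    (hdec : ∀ n, PLE W prefM prefW A (chain W prefM prefW A z0 (n + 1))
      (chain W prefM prefW A z0 n)) :
    ∃ n, chain W prefM prefW A z0 (n + 1) = chain W prefM prefW A z0 n := by
  obtain ⟨n, hn⟩ := nat_down (fun n => Phi M W prefM prefW A (chain W prefM prefW A z0 n))
    (fun n => (phi_mono M W prefM prefW hA (inv_chain W prefM prefW h0 (n + 1))
      (inv_chain W prefM prefW h0 n) (hdec n)).1)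
  refine ⟨n, ?_⟩
  obtain ⟨r1, r2⟩ := (phi_mono M W prefM prefW hA (inv_chain W prefM prefW h0 (n + 1))
    (inv_chain W prefM prefW h0 n) (hdec n)).2 hn
  exact eq_of_ranks M W prefM prefW hM hW hA (inv_chain W prefM prefW h0 (n + 1))
    (inv_chain W prefM prefW h0 n) r1 r2

/-- Any `PLE`-monotone invariant chain eventually hits a fixed point. -/
lemma exists_fix_up (hM : ∀ m ∈ M, StrictPref (prefM m) W)
    (hW : ∀ w ∈ W, StrictPref (prefW w) M) (hA : A ⊆ M)
    {z0 : (α → Option β) × (β → Option α)} (h0 : Inv W A z0)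
    (hinc : ∀ n, PLE W prefM prefW A (chain W prefM prefW A z0 n)
      (chain W prefM prefW A z0 (n + 1))) :
    ∃ n, chain W prefM prefW A z0 (n + 1) = chain W prefM prefW A z0 n := by
  obtain ⟨n, hn⟩ := nat_up (fun n => Phi M W prefM prefW A (chain W prefM prefW A z0 n))
    ((∑ m ∈ A, prefM m (best (prefM m) W)) + ∑ w ∈ W, prefW w (best (prefW w) M))
    (fun n => phi_bound M W prefM prefW hA (inv_chain W prefM prefW h0 n))
    (fun n => (phi_mono M W prefM prefW hA (inv_chain W prefM prefW h0 n)
      (inv_chain W prefM prefW h0 (n + 1)) (hinc n)).1)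
  refine ⟨n, ?_⟩
  obtain ⟨r1, r2⟩ := (phi_mono M W prefM prefW hA (inv_chain W prefM prefW h0 n)
    (inv_chain W prefM prefW h0 (n + 1)) (hinc n)).2 hn.symm
  exact eq_of_ranks M W prefM prefW hM hW hA (inv_chain W prefM prefW h0 (n + 1))
    (inv_chain W prefM prefW h0 n) (fun m hm => (r1 m hm).symm) (fun w hw => (r2 w hw).symm)

/-- A fixed point of the Adachi operator yields a stable matching. -/
lemma fix_stable (hM : ∀ m ∈ M, StrictPref (prefM m) W)
    (hW : ∀ w ∈ W, StrictPref (prefW w) M) (hA : A ⊆ M)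
    {z : (α → Option β) × (β → Option α)} (hz : Inv W A z)
    (hfix : stepZ W prefM prefW A z = z) :
    ∃ ν : Matching A W, ν.mu = z.1 ∧ ν.nu = z.2 ∧ Stable A W prefM prefW ν := by
  have hx : stepM W prefM prefW A z.2 = z.1 := congrArg Prod.fst hfix
  have hy : stepW W prefM prefW A z.1 = z.2 := congrArg Prod.snd hfix
  have hcons : ∀ m w, z.1 m = some w ↔ z.2 w = some m := by
    intro m w
    constructor
    · intro h
      have h' : stepM W prefM prefW A z.2 m = some w := by rw [hx]; exact h
      obtain ⟨hm, hw, hle⟩ := stepM_some W prefM prefW h'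
      have h2 : prefW w (some m) ≤ prefW w (stepW W prefM prefW A z.1 w) :=
        stepW_le W prefM prefW hw hm (le_of_eq (congrArg (prefM m) h))
      rw [hy] at h2
      exact hW w hw (inv_mem_domW M W hA hz w)
        (Set.mem_insert_of_mem _ ⟨m, hA hm, rfl⟩) (le_antisymm hle h2)
    · intro h
      have h' : stepW W prefM prefW A z.1 w = some m := by rw [hy]; exact h
      obtain ⟨hw, hm, hle⟩ := stepW_some W prefM prefW h'
      have h2 : prefM m (some w) ≤ prefM m (stepM W prefM prefW A z.2 m) :=
        stepM_le W prefM prefW hm hw (le_of_eq (congrArg (prefW w) h))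
      rw [hx] at h2
      exact hM m (hA hm) (inv_mem_domM W hz m)
        (Set.mem_insert_of_mem _ ⟨w, hw, rfl⟩) (le_antisymm hle h2)
  refine ⟨⟨z.1, z.2, hcons, fun m hm => by rw [← hx]; unfold stepM; rw [if_neg hm],
    fun w hw => by rw [← hy]; unfold stepW; rw [if_neg hw]⟩, rfl, rfl, ?_, ?_⟩
  · constructor
    · intro m hm w h
      replace h : z.1 m = some w := h
      have hle : prefM m none ≤ prefM m (some w) := by
        have := stepM_none_le W prefM prefW (A := A) (y := z.2) hm
        rw [hx, h] at this
        exact this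
      rcases lt_or_eq_of_le hle with hlt | heq
      · exact hlt
      · exact absurd (hM m (hA hm) (Set.mem_insert _ _)
          (Set.mem_insert_of_mem _ ⟨w, hz.2.1 m w h, rfl⟩) heq) (by simp)
    · intro w hw m h
      replace h : z.2 w = some m := h
      have hle : prefW w none ≤ prefW w (some m) := by
        have := stepW_none_le W prefM prefW (A := A) (x := z.1) hw
        rw [hy, h] at this
        exact this
      rcases lt_or_eq_of_le hle with hlt | heq
      · exact hlt
      · exact absurd (hW w hw (Set.mem_insert _ _)
          (Set.mem_insert_of_mem _ ⟨m, hA (hz.2.2.2 w m h), rfl⟩) heq) (by simp)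
  · rintro m w ⟨hm, hw, h1, h2⟩
    replace h1 : prefM m (z.1 m) < prefM m (some w) := h1
    replace h2 : prefW w (z.2 w) < prefW w (some m) := h2
    have := stepM_le W prefM prefW (y := z.2) hm hw h2.le
    rw [hx] at this
    exact absurd h1 (not_lt.2 this)

lemma mu_memW {A : Finset α} (lam : Matching A W) {m : α} {w : β}
    (h : lam.mu m = some w) : w ∈ W := by
  by_contra hw
  have h2 := (lam.consistent m w).mp h
  rw [lam.suppW w hw] at h2
  exact absurd h2 (by simp)

lemma nu_memA {A : Finset α} (lam : Matching A W) {m : α} {w : β}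
    (h : lam.nu w = some m) : m ∈ A := by
  by_contra hm
  have h2 := (lam.consistent m w).mpr h
  rw [lam.suppM m hm] at h2
  exact absurd h2 (by simp)

lemma matching_domM {A : Finset α} (lam : Matching A W) (m : α) :
    lam.mu m ∈ insert none (Option.some '' (W : Set β)) := by
  cases h : lam.mu m with
  | none => exact Set.mem_insert _ _
  | some w => exact Set.mem_insert_of_mem _ ⟨w, mu_memW W lam h, rfl⟩

lemma matching_domW {A : Finset α} (hA : A ⊆ M) (lam : Matching A W) (w : β) :
    lam.nu w ∈ insert none (Option.some '' (M : Set α)) := by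
  cases h : lam.nu w with
  | none => exact Set.mem_insert _ _
  | some m => exact Set.mem_insert_of_mem _ ⟨m, hA (nu_memA W lam h), rfl⟩

lemma ir_men {A : Finset α} {lam : Matching A W} (hs : Stable A W prefM prefW lam)
    {m : α} (hm : m ∈ A) : prefM m none ≤ prefM m (lam.mu m) := by
  cases h : lam.mu m with
  | none => exact le_rfl
  | some w => exact (hs.1.1 m hm w h).le

lemma ir_women {A : Finset α} {lam : Matching A W} (hs : Stable A W prefM prefW lam)
    {w : β} (hw : w ∈ W) : prefW w none ≤ prefW w (lam.nu w) := by
  cases h : lam.nu w with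
  | none => exact le_rfl
  | some m => exact (hs.1.2 w hw m h).le

/-- A stable matching is below its image under the operator. -/
lemma stable_fix_le (hM : ∀ m ∈ M, StrictPref (prefM m) W)
    (hW : ∀ w ∈ W, StrictPref (prefW w) M) (hA : A ⊆ M)
    (lam : Matching A W) (hs : Stable A W prefM prefW lam) :
    PLE W prefM prefW A (lam.mu, lam.nu) (stepZ W prefM prefW A (lam.mu, lam.nu)) := by
  constructor
  · intro m hm
    show prefM m (lam.mu m) ≤ prefM m (stepM W prefM prefW A lam.nu m)
    cases h : lam.mu m with
    | none => exact stepM_none_le W prefM prefW hm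
    | some w =>
      exact stepM_le W prefM prefW hm (mu_memW W lam h)
        (le_of_eq (congrArg (prefW w) ((lam.consistent m w).mp h))) |>.trans_eq rfl
  · intro w hw
    show prefW w (stepW W prefM prefW A lam.mu w) ≤ prefW w (lam.nu w)
    cases h : stepW W prefM prefW A lam.mu w with
    | none => exact ir_women W prefM prefW hs hw
    | some m =>
      obtain ⟨-, hm, hle⟩ := stepW_some W prefM prefW h
      by_contra hc
      push_neg at hc
      rcases lt_or_eq_of_le hle with hlt | heq
      · exact hs.2 m w ⟨hm, hw, hlt, hc⟩
      · have e1 : lam.mu m = some w :=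
          hM m (hA hm) (matching_domM W lam m) (Set.mem_insert_of_mem _ ⟨w, hw, rfl⟩) heq
        have e2 := (lam.consistent m w).mp e1
        rw [e2] at hc
        exact lt_irrefl _ hc

/-- A stable matching is above its image under the operator. -/
lemma stable_fix_ge (hM : ∀ m ∈ M, StrictPref (prefM m) W)
    (hW : ∀ w ∈ W, StrictPref (prefW w) M) (hA : A ⊆ M)
    (lam : Matching A W) (hs : Stable A W prefM prefW lam) :
    PLE W prefM prefW A (stepZ W prefM prefW A (lam.mu, lam.nu)) (lam.mu, lam.nu) := by
  constructor
  · intro m hm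
    show prefM m (stepM W prefM prefW A lam.nu m) ≤ prefM m (lam.mu m)
    cases h : stepM W prefM prefW A lam.nu m with
    | none => exact ir_men W prefM prefW hs hm
    | some w =>
      obtain ⟨-, hwW, hle⟩ := stepM_some W prefM prefW h
      by_contra hc
      push_neg at hc
      rcases lt_or_eq_of_le hle with hlt | heq
      · exact hs.2 m w ⟨hm, hwW, hc, hlt⟩
      · have e1 : lam.nu w = some m :=
          hW w hwW (matching_domW M W hA lam w) (Set.mem_insert_of_mem _ ⟨m, hA hm, rfl⟩) heq
        have e2 := (lam.consistent m w).mpr e1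
        rw [e2] at hc
        exact lt_irrefl _ hc
  · intro w hw
    show prefW w (lam.nu w) ≤ prefW w (stepW W prefM prefW A lam.mu w)
    cases h : lam.nu w with
    | none => exact stepW_none_le W prefM prefW hw
    | some m =>
      exact stepW_le W prefM prefW hw (nu_memA W lam h)
        (le_of_eq (congrArg (prefM m) ((lam.consistent m w).mpr h)))

lemma lam_le_top (lam : Matching A W) (hs : Stable A W prefM prefW lam) :
    PLE W prefM prefW A (lam.mu, lam.nu) (topZ W prefM A) := by
  constructor
  · intro m hm
    show prefM m (lam.mu m) ≤ prefM m ((topZ W prefM A).1 m)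
    simp only [topZ, if_pos hm]
    cases h : lam.mu m with
    | none => exact best_ge_none _ _
    | some w => exact best_ge_some _ (mu_memW W lam h)
  · intro w hw
    exact ir_women W prefM prefW hs hw

lemma bot_le_lam (lam : Matching A W) (hs : Stable A W prefM prefW lam) :
    PLE W prefM prefW A (botZ W prefW A) (lam.mu, lam.nu) := by
  constructor
  · intro m hm
    exact ir_men W prefM prefW hs hm
  · intro w hw
    show prefW w (lam.nu w) ≤ prefW w ((botZ W prefW A).2 w)
    simp only [botZ, if_pos hw]
    cases h : lam.nu w with
    | none => exact best_ge_none _ _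
    | some m => exact best_ge_some _ (nu_memA W lam h)

lemma lam_le_chain_top (hM : ∀ m ∈ M, StrictPref (prefM m) W)
    (hW : ∀ w ∈ W, StrictPref (prefW w) M) (hA : A ⊆ M)
    (lam : Matching A W) (hs : Stable A W prefM prefW lam) :
    ∀ n, PLE W prefM prefW A (lam.mu, lam.nu)
      (chain W prefM prefW A (topZ W prefM A) n)
  | 0 => lam_le_top W prefM prefW lam hs
  | n + 1 => PLE.trans' W prefM prefW
      (stable_fix_le M W prefM prefW hM hW hA lam hs)
      (stepZ_mono W prefM prefW (le_refl A) (lam_le_chain_top hM hW hA lam hs n))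

lemma chain_bot_le_lam (hM : ∀ m ∈ M, StrictPref (prefM m) W)
    (hW : ∀ w ∈ W, StrictPref (prefW w) M) (hA : A ⊆ M)
    (lam : Matching A W) (hs : Stable A W prefM prefW lam) :
    ∀ n, PLE W prefM prefW A (chain W prefM prefW A (botZ W prefW A) n)
      (lam.mu, lam.nu)
  | 0 => bot_le_lam W prefM prefW lam hs
  | n + 1 => PLE.trans' W prefM prefW
      (stepZ_mono W prefM prefW (le_refl A) (chain_bot_le_lam hM hW hA lam hs n))
      (stable_fix_ge M W prefM prefW hM hW hA lam hs)

/-- Package: the limit of the top chain is a stable matching dominating (in `PLE`)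
every stable matching of the market `A`. -/
lemma market_top (hM : ∀ m ∈ M, StrictPref (prefM m) W)
    (hW : ∀ w ∈ W, StrictPref (prefW w) M) (hA : A ⊆ M) :
    ∃ (ν : Matching A W) (N : ℕ),
      (∀ k, N ≤ k → chain W prefM prefW A (topZ W prefM A) k = (ν.mu, ν.nu)) ∧
      Stable A W prefM prefW ν ∧
      ∀ lam : Matching A W, Stable A W prefM prefW lam →
        PLE W prefM prefW A (lam.mu, lam.nu) (ν.mu, ν.nu) := by
  obtain ⟨n, hn⟩ := exists_fix_down M W prefM prefW hM hW hA
    (inv_topZ W prefM (A := A)) (chain_top_antitone W prefM prefW)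
  have hfix : stepZ W prefM prefW A (chain W prefM prefW A (topZ W prefM A) n) =
      chain W prefM prefW A (topZ W prefM A) n := hn
  obtain ⟨ν, hmu, hnu, hstable⟩ := fix_stable M W prefM prefW hM hW hA
    (inv_chain W prefM prefW (inv_topZ W prefM) n) hfix
  have hcn : chain W prefM prefW A (topZ W prefM A) n = (ν.mu, ν.nu) := by
    rw [hmu, hnu]
  refine ⟨ν, n, fun k hk => ?_, hstable, fun lam hs => ?_⟩
  · rw [chain_fix_after W prefM prefW hn k hk, hcn]
  · have := lam_le_chain_top M W prefM prefW hM hW hA lam hs n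
    rwa [hcn] at this

/-- Package: the limit of the bottom chain is a stable matching dominated (in `PLE`)
by every stable matching of the market `A`. -/
lemma market_bot (hM : ∀ m ∈ M, StrictPref (prefM m) W)
    (hW : ∀ w ∈ W, StrictPref (prefW w) M) (hA : A ⊆ M) :
    ∃ (ν : Matching A W) (N : ℕ),
      (∀ k, N ≤ k → chain W prefM prefW A (botZ W prefW A) k = (ν.mu, ν.nu)) ∧
      Stable A W prefM prefW ν ∧
      ∀ lam : Matching A W, Stable A W prefM prefW lam →
        PLE W prefM prefW A (ν.mu, ν.nu) (lam.mu, lam.nu) := by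
  obtain ⟨n, hn⟩ := exists_fix_up M W prefM prefW hM hW hA
    (inv_botZ W prefW (A := A)) (chain_bot_monotone W prefM prefW)
  have hfix : stepZ W prefM prefW A (chain W prefM prefW A (botZ W prefW A) n) =
      chain W prefM prefW A (botZ W prefW A) n := hn
  obtain ⟨ν, hmu, hnu, hstable⟩ := fix_stable M W prefM prefW hM hW hA
    (inv_chain W prefM prefW (inv_botZ W prefW) n) hfix
  have hcn : chain W prefM prefW A (botZ W prefW A) n = (ν.mu, ν.nu) := by
    rw [hmu, hnu]
  refine ⟨ν, n, fun k hk => ?_, hstable, fun lam hs => ?_⟩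
  · rw [chain_fix_after W prefM prefW hn k hk, hcn]
  · have := chain_bot_le_lam M W prefM prefW hM hW hA lam hs n
    rwa [hcn] at this

lemma nu_eq_of_mu_eq {A : Finset α} (lam ν : Matching A W) (h : lam.mu = ν.mu) :
    lam.nu = ν.nu := by
  funext w
  cases o1 : lam.nu w with
  | some m =>
    have h1 : lam.mu m = some w := (lam.consistent m w).mpr o1
    rw [h] at h1
    exact ((ν.consistent m w).mp h1).symm
  | none =>
    cases o2 : ν.nu w with
    | none => rfl
    | some m =>
      have h2 : ν.mu m = some w := (ν.consistent m w).mpr o2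
      rw [← h] at h2
      have := (lam.consistent m w).mp h2
      rw [o1] at this
      exact absurd this (by simp)

lemma mu_eq_of_nu_eq {A : Finset α} (lam ν : Matching A W) (h : lam.nu = ν.nu) :
    lam.mu = ν.mu := by
  funext m
  cases o1 : lam.mu m with
  | some w =>
    have h1 : lam.nu w = some m := (lam.consistent m w).mp o1
    rw [h] at h1
    exact ((ν.consistent m w).mpr h1).symm
  | none =>
    cases o2 : ν.mu m with
    | none => rfl
    | some w =>
      have h2 : ν.nu w = some m := (ν.consistent m w).mp o2
      rw [← h] at h2
      have := (lam.consistent m w).mpr h2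
      rw [o1] at this
      exact absurd this (by simp)

lemma eq_of_mu_ranks (hM : ∀ m ∈ M, StrictPref (prefM m) W) {A : Finset α} (hA : A ⊆ M)
    (lam ν : Matching A W) (h : ∀ m ∈ A, prefM m (lam.mu m) = prefM m (ν.mu m)) :
    lam.mu = ν.mu ∧ lam.nu = ν.nu := by
  have e : lam.mu = ν.mu := by
    funext m
    by_cases hm : m ∈ A
    · exact hM m (hA hm) (matching_domM W lam m) (matching_domM W ν m) (h m hm)
    · rw [lam.suppM m hm, ν.suppM m hm]
  exact ⟨e, nu_eq_of_mu_eq W lam ν e⟩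

lemma eq_of_nu_ranks (hW : ∀ w ∈ W, StrictPref (prefW w) M) {A : Finset α} (hA : A ⊆ M)
    (lam ν : Matching A W) (h : ∀ w ∈ W, prefW w (lam.nu w) = prefW w (ν.nu w)) :
    lam.mu = ν.mu ∧ lam.nu = ν.nu := by
  have e : lam.nu = ν.nu := by
    funext w
    by_cases hw : w ∈ W
    · exact hW w hw (matching_domW M W hA lam w) (matching_domW M W hA ν w) (h w hw)
    · rw [lam.suppW w hw, ν.suppW w hw]
  exact ⟨mu_eq_of_nu_eq W lam ν e, e⟩

/-- Removing men from the market: if `μ` is the σ-optimal stable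
matching on `(M, W)` and `μ₁` the σ-optimal stable matching on the restricted market
`(M₁, W)` (for the same fixed side σ ∈ {men, women}), then every remaining man is
weakly better off in `μ₁` and every woman weakly worse off. -/
theorem remove_men_effect
    (hM : ∀ m ∈ M, StrictPref (prefM m) W) (hW : ∀ w ∈ W, StrictPref (prefW w) M)
    (M₁ : Finset α) (hM₁ : M₁ ⊆ M)
    (μ : Matching M W) (μ₁ : Matching M₁ W)
    (hopt :
      (ManOpt M W prefM prefW μ ∧ ManOpt M₁ W prefM prefW μ₁) ∨
      (WomanOpt M W prefM prefW μ ∧ WomanOpt M₁ W prefM prefW μ₁)) :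
    (∀ m ∈ M₁, prefM m (μ.mu m) ≤ prefM m (μ₁.mu m)) ∧
    (∀ w ∈ W, prefW w (μ₁.nu w) ≤ prefW w (μ.nu w)) := by
  rcases hopt with ⟨hμ, hμ₁⟩ | ⟨hμ, hμ₁⟩
  · -- man-optimal case: use the top chains
    obtain ⟨ν, N, hchain, hsν, hdom⟩ :=
      market_top M W prefM prefW (A := M) hM hW (le_refl M)
    obtain ⟨ν₁, N₁, hchain₁, hsν₁, hdom₁⟩ :=
      market_top M W prefM prefW (A := M₁) hM hW hM₁
    have hcross := chain_cross_top W prefM prefW (A := M) hM₁ (max N N₁)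
    rw [hchain (max N N₁) (le_max_left _ _), hchain₁ (max N N₁) (le_max_right _ _)] at hcross
    -- μ and ν have the same men-ranks, hence equal matchings
    have hr : ∀ m ∈ M, prefM m (μ.mu m) = prefM m (ν.mu m) :=
      fun m hm => le_antisymm ((hdom μ hμ.1).1 m hm) (hμ.2 ν hsν m hm)
    obtain ⟨-, enu⟩ := eq_of_mu_ranks M W prefM hM (le_refl M) μ ν hr
    have hr₁ : ∀ m ∈ M₁, prefM m (μ₁.mu m) = prefM m (ν₁.mu m) :=
      fun m hm => le_antisymm ((hdom₁ μ₁ hμ₁.1).1 m hm) (hμ₁.2 ν₁ hsν₁ m hm)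
    obtain ⟨-, enu₁⟩ := eq_of_mu_ranks M W prefM hM hM₁ μ₁ ν₁ hr₁
    constructor
    · intro m hm
      calc prefM m (μ.mu m) ≤ prefM m (ν.mu m) := ((hdom μ hμ.1).1 m (hM₁ hm)).trans_eq rfl
        _ ≤ prefM m (ν₁.mu m) := hcross.1 m hm
        _ ≤ prefM m (μ₁.mu m) := hμ₁.2 ν₁ hsν₁ m hm
    · intro w hw
      calc prefW w (μ₁.nu w) = prefW w (ν₁.nu w) := by rw [enu₁]
        _ ≤ prefW w (ν.nu w) := hcross.2 w hw
        _ = prefW w (μ.nu w) := by rw [enu]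
  · -- woman-optimal case: use the bottom chains
    obtain ⟨ν, N, hchain, hsν, hdom⟩ :=
      market_bot M W prefM prefW (A := M) hM hW (le_refl M)
    obtain ⟨ν₁, N₁, hchain₁, hsν₁, hdom₁⟩ :=
      market_bot M W prefM prefW (A := M₁) hM hW hM₁
    have hcross := chain_cross_bot W prefM prefW (A := M) hM₁ (max N N₁)
    rw [hchain (max N N₁) (le_max_left _ _), hchain₁ (max N N₁) (le_max_right _ _)] at hcross
    -- μ and ν have the same women-ranks, hence equal matchings
    have hr : ∀ w ∈ W, prefW w (μ.nu w) = prefW w (ν.nu w) :=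
      fun w hw => le_antisymm ((hdom μ hμ.1).2 w hw) (hμ.2 ν hsν w hw)
    obtain ⟨emu, -⟩ := eq_of_nu_ranks M W prefW hW (le_refl M) μ ν hr
    have hr₁ : ∀ w ∈ W, prefW w (μ₁.nu w) = prefW w (ν₁.nu w) :=
      fun w hw => le_antisymm ((hdom₁ μ₁ hμ₁.1).2 w hw) (hμ₁.2 ν₁ hsν₁ w hw)
    obtain ⟨emu₁, -⟩ := eq_of_nu_ranks M W prefW hW hM₁ μ₁ ν₁ hr₁
    constructor
    · intro m hm
      calc prefM m (μ.mu m) = prefM m (ν.mu m) := by rw [emu]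
        _ ≤ prefM m (ν₁.mu m) := hcross.1 m hm
        _ = prefM m (μ₁.mu m) := by rw [emu₁]
    · intro w hw
      calc prefW w (μ₁.nu w) = prefW w (ν₁.nu w) := hr₁ w hw
        _ ≤ prefW w (ν.nu w) := hcross.2 w hw
        _ = prefW w (μ.nu w) := (hr w hw).symm
end Stmt1
end

section
/- Let (M, W, P) be a two-sided matching market with strict preferences and let W₁ ⊆ W. Fix a side σ ∈ {men, women}, let μ be the σ-optimal stable matching on (M, W, P) and μ₂ the σ-optimal stable matching on the restricted market (M, W₁, P|_(M,W₁)). Then μ₂(m) ≤_m μ(m) for every m ∈ M and μ₂(w) ≥_w μ(w) for every w ∈ W₁. -/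
namespace Stmt2

/-- Strict preferences over partners in `W` plus staying single (`none`), encoded by a
rank function injective on the relevant alternatives; higher rank = more preferred. -/
def StrictPref {β : Type*} (pref : Option β → ℕ) (W : Finset β) : Prop :=
  Set.InjOn pref (insert none (Option.some '' (W : Set β)))

/-- A (one-to-one) matching on the two-sided market with men `M` and women `W`. -/
structure Matching {α β : Type*} (M : Finset α) (W : Finset β) where
  mu : α → Option β
  nu : β → Option α
  consistent : ∀ m w, mu m = some w ↔ nu w = some m
  suppM : ∀ m, m ∉ M → mu m = none
  suppW : ∀ w, w ∉ W → nu w = none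

variable {α β : Type*} (M : Finset α) (W : Finset β)
  (prefM : α → Option β → ℕ) (prefW : β → Option α → ℕ)

def IndRational (μ : Matching M W) : Prop :=
  (∀ m ∈ M, ∀ w, μ.mu m = some w → prefM m none < prefM m (some w)) ∧
  (∀ w ∈ W, ∀ m, μ.nu w = some m → prefW w none < prefW w (some m))

def Blocks (μ : Matching M W) (m : α) (w : β) : Prop :=
  m ∈ M ∧ w ∈ W ∧ prefM m (μ.mu m) < prefM m (some w) ∧
    prefW w (μ.nu w) < prefW w (some m)

def Stable (μ : Matching M W) : Prop :=
  IndRational M W prefM prefW μ ∧ ∀ m w, ¬ Blocks M W prefM prefW μ m w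

/-- Man-optimal stable matching (the output of Gale–Shapley with men proposing). -/
def ManOpt (μ : Matching M W) : Prop :=
  Stable M W prefM prefW μ ∧
    ∀ lam : Matching M W, Stable M W prefM prefW lam →
      ∀ m ∈ M, prefM m (lam.mu m) ≤ prefM m (μ.mu m)

/-- Woman-optimal stable matching (the output of Gale–Shapley with women proposing). -/
def WomanOpt (μ : Matching M W) : Prop :=
  Stable M W prefM prefW μ ∧
    ∀ lam : Matching M W, Stable M W prefM prefW lam →
      ∀ w ∈ W, prefW w (lam.nu w) ≤ prefW w (μ.nu w)

/-! Let `T` be the men who strictly prefer `μ₂` to `μ`, and `S` the women of `W₁` who strictly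
prefer `μ` to `μ₂`. Stability of `μ` and strictness of preferences send every man of `T` to a
`μ₂`-partner in `S`; stability of `μ₂` sends every woman of `S` to a `μ`-partner in `T`. These are
two injections between finite sets, so both matchings pair `T` with `S` exactly. Consequently the
men of `T` may be handed their `μ₂`-partners while everybody else keeps `μ`, giving a stable
matching of the full market in which `T` is better off; or the men of `T` may keep `μ` while
everybody else takes `μ₂`, giving a stable matching of the restricted market in which `S` is
better off. Optimality of `μ`, resp. `μ₂`, rules these improvements out, so `T = ∅`, resp.
`S = ∅`, and `T` and `S` are empty together. -/

section

open scoped Finset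

variable {M W prefM prefW} {M' : Finset α} {W' : Finset β} {m m' : α} {w : β}

theorem mem_insert_none_image_some {s : Finset β} (hw : w ∈ s) :
    some w ∈ insert none (Option.some '' (s : Set β)) :=
  Set.mem_insert_of_mem _ ⟨w, hw, rfl⟩

theorem StrictPref.mono {pref : Option β → ℕ} {s t : Finset β} (h : StrictPref pref t)
    (hst : s ⊆ t) : StrictPref pref s :=
  Set.InjOn.mono (Set.insert_subset_insert (Set.image_mono (Finset.coe_subset.2 hst))) h

namespace Matching

variable (μ : Matching M W)

theorem mem_left_of_mu_eq_some (h : μ.mu m = some w) : m ∈ M := by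
  by_contra hm
  simp [μ.suppM m hm] at h

theorem mem_right_of_mu_eq_some (h : μ.mu m = some w) : w ∈ W := by
  by_contra hw
  have := (μ.consistent m w).1 h
  simp [μ.suppW w hw] at this

theorem mem_left_of_nu_eq_some (h : μ.nu w = some m) : m ∈ M :=
  μ.mem_left_of_mu_eq_some ((μ.consistent m w).2 h)

theorem mu_injective (h : μ.mu m = some w) (h' : μ.mu m' = some w) : m = m' :=
  Option.some.inj (((μ.consistent m w).1 h).symm.trans ((μ.consistent m' w).1 h'))

theorem mu_mem_insert_none (m : α) : μ.mu m ∈ insert none (Option.some '' (W : Set β)) := by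
  cases h : μ.mu m with
  | none => exact Set.mem_insert _ _
  | some w => exact mem_insert_none_image_some (μ.mem_right_of_mu_eq_some h)

theorem nu_mem_insert_none (w : β) : μ.nu w ∈ insert none (Option.some '' (M : Set α)) := by
  cases h : μ.nu w with
  | none => exact Set.mem_insert _ _
  | some m => exact mem_insert_none_image_some (μ.mem_left_of_nu_eq_some h)

variable {s : Finset α} {t : Finset β}

theorem card_le_card_of_forall_mu (h : ∀ m ∈ s, ∃ w ∈ t, μ.mu m = some w) : #s ≤ #t :=
  Finset.card_le_card_of_forall_subsingleton (fun m w => μ.mu m = some w) h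
    fun _ _ _ hm _ hm' => μ.mu_injective hm.2 hm'.2

theorem card_le_card_of_forall_nu (h : ∀ w ∈ t, ∃ m ∈ s, μ.nu w = some m) : #t ≤ #s :=
  Finset.card_le_card_of_forall_subsingleton (fun w m => μ.nu w = some m) h
    fun m _ _ hw _ hw' =>
      Option.some.inj (((μ.consistent m _).2 hw.2).symm.trans ((μ.consistent m _).2 hw'.2))

theorem forall_exists_mu_of_forall_exists_nu (h : ∀ w ∈ t, ∃ m ∈ s, μ.nu w = some m)
    (hcard : #s ≤ #t) : ∀ m ∈ s, ∃ w ∈ t, μ.mu m = some w := by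
  classical
  have hle : #t ≤ #(s.filter fun m => ∃ w ∈ t, μ.mu m = some w) :=
    μ.card_le_card_of_forall_nu fun w hw => by
      obtain ⟨m, hm, hmw⟩ := h w hw
      exact ⟨m, Finset.mem_filter.2 ⟨hm, w, hw, (μ.consistent m w).2 hmw⟩, hmw⟩
  exact Finset.filter_eq_self.1 (Finset.eq_of_subset_of_card_le (Finset.filter_subset _ s)
    (hcard.trans hle))

theorem forall_exists_nu_of_forall_exists_mu (h : ∀ m ∈ s, ∃ w ∈ t, μ.mu m = some w)
    (hcard : #t ≤ #s) : ∀ w ∈ t, ∃ m ∈ s, μ.nu w = some m := by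
  classical
  have hle : #s ≤ #(t.filter fun w => ∃ m ∈ s, μ.nu w = some m) :=
    μ.card_le_card_of_forall_mu fun m hm => by
      obtain ⟨w, hw, hmw⟩ := h m hm
      exact ⟨w, Finset.mem_filter.2 ⟨hw, m, hm, (μ.consistent m w).1 hmw⟩, hmw⟩
  exact Finset.filter_eq_self.1 (Finset.eq_of_subset_of_card_le (Finset.filter_subset _ t)
    (hcard.trans hle))

def Respects (s : Finset α) (t : Finset β) : Prop :=
  ∀ m w, μ.mu m = some w → (m ∈ s ↔ w ∈ t)

variable {W₀ : Finset β}

open Classical in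
noncomputable def splice (a : Matching M W₀) (b : Matching M W) (s : Finset α) (t : Finset β)
    (hsa : a.Respects s t) (hsb : b.Respects s t) (ht : t ⊆ W) : Matching M W where
  mu m := if m ∈ s then a.mu m else b.mu m
  nu w := if w ∈ t then a.nu w else b.nu w
  consistent m w := by
    by_cases hm : m ∈ s <;> by_cases hw : w ∈ t <;> simp only [hm, hw, ↓reduceIte]
    · exact a.consistent m w
    · exact iff_of_false (fun h => hw ((hsa m w h).1 hm))
        (fun h => hw ((hsb m w ((b.consistent m w).2 h)).1 hm))
    · exact iff_of_false (fun h => hm ((hsb m w h).2 hw))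
        (fun h => hm ((hsa m w ((a.consistent m w).2 h)).2 hw))
    · exact b.consistent m w
  suppM m hm := by split_ifs <;> simp [a.suppM m hm, b.suppM m hm]
  suppW w hw := by rw [if_neg fun h => hw (ht h)]; exact b.suppW w hw

variable {a : Matching M W₀} {b : Matching M W} {hsa : a.Respects s t} {hsb : b.Respects s t}
  {ht : t ⊆ W}

theorem splice_mu_of_mem (hm : m ∈ s) : (a.splice b s t hsa hsb ht).mu m = a.mu m := if_pos hm

theorem splice_mu_of_notMem (hm : m ∉ s) : (a.splice b s t hsa hsb ht).mu m = b.mu m := if_neg hm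

theorem splice_nu_of_mem (hw : w ∈ t) : (a.splice b s t hsa hsb ht).nu w = a.nu w := if_pos hw

theorem splice_nu_of_notMem (hw : w ∉ t) : (a.splice b s t hsa hsb ht).nu w = b.nu w := if_neg hw

end Matching

theorem IndRational.pref_none_le_mu {μ : Matching M W} (hμ : IndRational M W prefM prefW μ)
    (m : α) : prefM m none ≤ prefM m (μ.mu m) := by
  cases h : μ.mu m with
  | none => exact le_rfl
  | some w => exact (hμ.1 m (μ.mem_left_of_mu_eq_some h) w h).le

theorem IndRational.pref_none_le_nu {μ : Matching M W} (hμ : IndRational M W prefM prefW μ)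
    (w : β) : prefW w none ≤ prefW w (μ.nu w) := by
  cases h : μ.nu w with
  | none => exact le_rfl
  | some m =>
    have hw : w ∈ W := μ.mem_right_of_mu_eq_some ((μ.consistent m w).2 h)
    exact (hμ.2 w hw m h).le

theorem Stable.pref_lt_nu_of_lt_mu {μ : Matching M W} (hμ : Stable M W prefM prefW μ)
    (hw_strict : StrictPref (prefW w) M) (hm : m ∈ M) (hw : w ∈ W)
    (h : prefM m (μ.mu m) < prefM m (some w)) : prefW w (some m) < prefW w (μ.nu w) := by
  have hle : prefW w (some m) ≤ prefW w (μ.nu w) := not_lt.1 fun h' => hμ.2 m w ⟨hm, hw, h, h'⟩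
  refine hle.lt_of_ne fun heq => h.ne ?_
  rw [(μ.consistent m w).2
    (hw_strict (mem_insert_none_image_some hm) (μ.nu_mem_insert_none w) heq).symm]

theorem Stable.pref_lt_mu_of_lt_nu {μ : Matching M W} (hμ : Stable M W prefM prefW μ)
    (hm_strict : StrictPref (prefM m) W) (hm : m ∈ M) (hw : w ∈ W)
    (h : prefW w (μ.nu w) < prefW w (some m)) : prefM m (some w) < prefM m (μ.mu m) := by
  have hle : prefM m (some w) ≤ prefM m (μ.mu m) := not_lt.1 fun h' => hμ.2 m w ⟨hm, hw, h', h⟩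
  refine hle.lt_of_ne fun heq => h.ne ?_
  rw [(μ.consistent m w).1
    (hm_strict (mem_insert_none_image_some hw) (μ.mu_mem_insert_none m) heq).symm]

theorem Blocks.of_pref_le {κ : Matching M W} {ρ : Matching M' W'}
    (h : Blocks M W prefM prefW κ m w) (hm : m ∈ M') (hw : w ∈ W')
    (hρm : prefM m (ρ.mu m) ≤ prefM m (κ.mu m)) (hρw : prefW w (ρ.nu w) ≤ prefW w (κ.nu w)) :
    Blocks M' W' prefM prefW ρ m w :=
  ⟨hm, hw, hρm.trans_lt h.2.2.1, hρw.trans_lt h.2.2.2⟩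

section Splice

variable {W₀ : Finset β} {s : Finset α} {t : Finset β} {a : Matching M W₀} {b : Matching M W}
  {hsa : a.Respects s t} {hsb : b.Respects s t} {ht : t ⊆ W}

theorem IndRational.splice (ha : IndRational M W₀ prefM prefW a)
    (hb : IndRational M W prefM prefW b) (htW₀ : t ⊆ W₀) :
    IndRational M W prefM prefW (a.splice b s t hsa hsb ht) := by
  constructor
  · intro m hm w h
    by_cases hms : m ∈ s
    · rw [Matching.splice_mu_of_mem hms] at h
      exact ha.1 m hm w h
    · rw [Matching.splice_mu_of_notMem hms] at h
      exact hb.1 m hm w h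
  · intro w hw m h
    by_cases hwt : w ∈ t
    · rw [Matching.splice_nu_of_mem hwt] at h
      exact ha.2 w (htW₀ hwt) m h
    · rw [Matching.splice_nu_of_notMem hwt] at h
      exact hb.2 w hw m h

theorem Stable.splice_of_mem_iff_lt_mu (ha : Stable M W₀ prefM prefW a)
    (hb : Stable M W prefM prefW b) (htW₀ : t ⊆ W₀)
    (hs_iff : ∀ m ∈ M, m ∈ s ↔ prefM m (b.mu m) < prefM m (a.mu m)) :
    Stable M W prefM prefW (a.splice b s t hsa hsb ht) := by
  refine ⟨ha.1.splice hb.1 htW₀, fun m w hblock => ?_⟩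
  -- every man weakly prefers the splice to `a` and to `b`, and each woman keeps her partner in
  -- one of them, so a blocking pair of the splice would block that matching
  have hle : prefM m (a.mu m) ≤ prefM m ((a.splice b s t hsa hsb ht).mu m) ∧
      prefM m (b.mu m) ≤ prefM m ((a.splice b s t hsa hsb ht).mu m) := by
    by_cases hms : m ∈ s
    · rw [Matching.splice_mu_of_mem hms]
      exact ⟨le_rfl, ((hs_iff m hblock.1).1 hms).le⟩
    · rw [Matching.splice_mu_of_notMem hms]
      exact ⟨not_lt.1 (mt (hs_iff m hblock.1).2 hms), le_rfl⟩
  by_cases hwt : w ∈ t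
  · exact ha.2 m w (hblock.of_pref_le hblock.1 (htW₀ hwt) hle.1
      (by rw [Matching.splice_nu_of_mem hwt]))
  · exact hb.2 m w (hblock.of_pref_le hblock.1 hblock.2.1 hle.2
      (by rw [Matching.splice_nu_of_notMem hwt]))

theorem Stable.splice_of_mem_iff_lt_nu (ha : Stable M W₀ prefM prefW a)
    (hb : Stable M W prefM prefW b) (hW : W ⊆ W₀)
    (ht_iff : ∀ w ∈ W, w ∈ t ↔ prefW w (b.nu w) < prefW w (a.nu w)) :
    Stable M W prefM prefW (a.splice b s t hsa hsb ht) := by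
  refine ⟨ha.1.splice hb.1 (ht.trans hW), fun m w hblock => ?_⟩
  have hle : prefW w (a.nu w) ≤ prefW w ((a.splice b s t hsa hsb ht).nu w) ∧
      prefW w (b.nu w) ≤ prefW w ((a.splice b s t hsa hsb ht).nu w) := by
    by_cases hwt : w ∈ t
    · rw [Matching.splice_nu_of_mem hwt]
      exact ⟨le_rfl, ((ht_iff w hblock.2.1).1 hwt).le⟩
    · rw [Matching.splice_nu_of_notMem hwt]
      exact ⟨not_lt.1 (mt (ht_iff w hblock.2.1).2 hwt), le_rfl⟩
  by_cases hms : m ∈ s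
  · exact ha.2 m w (hblock.of_pref_le hblock.1 (hW hblock.2.1)
      (by rw [Matching.splice_mu_of_mem hms]) hle.1)
  · exact hb.2 m w (hblock.of_pref_le hblock.1 hblock.2.1
      (by rw [Matching.splice_mu_of_notMem hms]) hle.2)

end Splice

section RemoveWomen

variable {W₁ : Finset β} {μ : Matching M W} {ν : Matching M W₁}

variable (prefM) in
open Classical in
noncomputable def gainingMen (μ : Matching M W) (ν : Matching M W₁) : Finset α :=
  M.filter fun m => prefM m (μ.mu m) < prefM m (ν.mu m)

variable (prefW) in
open Classical in
noncomputable def losingWomen (μ : Matching M W) (ν : Matching M W₁) : Finset β :=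
  W₁.filter fun w => prefW w (ν.nu w) < prefW w (μ.nu w)

theorem mem_gainingMen :
    m ∈ gainingMen prefM μ ν ↔ m ∈ M ∧ prefM m (μ.mu m) < prefM m (ν.mu m) :=
  Finset.mem_filter

theorem mem_losingWomen :
    w ∈ losingWomen prefW μ ν ↔ w ∈ W₁ ∧ prefW w (ν.nu w) < prefW w (μ.nu w) :=
  Finset.mem_filter

theorem exists_mem_losingWomen_of_mem_gainingMen (hW : ∀ w ∈ W, StrictPref (prefW w) M)
    (hW₁ : W₁ ⊆ W) (hμ : Stable M W prefM prefW μ) (hm : m ∈ gainingMen prefM μ ν) :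
    ∃ w ∈ losingWomen prefW μ ν, ν.mu m = some w := by
  obtain ⟨hmM, hgain⟩ := mem_gainingMen.1 hm
  cases h : ν.mu m with
  | none =>
    rw [h] at hgain
    exact absurd (hμ.1.pref_none_le_mu m) hgain.not_ge
  | some w =>
    have hw₁ : w ∈ W₁ := ν.mem_right_of_mu_eq_some h
    rw [h] at hgain
    have hlose := hμ.pref_lt_nu_of_lt_mu (hW w (hW₁ hw₁)) hmM (hW₁ hw₁) hgain
    rw [← (ν.consistent m w).1 h] at hlose
    exact ⟨w, mem_losingWomen.2 ⟨hw₁, hlose⟩, rfl⟩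

theorem exists_mem_gainingMen_of_mem_losingWomen (hM : ∀ m ∈ M, StrictPref (prefM m) W)
    (hW₁ : W₁ ⊆ W) (hν : Stable M W₁ prefM prefW ν) (hw : w ∈ losingWomen prefW μ ν) :
    ∃ m ∈ gainingMen prefM μ ν, μ.nu w = some m := by
  obtain ⟨hw₁, hlose⟩ := mem_losingWomen.1 hw
  cases h : μ.nu w with
  | none =>
    rw [h] at hlose
    exact absurd (hν.1.pref_none_le_nu w) hlose.not_ge
  | some m =>
    have hmM : m ∈ M := μ.mem_left_of_nu_eq_some h
    rw [h] at hlose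
    have hgain := hν.pref_lt_mu_of_lt_nu ((hM m hmM).mono hW₁) hmM hw₁ hlose
    rw [← (μ.consistent m w).2 h] at hgain
    exact ⟨m, mem_gainingMen.2 ⟨hmM, hgain⟩, rfl⟩

variable (hM : ∀ m ∈ M, StrictPref (prefM m) W) (hW : ∀ w ∈ W, StrictPref (prefW w) M)
  (hW₁ : W₁ ⊆ W)
include hM hW hW₁

theorem respects_gainingMen_losingWomen (hμ : Stable M W prefM prefW μ)
    (hν : Stable M W₁ prefM prefW ν) :
    μ.Respects (gainingMen prefM μ ν) (losingWomen prefW μ ν) ∧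
      ν.Respects (gainingMen prefM μ ν) (losingWomen prefW μ ν) := by
  have hνT := fun m (hm : m ∈ gainingMen prefM μ ν) =>
    exists_mem_losingWomen_of_mem_gainingMen hW hW₁ hμ hm
  have hμS := fun w (hw : w ∈ losingWomen prefW μ ν) =>
    exists_mem_gainingMen_of_mem_losingWomen hM hW₁ hν hw
  have hμT := μ.forall_exists_mu_of_forall_exists_nu hμS (ν.card_le_card_of_forall_mu hνT)
  have hνS := ν.forall_exists_nu_of_forall_exists_mu hνT (μ.card_le_card_of_forall_nu hμS)
  refine ⟨fun m w h => ⟨fun hm => ?_, fun hw => ?_⟩, fun m w h => ⟨fun hm => ?_, fun hw => ?_⟩⟩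
  · obtain ⟨w', hw', h'⟩ := hμT m hm
    rwa [Option.some.inj (h.symm.trans h')]
  · obtain ⟨m', hm', h'⟩ := hμS w hw
    rwa [μ.mu_injective h ((μ.consistent m' w).2 h')]
  · obtain ⟨w', hw', h'⟩ := hνT m hm
    rwa [Option.some.inj (h.symm.trans h')]
  · obtain ⟨m', hm', h'⟩ := hνS w hw
    rwa [ν.mu_injective h ((ν.consistent m' w).2 h')]

theorem gainingMen_eq_empty_iff_losingWomen_eq_empty (hμ : Stable M W prefM prefW μ)
    (hν : Stable M W₁ prefM prefW ν) :
    gainingMen prefM μ ν = ∅ ↔ losingWomen prefW μ ν = ∅ := by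
  simp only [Finset.eq_empty_iff_forall_notMem]
  constructor
  · intro hT w hw
    obtain ⟨m, hm, -⟩ := exists_mem_gainingMen_of_mem_losingWomen hM hW₁ hν hw
    exact hT m hm
  · intro hS m hm
    obtain ⟨w, hw, -⟩ := exists_mem_losingWomen_of_mem_gainingMen hW hW₁ hμ hm
    exact hS w hw

theorem gainingMen_eq_empty_of_manOpt (hμ : ManOpt M W prefM prefW μ)
    (hν : Stable M W₁ prefM prefW ν) : gainingMen prefM μ ν = ∅ := by
  obtain ⟨hμT, hνT⟩ := respects_gainingMen_losingWomen hM hW hW₁ hμ.1 hν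
  have hS : losingWomen prefW μ ν ⊆ W₁ := Finset.filter_subset _ _
  have hκ := hν.splice_of_mem_iff_lt_mu hμ.1 hS (hsa := hνT) (hsb := hμT) (ht := hS.trans hW₁)
    fun m hm => by rw [mem_gainingMen, and_iff_right hm]
  refine Finset.eq_empty_of_forall_notMem fun m hm => ?_
  have hle := hμ.2 _ hκ m (mem_gainingMen.1 hm).1
  rw [Matching.splice_mu_of_mem hm] at hle
  exact (mem_gainingMen.1 hm).2.not_ge hle

theorem losingWomen_eq_empty_of_womanOpt (hμ : Stable M W prefM prefW μ)
    (hν : WomanOpt M W₁ prefM prefW ν) : losingWomen prefW μ ν = ∅ := by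
  obtain ⟨hμT, hνT⟩ := respects_gainingMen_losingWomen hM hW hW₁ hμ hν.1
  have hS : losingWomen prefW μ ν ⊆ W₁ := Finset.filter_subset _ _
  have hκ := hμ.splice_of_mem_iff_lt_nu hν.1 hW₁ (hsa := hμT) (hsb := hνT) (ht := hS)
    fun w hw => by rw [mem_losingWomen, and_iff_right hw]
  refine Finset.eq_empty_of_forall_notMem fun w hw => ?_
  have hle := hν.2 _ hκ w (mem_losingWomen.1 hw).1
  rw [Matching.splice_nu_of_mem hw] at hle
  exact (mem_losingWomen.1 hw).2.not_ge hle

end RemoveWomen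

end

/-- Removing women from the market: if `μ` is the σ-optimal stable
matching on `(M, W)` and `μ₂` the σ-optimal stable matching on the restricted market
`(M, W₁)` (for the same fixed side σ ∈ {men, women}), then every man is weakly worse
off in `μ₂` and every remaining woman weakly better off. -/
theorem remove_women_effect
    (hM : ∀ m ∈ M, StrictPref (prefM m) W) (hW : ∀ w ∈ W, StrictPref (prefW w) M)
    (W₁ : Finset β) (hW₁ : W₁ ⊆ W)
    (μ : Matching M W) (μ₂ : Matching M W₁)
    (hopt :
      (ManOpt M W prefM prefW μ ∧ ManOpt M W₁ prefM prefW μ₂) ∨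
      (WomanOpt M W prefM prefW μ ∧ WomanOpt M W₁ prefM prefW μ₂)) :
    (∀ m ∈ M, prefM m (μ₂.mu m) ≤ prefM m (μ.mu m)) ∧
    (∀ w ∈ W₁, prefW w (μ.nu w) ≤ prefW w (μ₂.nu w)) := by
  have hempty : gainingMen prefM μ μ₂ = ∅ ∧ losingWomen prefW μ μ₂ = ∅ := by
    rcases hopt with ⟨hμ, hμ₂⟩ | ⟨hμ, hμ₂⟩
    · have hT := gainingMen_eq_empty_of_manOpt hM hW hW₁ hμ hμ₂.1
      exact ⟨hT, (gainingMen_eq_empty_iff_losingWomen_eq_empty hM hW hW₁ hμ.1 hμ₂.1).1 hT⟩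
    · have hS := losingWomen_eq_empty_of_womanOpt hM hW hW₁ hμ.1 hμ₂
      exact ⟨(gainingMen_eq_empty_iff_losingWomen_eq_empty hM hW hW₁ hμ.1 hμ₂.1).2 hS, hS⟩
  refine ⟨fun m hm => not_lt.1 fun h => ?_, fun w hw => not_lt.1 fun h => ?_⟩
  · exact Finset.notMem_empty m (hempty.1 ▸ mem_gainingMen.2 ⟨hm, h⟩)
  · exact Finset.notMem_empty w (hempty.2 ▸ mem_losingWomen.2 ⟨hw, h⟩)

end Stmt2
end

section
/- In the PhD algorithm on a three-sided PhD market with strict preferences, where on each of the two submarkets a fixed-side optimal (Gale–Shapley) stable matching is used at every iteration, a student's match on the advisor–student market can only improve over iterations: for every τ ≥ 2 and every student s ∈ S^(τ) still participating at iteration τ, μ_AS^(τ)(s) ≥_s μ_AS^(τ−1)(s). Consequently S_m^(τ−1) \ S_u^(τ−1) ⊆ S_m^(τ) for all τ ≥ 2. -/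
/-!
Let `μ` be stable on a market `(M, W)` and `μ'` stable on `(M, W')` with `W' ⊆ W`. Let `D` be the
men strictly better off under `μ'` and `E` the women of `W'` strictly better off under `μ`.
Stability of `μ` forces `μ'` to match `D` into `E`, stability of `μ'` forces `μ` to match `E`
into `D`, so `|D| = |E|` and both matchings pair `D` bijectively with `E`. Hence `μ'` on `D ∪ E`
glued to `μ` elsewhere is a stable matching of `(M, W)` giving `D` more than `μ`, which rules out
`D ≠ ∅` when `μ` is man-optimal; and `μ` on `D ∪ E` glued to `μ'` elsewhere is a stable matching
of `(M, W')` giving `E` more than `μ'`, which rules out `E ≠ ∅` when `μ'` is woman-optimal.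
Either way `E = ∅`.

In the PhD algorithm the students of iteration `τ + 1` are a subset of those of iteration `τ`, so
every remaining student weakly prefers her new advisor; a student matched at `τ` is matched to an
acceptable advisor, hence stays matched at `τ + 1`.
-/

open scoped Classical

namespace Stmt3

/-- Strict preferences over partners in `W` plus staying single (`none`), encoded by a
rank function injective on the relevant alternatives; higher rank = more preferred. -/
def StrictPref {β : Type*} (pref : Option β → ℕ) (W : Finset β) : Prop :=
  Set.InjOn pref (insert none (Option.some '' (W : Set β)))

/-- A (one-to-one) matching on the two-sided market with sides `M` and `W`. -/
structure Matching {α β : Type*} (M : Finset α) (W : Finset β) where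
  mu : α → Option β
  nu : β → Option α
  consistent : ∀ m w, mu m = some w ↔ nu w = some m
  suppM : ∀ m, m ∉ M → mu m = none
  suppW : ∀ w, w ∉ W → nu w = none

section TwoSided

variable {α β : Type*} (M : Finset α) (W : Finset β)
  (prefM : α → Option β → ℕ) (prefW : β → Option α → ℕ)

def IndRational (μ : Matching M W) : Prop :=
  (∀ m ∈ M, ∀ w, μ.mu m = some w → prefM m none < prefM m (some w)) ∧
  (∀ w ∈ W, ∀ m, μ.nu w = some m → prefW w none < prefW w (some m))

def Blocks (μ : Matching M W) (m : α) (w : β) : Prop :=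
  m ∈ M ∧ w ∈ W ∧ prefM m (μ.mu m) < prefM m (some w) ∧
    prefW w (μ.nu w) < prefW w (some m)

def Stable (μ : Matching M W) : Prop :=
  IndRational M W prefM prefW μ ∧ ∀ m w, ¬ Blocks M W prefM prefW μ m w

/-- The M-optimal stable matching (Gale–Shapley with the `M` side proposing). -/
def ManOpt (μ : Matching M W) : Prop :=
  Stable M W prefM prefW μ ∧
    ∀ lam : Matching M W, Stable M W prefM prefW lam →
      ∀ m ∈ M, prefM m (lam.mu m) ≤ prefM m (μ.mu m)

/-- The W-optimal stable matching (Gale–Shapley with the `W` side proposing). -/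
def WomanOpt (μ : Matching M W) : Prop :=
  Stable M W prefM prefW μ ∧
    ∀ lam : Matching M W, Stable M W prefM prefW lam →
      ∀ w ∈ W, prefW w (lam.nu w) ≤ prefW w (μ.nu w)

end TwoSided

lemma some_mem_insert_none_image {β : Type*} {T : Finset β} {x : β} (hx : x ∈ T) :
    (some x : Option β) ∈ insert none (Option.some '' (T : Set β)) :=
  Set.mem_insert_of_mem _ ⟨x, hx, rfl⟩

lemma StrictPref.mono {β : Type*} {pref : Option β → ℕ} {W W' : Finset β}
    (h : StrictPref pref W) (hW' : W' ⊆ W) : StrictPref pref W' :=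
  Set.InjOn.mono (Set.insert_subset_insert (Set.image_mono (Finset.coe_subset.2 hW'))) h

namespace Matching

variable {α β : Type*} {M M₁ M₂ : Finset α} {W W₁ W₂ : Finset β}

def swap (μ : Matching M W) : Matching W M where
  mu := μ.nu
  nu := μ.mu
  consistent w m := (μ.consistent m w).symm
  suppM := μ.suppW
  suppW := μ.suppM

lemma mem_left_of_mu_eq_some (μ : Matching M W) {m : α} {w : β} (h : μ.mu m = some w) :
    m ∈ M := by
  by_contra hm
  rw [μ.suppM m hm] at h
  cases h

lemma mem_right_of_mu_eq_some (μ : Matching M W) {m : α} {w : β} (h : μ.mu m = some w) :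
    w ∈ W :=
  μ.swap.mem_left_of_mu_eq_some ((μ.consistent m w).1 h)

lemma mu_mem_insert_none_image (μ : Matching M W) (m : α) :
    μ.mu m ∈ insert none (Option.some '' (W : Set β)) := by
  cases h : μ.mu m with
  | none => exact Set.mem_insert _ _
  | some w => exact some_mem_insert_none_image (μ.mem_right_of_mu_eq_some h)

lemma eq_of_mu_eq_some (μ : Matching M W) {m₁ m₂ : α} {w : β} (h₁ : μ.mu m₁ = some w)
    (h₂ : μ.mu m₂ = some w) : m₁ = m₂ :=
  Option.some_injective _ (((μ.consistent m₁ w).1 h₁).symm.trans ((μ.consistent m₂ w).1 h₂))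

def MatchesInto (μ : Matching M W) (D : Finset α) (E : Finset β) : Prop :=
  ∀ m ∈ D, ∃ w ∈ E, μ.mu m = some w

lemma MatchesInto.card_le {μ : Matching M W} {D : Finset α} {E : Finset β}
    (h : μ.MatchesInto D E) : D.card ≤ E.card := by
  calc D.card ≤ (E.map ⟨some, Option.some_injective _⟩).card := by
        refine Finset.card_le_card_of_injOn μ.mu (fun m hm => ?_) fun m₁ hm₁ m₂ _ heq => ?_
        · obtain ⟨w, hw, hmw⟩ := h m hm
          simpa [hmw] using hw
        · obtain ⟨w, -, hmw⟩ := h m₁ hm₁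
          exact μ.eq_of_mu_eq_some hmw (heq.symm.trans hmw)
    _ = E.card := Finset.card_map _

/-- `μ⁻¹` injects `E` into `D`, hence is onto when `|D| ≤ |E|`. -/
lemma MatchesInto.of_swap {μ : Matching M W} {D : Finset α} {E : Finset β}
    (h : μ.swap.MatchesInto E D) (hcard : D.card ≤ E.card) : μ.MatchesInto D E := by
  intro m hm
  have hsurj := Finset.surjOn_of_injOn_of_card_le (s := E)
    (t := D.map ⟨some, Option.some_injective _⟩) μ.nu
    (fun w hw => by
      obtain ⟨m, hm, hwm⟩ := h w hw
      rw [Finset.mem_coe, show μ.nu w = some m from hwm]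
      exact Finset.mem_map_of_mem _ hm)
    (fun w₁ hw₁ w₂ _ heq => by
      obtain ⟨m, -, hwm⟩ := h w₁ hw₁
      exact μ.swap.eq_of_mu_eq_some hwm (heq.symm.trans hwm))
    (by simpa using hcard)
  obtain ⟨w, hw, hwm⟩ := hsurj (by simpa using hm : some m ∈ _)
  exact ⟨w, hw, (μ.consistent m w).2 hwm⟩

def BijOn (μ : Matching M W) (D : Finset α) (E : Finset β) : Prop :=
  μ.MatchesInto D E ∧ μ.swap.MatchesInto E D

lemma BijOn.swap {μ : Matching M W} {D : Finset α} {E : Finset β} (h : μ.BijOn D E) :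
    μ.swap.BijOn E D :=
  ⟨h.2, h.1⟩

lemma BijOn.mem_iff {μ : Matching M W} {D : Finset α} {E : Finset β} (h : μ.BijOn D E)
    {m : α} {w : β} (hmw : μ.mu m = some w) : m ∈ D ↔ w ∈ E := by
  constructor
  · intro hm
    obtain ⟨w', hw', hmw'⟩ := h.1 m hm
    rwa [Option.some_injective _ (hmw.symm.trans hmw')]
  · intro hw
    obtain ⟨m', hm', hwm'⟩ := h.2 w hw
    rwa [μ.eq_of_mu_eq_some hmw ((μ.consistent m' w).2 hwm')]

noncomputable def piecewise (μ₁ : Matching M₁ W₁) (μ₂ : Matching M₂ W₂) (D : Finset α)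
    (E : Finset β) (h₁ : μ₁.BijOn D E) (h₂ : μ₂.BijOn D E) (hD : D ⊆ M₂) (hE : E ⊆ W₂) :
    Matching M₂ W₂ where
  mu m := if m ∈ D then μ₁.mu m else μ₂.mu m
  nu w := if w ∈ E then μ₁.nu w else μ₂.nu w
  consistent m w := by
    by_cases hm : m ∈ D <;> by_cases hw : w ∈ E <;> simp only [hm, hw, if_true, if_false]
    · exact μ₁.consistent m w
    · exact iff_of_false (fun h => hw ((h₁.mem_iff h).1 hm))
        fun h => hw ((h₂.mem_iff ((μ₂.consistent m w).2 h)).1 hm)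
    · exact iff_of_false (fun h => hm ((h₂.mem_iff h).2 hw))
        fun h => hm ((h₁.mem_iff ((μ₁.consistent m w).2 h)).2 hw)
    · exact μ₂.consistent m w
  suppM m hm := by rw [if_neg fun h => hm (hD h)]; exact μ₂.suppM m hm
  suppW w hw := by rw [if_neg fun h => hw (hE h)]; exact μ₂.suppW w hw

end Matching

section StableMatching

variable {α β : Type*} {M M' M₁ M₂ : Finset α} {W W' W₁ W₂ : Finset β}
  {prefM : α → Option β → ℕ} {prefW : β → Option α → ℕ}

open Matching

lemma IndRational.pref_none_le {μ : Matching M W} (h : IndRational M W prefM prefW μ)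
    {m : α} (hm : m ∈ M) : prefM m none ≤ prefM m (μ.mu m) := by
  cases hmw : μ.mu m with
  | none => exact le_rfl
  | some w => exact (h.1 m hm w hmw).le

lemma IndRational.isSome_of_pref_nu_le {μ : Matching M W}
    (h : IndRational M W prefM prefW μ) {w : β} (hw : w ∈ W) (hsome : (μ.nu w).isSome)
    {x : Option α} (hle : prefW w (μ.nu w) ≤ prefW w x) : x.isSome := by
  obtain ⟨m, hwm⟩ := Option.isSome_iff_exists.1 hsome
  cases x with
  | none => rw [hwm] at hle; exact absurd hle (h.2 w hw m hwm).not_ge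
  | some _ => rfl

lemma Stable.swap {μ : Matching M W} (h : Stable M W prefM prefW μ) :
    Stable W M prefW prefM μ.swap :=
  ⟨⟨h.1.2, h.1.1⟩, fun w m hb => h.2 m w ⟨hb.2.1, hb.1, hb.2.2.2, hb.2.2.1⟩⟩

/-- `m` and his `ν`-partner would otherwise block `μ`. -/
lemma Stable.exists_mu_eq_some_of_lt {μ : Matching M W} (hμ : Stable M W prefM prefW μ)
    (hWp : ∀ w ∈ W, StrictPref (prefW w) M) (ν : Matching M' W') (hW' : W' ⊆ W) {m : α}
    (hm : m ∈ M) (hlt : prefM m (μ.mu m) < prefM m (ν.mu m)) :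
    ∃ w, ν.mu m = some w ∧ prefW w (ν.nu w) < prefW w (μ.nu w) := by
  obtain ⟨w, hmw⟩ : ∃ w, ν.mu m = some w := by
    cases h : ν.mu m with
    | none => rw [h] at hlt; exact absurd (hμ.1.pref_none_le hm) hlt.not_ge
    | some w => exact ⟨w, rfl⟩
  have hw : w ∈ W := hW' (ν.mem_right_of_mu_eq_some hmw)
  rw [hmw] at hlt
  have hle : prefW w (some m) ≤ prefW w (μ.nu w) :=
    not_lt.1 fun h => hμ.2 m w ⟨hm, hw, hlt, h⟩
  have hne : some m ≠ μ.nu w := fun h => by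
    rw [(μ.consistent m w).2 h.symm] at hlt
    exact lt_irrefl _ hlt
  refine ⟨w, hmw, (ν.consistent m w).1 hmw ▸ hle.lt_of_ne ?_⟩
  exact (hWp w hw).ne (some_mem_insert_none_image hm) (μ.swap.mu_mem_insert_none_image w) hne

def improvers (pref : α → Option β → ℕ) (X : Finset α) (old new : α → Option β) : Finset α :=
  X.filter fun x => pref x (old x) < pref x (new x)

lemma pref_ite_improvers {pref : α → Option β → ℕ} {X : Finset α} {old new : α → Option β}
    {x : α} (hx : x ∈ X) :
    pref x (if x ∈ improvers pref X old new then new x else old x) =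
      max (pref x (old x)) (pref x (new x)) := by
  by_cases h : pref x (old x) < pref x (new x)
  · simp [improvers, hx, h, h.le]
  · simp [improvers, hx, h, not_lt.1 h]

/-- Knuth's decomposition lemma. -/
theorem Stable.bijOn_improvers (hW' : W' ⊆ W) (hMp : ∀ m ∈ M, StrictPref (prefM m) W)
    (hWp : ∀ w ∈ W, StrictPref (prefW w) M) {μ : Matching M W} {μ' : Matching M W'}
    (hμ : Stable M W prefM prefW μ) (hμ' : Stable M W' prefM prefW μ') :
    μ.BijOn (improvers prefM M μ.mu μ'.mu) (improvers prefW W' μ'.nu μ.nu) ∧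
      μ'.BijOn (improvers prefM M μ.mu μ'.mu) (improvers prefW W' μ'.nu μ.nu) := by
  set D := improvers prefM M μ.mu μ'.mu
  set E := improvers prefW W' μ'.nu μ.nu
  have hD : μ'.MatchesInto D E := by
    intro m hm
    obtain ⟨hmM, hlt⟩ := Finset.mem_filter.1 hm
    obtain ⟨w, hmw, hlt⟩ := hμ.exists_mu_eq_some_of_lt hWp μ' hW' hmM hlt
    exact ⟨w, Finset.mem_filter.2 ⟨μ'.mem_right_of_mu_eq_some hmw, hlt⟩, hmw⟩
  have hE : μ.swap.MatchesInto E D := by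
    intro w hw
    obtain ⟨hwW', hlt⟩ := Finset.mem_filter.1 hw
    obtain ⟨m, hwm, hlt⟩ := hμ'.swap.exists_mu_eq_some_of_lt
      (fun m hm => (hMp m hm).mono hW') μ.swap subset_rfl hwW' hlt
    exact ⟨m, Finset.mem_filter.2 ⟨μ.swap.mem_right_of_mu_eq_some hwm, hlt⟩, hwm⟩
  exact ⟨⟨hE.of_swap hD.card_le, hE⟩, ⟨hD, MatchesInto.of_swap (μ := μ'.swap) hD hE.card_le⟩⟩

lemma Stable.piecewise {μ₁ : Matching M₁ W₁} {μ₂ : Matching M₂ W₂} {D : Finset α}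
    {E : Finset β} (hμ₁ : Stable M₁ W₁ prefM prefW μ₁) (hμ₂ : Stable M₂ W₂ prefM prefW μ₂)
    (h₁ : μ₁.BijOn D E) (h₂ : μ₂.BijOn D E) (hD : D ⊆ M₂) (hE : E ⊆ W₂) (hM : M₂ ⊆ M₁)
    (hE₁ : E ⊆ W₁)
    (hle₁ : ∀ m ∈ M₂, prefM m (μ₁.mu m) ≤ prefM m ((μ₁.piecewise μ₂ D E h₁ h₂ hD hE).mu m))
    (hle₂ : ∀ m ∈ M₂, prefM m (μ₂.mu m) ≤ prefM m ((μ₁.piecewise μ₂ D E h₁ h₂ hD hE).mu m)) :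
    Stable M₂ W₂ prefM prefW (μ₁.piecewise μ₂ D E h₁ h₂ hD hE) := by
  refine ⟨⟨fun m hm w hmw => ?_, fun w hw m hwm => ?_⟩, fun m w ⟨hm, hw, hbm, hbw⟩ => ?_⟩
  · simp only [Matching.piecewise] at hmw ⊢
    split_ifs at hmw
    · exact hμ₁.1.1 m (hM hm) w hmw
    · exact hμ₂.1.1 m hm w hmw
  · simp only [Matching.piecewise] at hwm ⊢
    split_ifs at hwm with hwE
    · exact hμ₁.1.2 w (hE₁ hwE) m hwm
    · exact hμ₂.1.2 w hw m hwm
  · simp only [Matching.piecewise] at hbw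
    split_ifs at hbw with hwE
    · exact hμ₁.2 m w ⟨hM hm, hE₁ hwE, (hle₁ m hm).trans_lt hbm, hbw⟩
    · exact hμ₂.2 m w ⟨hm, hw, (hle₂ m hm).trans_lt hbm, hbw⟩

theorem ManOpt.pref_nu_le (hW' : W' ⊆ W) (hMp : ∀ m ∈ M, StrictPref (prefM m) W)
    (hWp : ∀ w ∈ W, StrictPref (prefW w) M) {μ : Matching M W} {μ' : Matching M W'}
    (hopt : ManOpt M W prefM prefW μ) (hμ' : Stable M W' prefM prefW μ') :
    ∀ w ∈ W', prefW w (μ.nu w) ≤ prefW w (μ'.nu w) := by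
  obtain ⟨hbij, hbij'⟩ := hopt.1.bijOn_improvers hW' hMp hWp hμ'
  have hD : improvers prefM M μ.mu μ'.mu ⊆ M := Finset.filter_subset _ _
  have hE : improvers prefW W' μ'.nu μ.nu ⊆ W' := Finset.filter_subset _ _
  set ν := μ'.piecewise μ _ _ hbij' hbij hD (hE.trans hW')
  have hν : Stable M W prefM prefW ν :=
    hμ'.piecewise hopt.1 hbij' hbij hD (hE.trans hW') subset_rfl hE
      (fun m hm => (le_max_right _ _).trans_eq
        (pref_ite_improvers (pref := prefM) (old := μ.mu) (new := μ'.mu) hm).symm)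
      (fun m hm => (le_max_left _ _).trans_eq
        (pref_ite_improvers (pref := prefM) (old := μ.mu) (new := μ'.mu) hm).symm)
  intro w hw
  by_contra hlt
  obtain ⟨m, hm, -⟩ := hbij'.2 w (Finset.mem_filter.2 ⟨hw, not_le.1 hlt⟩)
  have hνm : ν.mu m = μ'.mu m := if_pos hm
  exact (hopt.2 ν hν m (hD hm)).not_gt (hνm ▸ (Finset.mem_filter.1 hm).2)

theorem WomanOpt.pref_nu_le (hW' : W' ⊆ W) (hMp : ∀ m ∈ M, StrictPref (prefM m) W)
    (hWp : ∀ w ∈ W, StrictPref (prefW w) M) {μ : Matching M W} {μ' : Matching M W'}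
    (hμ : Stable M W prefM prefW μ) (hopt : WomanOpt M W' prefM prefW μ') :
    ∀ w ∈ W', prefW w (μ.nu w) ≤ prefW w (μ'.nu w) := by
  obtain ⟨hbij, hbij'⟩ := hμ.bijOn_improvers hW' hMp hWp hopt.1
  have hD : improvers prefM M μ.mu μ'.mu ⊆ M := Finset.filter_subset _ _
  have hE : improvers prefW W' μ'.nu μ.nu ⊆ W' := Finset.filter_subset _ _
  -- glued on the women's side, so that every woman of `W'` gets the better of `μ` and `μ'`
  set ρ := (μ.swap.piecewise μ'.swap _ _ hbij.swap hbij'.swap hE hD).swap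
  have hρ : Stable M W' prefM prefW ρ := by
    have := hμ.swap.piecewise hopt.1.swap hbij.swap hbij'.swap hE hD hW' hD
      (fun w hw => (le_max_right _ _).trans_eq
        (pref_ite_improvers (pref := prefW) (old := μ'.nu) (new := μ.nu) hw).symm)
      (fun w hw => (le_max_left _ _).trans_eq
        (pref_ite_improvers (pref := prefW) (old := μ'.nu) (new := μ.nu) hw).symm)
    exact this.swap
  intro w hw
  by_contra hlt
  have hwE : w ∈ improvers prefW W' μ'.nu μ.nu := Finset.mem_filter.2 ⟨hw, not_le.1 hlt⟩
  have hρw : ρ.nu w = μ.nu w := if_pos hwE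
  exact (hopt.2 ρ hρ w hw).not_gt (hρw ▸ not_le.1 hlt)

end StableMatching

variable {α σ γ : Type*}

theorem student_advisor_match_improves_general
    (A : Finset α) (S : Finset σ)
    (prefA : α → Option σ → ℕ)
    (prefSA : σ → Option α → ℕ)
    (hA : ∀ a ∈ A, StrictPref (prefA a) S)
    (hSA : ∀ s ∈ S, StrictPref (prefSA s) A)
    -- one run of the PhD algorithm:
    (Sseq Sm Su : ℕ → Finset σ)
    (μAS : (τ : ℕ) → Matching A (Sseq τ))
    (hS0 : Sseq 0 = S)
    (hSm : ∀ τ, Sm τ = (Sseq τ).filter fun s => ((μAS τ).nu s).isSome)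
    (hnext : ∀ τ, Sseq (τ + 1) = Sseq τ \ Su τ)
    -- the same side proposes at every iteration on each submarket:
    (hoptAS : (∀ τ, ManOpt A (Sseq τ) prefA prefSA (μAS τ)) ∨
              (∀ τ, WomanOpt A (Sseq τ) prefA prefSA (μAS τ))) :
    (∀ τ, ∀ s ∈ Sseq (τ + 1),
        prefSA s ((μAS τ).nu s) ≤ prefSA s ((μAS (τ + 1)).nu s)) ∧
    (∀ τ, Sm τ \ Su τ ⊆ Sm (τ + 1)) := by
  have hstab : ∀ τ, Stable A (Sseq τ) prefA prefSA (μAS τ) := fun τ =>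
    hoptAS.elim (fun hopt => (hopt τ).1) fun hopt => (hopt τ).1
  have hsub : ∀ τ, Sseq (τ + 1) ⊆ Sseq τ := fun τ => hnext τ ▸ Finset.sdiff_subset
  have hsubS : ∀ τ, Sseq τ ⊆ S := by
    intro τ
    induction τ with
    | zero => exact hS0.le
    | succ τ ih => exact (hsub τ).trans ih
  have hAp : ∀ τ, ∀ a ∈ A, StrictPref (prefA a) (Sseq τ) := fun τ a ha =>
    (hA a ha).mono (hsubS τ)
  have hSp : ∀ τ, ∀ s ∈ Sseq τ, StrictPref (prefSA s) A := fun τ s hs => hSA s (hsubS τ hs)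
  have improves : ∀ τ, ∀ s ∈ Sseq (τ + 1),
      prefSA s ((μAS τ).nu s) ≤ prefSA s ((μAS (τ + 1)).nu s) := by
    intro τ
    rcases hoptAS with hopt | hopt
    · exact (hopt τ).pref_nu_le (hsub τ) (hAp τ) (hSp τ) (hstab (τ + 1))
    · exact (hopt (τ + 1)).pref_nu_le (hsub τ) (hAp τ) (hSp τ) (hstab τ)
  refine ⟨improves, fun τ s hs => ?_⟩
  obtain ⟨hsm, hsu⟩ := Finset.mem_sdiff.1 hs
  rw [hSm, Finset.mem_filter] at hsm ⊢
  have hs' : s ∈ Sseq (τ + 1) := hnext τ ▸ Finset.mem_sdiff.2 ⟨hsm.1, hsu⟩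
  exact ⟨hs', (hstab τ).1.isSome_of_pref_nu_le hsm.1 hsm.2 (improves τ s hs')⟩

/-- In the PhD algorithm (advisors `A`, students `S`, co-advisors `C`),
where on each of the two submarkets a fixed-side optimal (Gale–Shapley) stable matching
is used at every iteration, a student's match on the advisor–student market can only
improve over iterations (iterations are indexed from `0`, so index `τ` vs `τ + 1`
corresponds to the paper's `τ − 1` vs `τ` for `τ ≥ 2`); consequently
`S_m^(τ−1) \ S_u^(τ−1) ⊆ S_m^(τ)`. -/
theorem student_advisor_match_improves
    (A : Finset α) (S : Finset σ) (C : Finset γ)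
    (prefA : α → Option σ → ℕ) (prefC : γ → Option σ → ℕ)
    (prefSA : σ → Option α → ℕ) (prefSC : σ → Option γ → ℕ)
    (hA : ∀ a ∈ A, StrictPref (prefA a) S)
    (hC : ∀ c ∈ C, StrictPref (prefC c) S)
    (hSA : ∀ s ∈ S, StrictPref (prefSA s) A)
    (hSC : ∀ s ∈ S, StrictPref (prefSC s) C)
    -- one run of the PhD algorithm:
    (Sseq Sm Su : ℕ → Finset σ)
    (μAS : (τ : ℕ) → Matching A (Sseq τ))
    (μSC : (τ : ℕ) → Matching (Sm τ) C)
    (hS0 : Sseq 0 = S)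
    (hSm : ∀ τ, Sm τ = (Sseq τ).filter fun s => ((μAS τ).nu s).isSome)
    (hSu : ∀ τ, Su τ = (Sm τ).filter fun s => ¬ ((μSC τ).mu s).isSome)
    (hnext : ∀ τ, Sseq (τ + 1) = Sseq τ \ Su τ)
    -- the same side proposes at every iteration on each submarket:
    (hoptAS : (∀ τ, ManOpt A (Sseq τ) prefA prefSA (μAS τ)) ∨
              (∀ τ, WomanOpt A (Sseq τ) prefA prefSA (μAS τ)))
    (hoptSC : (∀ τ, ManOpt (Sm τ) C prefSC prefC (μSC τ)) ∨
              (∀ τ, WomanOpt (Sm τ) C prefSC prefC (μSC τ))) :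
    (∀ τ, ∀ s ∈ Sseq (τ + 1),
        prefSA s ((μAS τ).nu s) ≤ prefSA s ((μAS (τ + 1)).nu s)) ∧
    (∀ τ, Sm τ \ Su τ ⊆ Sm (τ + 1)) :=
  student_advisor_match_improves_general A S prefA prefSA hA hSA Sseq Sm Su μAS hS0 hSm hnext hoptAS

end Stmt3
end

section
/- Every three-sided PhD market (with cooperative advisors and co-advisors, consistent student preferences, and possibly incomplete preference lists) admits a stable three-sided matching. -/
namespace Stmt7

/-- Strict preferences over partners in `W` plus staying single (`none`), encoded by a
rank function injective on the relevant alternatives; higher rank = more preferred. -/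
def StrictPref {β : Type*} (pref : Option β → ℕ) (W : Finset β) : Prop :=
  Set.InjOn pref (insert none (Option.some '' (W : Set β)))

variable {α σ γ : Type*}

variable {α σ γ : Type*}

/-- A three-sided matching on the PhD market with advisors `A`, students `S` and
co-advisors `C`: every matched student gets exactly one advisor and one co-advisor,
and every person is matched at most once. -/
structure TriMatching (A : Finset α) (S : Finset σ) (C : Finset γ) where
  aS : α → Option σ
  sA : σ → Option α
  sC : σ → Option γ
  cS : γ → Option σ
  consA : ∀ a s, aS a = some s ↔ sA s = some a
  consC : ∀ c s, cS c = some s ↔ sC s = some c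
  full : ∀ s, (sA s).isSome ↔ (sC s).isSome
  suppA : ∀ a, a ∉ A → aS a = none
  suppSA : ∀ s, s ∉ S → sA s = none
  suppSC : ∀ s, s ∉ S → sC s = none
  suppC : ∀ c, c ∉ C → cS c = none

section ThreeSided

variable (A : Finset α) (S : Finset σ) (C : Finset γ)
  (prefA : α → Option σ → ℕ) (prefSA : σ → Option α → ℕ)
  (prefSC : σ → Option γ → ℕ) (prefC : γ → Option σ → ℕ)

/-- Individual rationality of a three-sided matching (on both induced two-sided
matchings). -/
def TriIndRational (μ : TriMatching A S C) : Prop :=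
  (∀ a ∈ A, ∀ s, μ.aS a = some s → prefA a none < prefA a (some s)) ∧
  (∀ s ∈ S, ∀ a, μ.sA s = some a → prefSA s none < prefSA s (some a)) ∧
  (∀ s ∈ S, ∀ c, μ.sC s = some c → prefSC s none < prefSC s (some c)) ∧
  (∀ c ∈ C, ∀ s, μ.cS c = some s → prefC c none < prefC c (some s))

/-- `(a, s)` blocks the induced two-sided advisor–student matching. -/
def BlocksAS (μ : TriMatching A S C) (a : α) (s : σ) : Prop :=
  prefSA s (μ.sA s) < prefSA s (some a) ∧ prefA a (μ.aS a) < prefA a (some s)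

/-- `(s, c)` blocks the induced two-sided student–co-advisor matching. -/
def BlocksSC (μ : TriMatching A S C) (s : σ) (c : γ) : Prop :=
  prefSC s (μ.sC s) < prefSC s (some c) ∧ prefC c (μ.cS c) < prefC c (some s)

/-- The triple `(a, s, c)` is mutually acceptable. -/
def MutAcc (a : α) (s : σ) (c : γ) : Prop :=
  a ∈ A ∧ s ∈ S ∧ c ∈ C ∧
  prefA a none < prefA a (some s) ∧ prefSA s none < prefSA s (some a) ∧
  prefSC s none < prefSC s (some c) ∧ prefC c none < prefC c (some s)

/-- The mutually acceptable triple `(a, s, c)` blocks `μ`: either `s` is unmatched and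
both pairs block, or `s` is matched and one of the pairs blocks. -/
def BlocksTriple (μ : TriMatching A S C) (a : α) (s : σ) (c : γ) : Prop :=
  MutAcc A S C prefA prefSA prefSC prefC a s c ∧
  ((μ.sA s = none ∧
      BlocksAS A S C prefA prefSA μ a s ∧
      BlocksSC A S C prefSC prefC μ s c) ∨
   ((μ.sA s).isSome ∧
      (BlocksAS A S C prefA prefSA μ a s ∨
       BlocksSC A S C prefSC prefC μ s c)))

/-- Stability of a three-sided matching. -/
def TriStable (μ : TriMatching A S C) : Prop :=
  TriIndRational A S C prefA prefSA prefSC prefC μ ∧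
  ∀ a s c, ¬ BlocksTriple A S C prefA prefSA prefSC prefC μ a s c

end ThreeSided

section Engine

open Finset

attribute [local instance] Classical.propDecidable

theorem StrictPref.inj_some {β : Type*} {pref : Option β → ℕ} {W : Finset β}
    (h : StrictPref pref W) {x y : β} (hx : x ∈ W) (hy : y ∈ W)
    (hxy : pref (some x) = pref (some y)) : x = y := by
  have hx' : (some x : Option β) ∈ insert none (Option.some '' (W : Set β)) :=
    Set.mem_insert_iff.mpr (Or.inr ⟨x, by simpa using hx, rfl⟩)
  have hy' : (some y : Option β) ∈ insert none (Option.some '' (W : Set β)) :=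
    Set.mem_insert_iff.mpr (Or.inr ⟨y, by simpa using hy, rfl⟩)
  simpa using h hx' hy' hxy

theorem StrictPref.injOn_comp {β : Type*} {pref : Option β → ℕ} {W : Finset β}
    (h : StrictPref pref W) : Set.InjOn (fun x => pref (some x)) (W : Set β) :=
  fun x hx y hy hxy => h.inj_some (by simpa using hx) (by simpa using hy) hxy

/-- pick an element of `T` maximizing `f`. -/
noncomputable def pick {β : Type*} (f : β → ℕ) (T : Finset β) : Option β :=
  if h : T.Nonempty then some (T.exists_max_image f h).choose else none

theorem pick_eq_some {β : Type*} {f : β → ℕ} {T : Finset β} {b : β}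
    (h : pick f T = some b) : b ∈ T ∧ ∀ b' ∈ T, f b' ≤ f b := by
  unfold pick at h
  split_ifs at h with hT
  · obtain ⟨hb, hmax⟩ := (T.exists_max_image f hT).choose_spec
    obtain rfl := Option.some.inj h
    exact ⟨hb, hmax⟩

theorem pick_isSome {β : Type*} {f : β → ℕ} {T : Finset β} (h : T.Nonempty) :
    (pick f T).isSome := by unfold pick; simp [h]

theorem pick_stable {β : Type*} {f : β → ℕ} {T T' : Finset β} {b : β}
    (hsub : T' ⊆ T) (hb : pick f T = some b) (hb' : b ∈ T')
    (hinj : Set.InjOn f (T : Set β)) : pick f T' = some b := by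
  have h1 := pick_eq_some hb
  have hne : T'.Nonempty := ⟨b, hb'⟩
  obtain ⟨b2, hb2⟩ := Option.isSome_iff_exists.mp (pick_isSome hne (f := f))
  have h3 := pick_eq_some hb2
  have hval : f b2 = f b := le_antisymm (h1.2 _ (hsub h3.1)) (h3.2 _ hb')
  rw [hb2, hinj (by simpa using hsub h3.1) (by simpa using h1.1) hval]

structure Mkt (α σ γ : Type*) where
  A : Finset α
  S : Finset σ
  C : Finset γ
  pA : α → Option σ → ℕ
  pC : γ → Option σ → ℕ
  pSA : σ → Option α → ℕ
  pSC : σ → Option γ → ℕ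

structure Good (M : Mkt α σ γ) : Prop where
  hA : ∀ a ∈ M.A, StrictPref (M.pA a) M.S
  hC : ∀ c ∈ M.C, StrictPref (M.pC c) M.S
  hSA : ∀ s ∈ M.S, StrictPref (M.pSA s) M.A
  hSC : ∀ s ∈ M.S, StrictPref (M.pSC s) M.C

namespace Mkt

variable (M : Mkt α σ γ)

/-- candidate co-advisors of student `s` (acceptable, not yet rejected `s`). -/
noncomputable def candC (F : (α → Finset σ) × (σ → Finset γ)) (s : σ) : Finset γ :=
  M.C.filter fun c => M.pSC s none < M.pSC s (some c) ∧ c ∉ F.2 s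

/-- `s` has been rejected by all acceptable co-advisors. -/
def hopeless (F : (α → Finset σ) × (σ → Finset γ)) (s : σ) : Prop := M.candC F s = ∅

/-- candidate students of advisor `a`. -/
noncomputable def candA (F : (α → Finset σ) × (σ → Finset γ)) (a : α) : Finset σ :=
  M.S.filter fun t => M.pA a none < M.pA a (some t) ∧ t ∉ F.1 a ∧ ¬ M.hopeless F t

/-- current proposal of advisor `a`. -/
noncomputable def propA (F : (α → Finset σ) × (σ → Finset γ)) (a : α) : Option σ :=
  if a ∈ M.A then pick (fun t => M.pA a (some t)) (M.candA F a) else none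

/-- `s` currently holds an acceptable advisor proposal. -/
def heldA (F : (α → Finset σ) × (σ → Finset γ)) (s : σ) : Prop :=
  ∃ a ∈ M.A, M.propA F a = some s ∧ M.pSA s none < M.pSA s (some a)

/-- current proposal of student `s` to co-advisors. -/
noncomputable def propC (F : (α → Finset σ) × (σ → Finset γ)) (s : σ) : Option γ :=
  if M.heldA F s then pick (fun c => M.pSC s (some c)) (M.candC F s) else none

/-- `s` would reject `a`'s proposal. -/
def rejA (F : (α → Finset σ) × (σ → Finset γ)) (a : α) (s : σ) : Prop :=
  ¬ M.pSA s none < M.pSA s (some a) ∨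
    ∃ a', M.propA F a' = some s ∧ M.pSA s (some a) < M.pSA s (some a')

/-- `c` would reject `s`'s proposal. -/
def rejC (F : (α → Finset σ) × (σ → Finset γ)) (s : σ) (c : γ) : Prop :=
  ¬ M.pC c none < M.pC c (some s) ∨
    ∃ s', M.propC F s' = some c ∧ M.pC c (some s) < M.pC c (some s')

noncomputable def step (F : (α → Finset σ) × (σ → Finset γ)) :
    (α → Finset σ) × (σ → Finset γ) :=
  (fun a => F.1 a ∪ M.S.filter fun s => M.propA F a = some s ∧ M.rejA F a s,
   fun s => F.2 s ∪ M.C.filter fun c => M.propC F s = some c ∧ M.rejC F s c)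

variable {M}
variable {F : (α → Finset σ) × (σ → Finset γ)}

theorem propA_eq_some {a : α} {s : σ} (h : M.propA F a = some s) :
    a ∈ M.A ∧ s ∈ M.candA F a ∧ ∀ t ∈ M.candA F a, M.pA a (some t) ≤ M.pA a (some s) := by
  unfold propA at h
  split_ifs at h with ha
  · exact ⟨ha, (pick_eq_some h).1, (pick_eq_some h).2⟩

theorem candA_spec {a : α} {s : σ} (h : s ∈ M.candA F a) :
    s ∈ M.S ∧ M.pA a none < M.pA a (some s) ∧ s ∉ F.1 a ∧ ¬ M.hopeless F s := by
  have := Finset.mem_filter.mp h; tauto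

theorem candC_spec {s : σ} {c : γ} (h : c ∈ M.candC F s) :
    c ∈ M.C ∧ M.pSC s none < M.pSC s (some c) ∧ c ∉ F.2 s := by
  have := Finset.mem_filter.mp h; tauto

theorem propC_eq_some {s : σ} {c : γ} (h : M.propC F s = some c) :
    M.heldA F s ∧ c ∈ M.candC F s ∧ ∀ c' ∈ M.candC F s, M.pSC s (some c') ≤ M.pSC s (some c) := by
  unfold propC at h
  split_ifs at h with hh
  · exact ⟨hh, (pick_eq_some h).1, (pick_eq_some h).2⟩

theorem propC_mem_S {s : σ} {c : γ} (h : M.propC F s = some c) : s ∈ M.S := by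
  obtain ⟨⟨a, _, hp, _⟩, _, _⟩ := propC_eq_some h
  exact (candA_spec (propA_eq_some hp).2.1).1

theorem candC_step_subset (s : σ) : M.candC (M.step F) s ⊆ M.candC F s := by
  intro c hc
  have h := Finset.mem_filter.mp hc
  refine Finset.mem_filter.mpr ⟨h.1, h.2.1, fun hmem => h.2.2 ?_⟩
  exact Finset.mem_union_left _ hmem

theorem hopeless_step (s : σ) (h : M.hopeless F s) : M.hopeless (M.step F) s :=
  Finset.subset_empty.mp (h ▸ candC_step_subset s)

theorem candA_step_subset (a : α) : M.candA (M.step F) a ⊆ M.candA F a := by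
  intro t ht
  have h := Finset.mem_filter.mp ht
  refine Finset.mem_filter.mpr ⟨h.1, h.2.1, fun hmem => h.2.2.1 (Finset.mem_union_left _ hmem),
    fun hh => h.2.2.2 (hopeless_step t hh)⟩

theorem propA_survive (G : Good M) {a : α} {s : σ} (h : M.propA F a = some s)
    (hrej : ¬ M.rejA F a s) (hh : ¬ M.hopeless (M.step F) s) :
    M.propA (M.step F) a = some s := by
  obtain ⟨haA, hsc, hmax⟩ := propA_eq_some h
  obtain ⟨hsS, hacc, hra, _⟩ := candA_spec hsc
  have hs' : s ∈ M.candA (M.step F) a := by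
    refine Finset.mem_filter.mpr ⟨hsS, hacc, ?_, hh⟩
    intro hmem
    rcases Finset.mem_union.mp hmem with h1 | h2
    · exact hra h1
    · exact hrej (Finset.mem_filter.mp h2).2.2
  have hinj : Set.InjOn (fun t => M.pA a (some t)) (M.candA F a : Set σ) :=
    ((G.hA a haA).injOn_comp).mono (by exact_mod_cast Finset.filter_subset _ _)
  unfold propA
  rw [if_pos haA]
  unfold propA at h
  rw [if_pos haA] at h
  exact pick_stable (candA_step_subset a) h hs' hinj

theorem exists_best_proposer (G : Good M) {s : σ} {a0 : α}
    (h0 : M.propA F a0 = some s) (hacc0 : M.pSA s none < M.pSA s (some a0))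
    (hh : ¬ M.hopeless (M.step F) s) :
    ∃ a', a' ∈ M.A ∧ M.propA (M.step F) a' = some s ∧
      M.pSA s none < M.pSA s (some a') ∧ M.pSA s (some a0) ≤ M.pSA s (some a') := by
  classical
  set P : Finset α := M.A.filter (fun a => M.propA F a = some s ∧ M.pSA s none < M.pSA s (some a))
    with hP
  have h0P : a0 ∈ P := Finset.mem_filter.mpr ⟨(propA_eq_some h0).1, h0, hacc0⟩
  obtain ⟨b, hbP, hbmax⟩ := P.exists_max_image (fun a => M.pSA s (some a)) ⟨a0, h0P⟩
  obtain ⟨hbA, hbprop, hbacc⟩ := Finset.mem_filter.mp hbP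
  have hnrej : ¬ M.rejA F b s := by
    rintro (h1 | ⟨a', ha'p, ha'lt⟩)
    · exact h1 hbacc
    · by_cases hacc' : M.pSA s none < M.pSA s (some a')
      · have : a' ∈ P := Finset.mem_filter.mpr ⟨(propA_eq_some ha'p).1, ha'p, hacc'⟩
        exact absurd (hbmax a' this) (not_le.mpr ha'lt)
      · exact hacc' (lt_trans hbacc ha'lt)
  exact ⟨b, hbA, propA_survive G hbprop hnrej hh, hbacc, hbmax a0 h0P⟩

theorem stepRC_eq {s : σ} (h : ∀ c, M.propC F s = some c → ¬ M.rejC F s c) :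
    (M.step F).2 s = F.2 s := by
  show F.2 s ∪ _ = F.2 s
  rw [Finset.union_eq_left]
  intro c hc
  exact absurd (Finset.mem_filter.mp hc).2.2 (h c (Finset.mem_filter.mp hc).2.1)

theorem propC_survive (G : Good M) {s : σ} {c : γ} (h : M.propC F s = some c)
    (hrej : ¬ M.rejC F s c) : M.propC (M.step F) s = some c := by
  obtain ⟨hheld, hcc, hmax⟩ := propC_eq_some h
  have hRC : (M.step F).2 s = F.2 s := by
    refine stepRC_eq (fun c' hc' => ?_)
    rw [h] at hc'
    obtain rfl := Option.some.inj hc'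
    exact hrej
  have hcand : M.candC (M.step F) s = M.candC F s := by
    unfold candC
    rw [hRC]
  have hh : ¬ M.hopeless (M.step F) s := by
    unfold hopeless
    rw [hcand]
    intro he
    rw [he] at hcc
    simp at hcc
  obtain ⟨a0, ha0A, h0, hacc0⟩ := id hheld
  obtain ⟨a', ha'A, ha'p, ha'acc, -⟩ := exists_best_proposer G h0 hacc0 hh
  have hheld' : M.heldA (M.step F) s := ⟨a', ha'A, ha'p, ha'acc⟩
  unfold propC at h ⊢
  rw [if_pos hheld', hcand]
  rwa [if_pos hheld] at h

theorem exists_best_suitor (G : Good M) {c : γ} {s0 : σ}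
    (h0 : M.propC F s0 = some c) (hacc0 : M.pC c none < M.pC c (some s0)) :
    ∃ s', M.propC (M.step F) s' = some c ∧
      M.pC c none < M.pC c (some s') ∧ M.pC c (some s0) ≤ M.pC c (some s') := by
  classical
  set Q : Finset σ := M.S.filter (fun t => M.propC F t = some c ∧ M.pC c none < M.pC c (some t))
    with hQ
  have h0Q : s0 ∈ Q := Finset.mem_filter.mpr ⟨propC_mem_S h0, h0, hacc0⟩
  obtain ⟨b, hbQ, hbmax⟩ := Q.exists_max_image (fun t => M.pC c (some t)) ⟨s0, h0Q⟩
  obtain ⟨hbS, hbprop, hbacc⟩ := Finset.mem_filter.mp hbQ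
  have hnrej : ¬ M.rejC F b c := by
    rintro (h1 | ⟨s', hs'p, hs'lt⟩)
    · exact h1 hbacc
    · by_cases hacc' : M.pC c none < M.pC c (some s')
      · have : s' ∈ Q := Finset.mem_filter.mpr ⟨propC_mem_S hs'p, hs'p, hacc'⟩
        exact absurd (hbmax s' this) (not_le.mpr hs'lt)
      · exact hacc' (lt_trans hbacc hs'lt)
  exact ⟨b, propC_survive G hbprop hnrej, hbacc, hbmax s0 h0Q⟩

variable (M F) in
/-- A-side invariant: any student in a rejection set either finds the advisor
unacceptable, or is hopeless, or has a strictly better current proposer. -/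
def InvA : Prop := ∀ a : α, ∀ s ∈ F.1 a,
  ¬ M.pSA s none < M.pSA s (some a) ∨ M.hopeless F s ∨
    ∃ a', M.propA F a' = some s ∧ M.pSA s (some a) < M.pSA s (some a') ∧
      M.pSA s none < M.pSA s (some a')

variable (M F) in
/-- C-side invariant. -/
def InvC : Prop := ∀ s : σ, ∀ c ∈ F.2 s, c ∈ M.C ∧
  (¬ M.pC c none < M.pC c (some s) ∨
    ∃ s', M.propC F s' = some c ∧ M.pC c (some s) < M.pC c (some s') ∧
      M.pC c none < M.pC c (some s'))

variable (M F) in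
def InvSupp : Prop := (∀ a : α, F.1 a ⊆ M.S) ∧ (∀ s : σ, F.2 s ⊆ M.C)

theorem invA_step (G : Good M) (hI : M.InvA F) : M.InvA (M.step F) := by
  intro a s hs
  rcases Finset.mem_union.mp hs with hold | hnew
  · rcases hI a s hold with h1 | h2 | ⟨a', hp, hlt, hacc⟩
    · exact Or.inl h1
    · exact Or.inr (Or.inl (hopeless_step s h2))
    · by_cases hh : M.hopeless (M.step F) s
      · exact Or.inr (Or.inl hh)
      · obtain ⟨b, -, hbp, hbacc, hble⟩ := exists_best_proposer G hp hacc hh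
        exact Or.inr (Or.inr ⟨b, hbp, lt_of_lt_of_le hlt hble, hbacc⟩)
  · obtain ⟨hsS, hprop, hrej⟩ := Finset.mem_filter.mp hnew
    by_cases hacc : M.pSA s none < M.pSA s (some a)
    · rcases hrej with h1 | ⟨a', hp', hlt'⟩
      · exact absurd hacc h1
      · by_cases hh : M.hopeless (M.step F) s
        · exact Or.inr (Or.inl hh)
        · have hacc' : M.pSA s none < M.pSA s (some a') := lt_trans hacc hlt'
          obtain ⟨b, -, hbp, hbacc, hble⟩ := exists_best_proposer G hp' hacc' hh
          exact Or.inr (Or.inr ⟨b, hbp, lt_of_lt_of_le hlt' hble, hbacc⟩)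
    · exact Or.inl hacc

theorem invC_step (G : Good M) (hI : M.InvC F) : M.InvC (M.step F) := by
  intro s c hc
  rcases Finset.mem_union.mp hc with hold | hnew
  · obtain ⟨hcC, hd⟩ := hI s c hold
    refine ⟨hcC, ?_⟩
    rcases hd with h1 | ⟨s', hp, hlt, hacc⟩
    · exact Or.inl h1
    · obtain ⟨b, hbp, hbacc, hble⟩ := exists_best_suitor G hp hacc
      exact Or.inr ⟨b, hbp, lt_of_lt_of_le hlt hble, hbacc⟩
  · obtain ⟨hcC, hprop, hrej⟩ := Finset.mem_filter.mp hnew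
    refine ⟨hcC, ?_⟩
    by_cases hacc : M.pC c none < M.pC c (some s)
    · rcases hrej with h1 | ⟨s', hp', hlt'⟩
      · exact absurd hacc h1
      · have hacc' : M.pC c none < M.pC c (some s') := lt_trans hacc hlt'
        obtain ⟨b, hbp, hbacc, hble⟩ := exists_best_suitor G hp' hacc'
        exact Or.inr ⟨b, hbp, lt_of_lt_of_le hlt' hble, hbacc⟩
    · exact Or.inl hacc

theorem invSupp_step (hI : M.InvSupp F) : M.InvSupp (M.step F) := by
  constructor
  · intro a t ht
    rcases Finset.mem_union.mp ht with h | h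
    · exact hI.1 a h
    · exact (Finset.mem_filter.mp h).1
  · intro s c hc
    rcases Finset.mem_union.mp hc with h | h
    · exact hI.2 s h
    · exact (Finset.mem_filter.mp h).1

variable (M F) in
noncomputable def wt : ℕ := (∑ a ∈ M.A, (F.1 a).card) + ∑ s ∈ M.S, (F.2 s).card

theorem wt_le (hI : M.InvSupp F) :
    M.wt F ≤ M.A.card * M.S.card + M.S.card * M.C.card := by
  unfold wt
  refine Nat.add_le_add ?_ ?_
  · calc ∑ a ∈ M.A, (F.1 a).card ≤ ∑ _a ∈ M.A, M.S.card :=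
          Finset.sum_le_sum fun a _ => Finset.card_le_card (hI.1 a)
      _ = M.A.card * M.S.card := by rw [Finset.sum_const, smul_eq_mul]
  · calc ∑ s ∈ M.S, (F.2 s).card ≤ ∑ _s ∈ M.S, M.C.card :=
          Finset.sum_le_sum fun s _ => Finset.card_le_card (hI.2 s)
      _ = M.S.card * M.C.card := by rw [Finset.sum_const, smul_eq_mul]

theorem wt_lt (h : M.step F ≠ F) : M.wt F < M.wt (M.step F) := by
  have hsub1 : ∀ a, F.1 a ⊆ (M.step F).1 a := fun a => Finset.subset_union_left
  have hsub2 : ∀ s, F.2 s ⊆ (M.step F).2 s := fun s => Finset.subset_union_left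
  have hne : (∃ a, (M.step F).1 a ≠ F.1 a) ∨ ∃ s, (M.step F).2 s ≠ F.2 s := by
    by_contra hcon
    push_neg at hcon
    exact h (Prod.ext (funext hcon.1) (funext hcon.2))
  unfold wt
  rcases hne with ⟨a0, hne1⟩ | ⟨s0, hne2⟩
  · have hss : F.1 a0 ⊂ (M.step F).1 a0 :=
      Finset.ssubset_iff_subset_ne.mpr ⟨hsub1 a0, Ne.symm hne1⟩
    obtain ⟨x, hx_in, hx_notin⟩ := Finset.exists_of_ssubset hss
    have hxf : x ∈ Finset.filter _ _ := (Finset.mem_union.mp hx_in).resolve_left hx_notin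
    have ha0A : a0 ∈ M.A := (propA_eq_some (Finset.mem_filter.mp hxf).2.1).1
    refine Nat.add_lt_add_of_lt_of_le ?_ (Finset.sum_le_sum fun s _ =>
      Finset.card_le_card (hsub2 s))
    exact Finset.sum_lt_sum (fun a _ => Finset.card_le_card (hsub1 a))
      ⟨a0, ha0A, Finset.card_lt_card hss⟩
  · have hss : F.2 s0 ⊂ (M.step F).2 s0 :=
      Finset.ssubset_iff_subset_ne.mpr ⟨hsub2 s0, Ne.symm hne2⟩
    obtain ⟨x, hx_in, hx_notin⟩ := Finset.exists_of_ssubset hss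
    have hxf : x ∈ Finset.filter _ _ := (Finset.mem_union.mp hx_in).resolve_left hx_notin
    have hs0S : s0 ∈ M.S := propC_mem_S (Finset.mem_filter.mp hxf).2.1
    refine Nat.add_lt_add_of_le_of_lt (Finset.sum_le_sum fun a _ =>
      Finset.card_le_card (hsub1 a)) ?_
    exact Finset.sum_lt_sum (fun s _ => Finset.card_le_card (hsub2 s))
      ⟨s0, hs0S, Finset.card_lt_card hss⟩

theorem exists_fixpoint (G : Good M) :
    ∃ F : (α → Finset σ) × (σ → Finset γ),
      M.step F = F ∧ M.InvA F ∧ M.InvC F ∧ M.InvSupp F := by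
  classical
  set F0 : (α → Finset σ) × (σ → Finset γ) := (fun _ => ∅, fun _ => ∅) with hF0
  have hInv : ∀ n, M.InvA (M.step^[n] F0) ∧ M.InvC (M.step^[n] F0) ∧
      M.InvSupp (M.step^[n] F0) := by
    intro n
    induction n with
    | zero =>
      refine ⟨fun a s hs => by simp [hF0] at hs, fun s c hc => by simp [hF0] at hc,
        fun a => by simp [hF0], fun s => by simp [hF0]⟩
    | succ n ih =>
      rw [Function.iterate_succ_apply']
      exact ⟨invA_step G ih.1, invC_step G ih.2.1, invSupp_step ih.2.2⟩
  set B : ℕ := M.A.card * M.S.card + M.S.card * M.C.card with hB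
  have hfix : ∃ n, M.step (M.step^[n] F0) = M.step^[n] F0 := by
    by_contra hcon
    push_neg at hcon
    have hgrow : ∀ n, n ≤ M.wt (M.step^[n] F0) := by
      intro n
      induction n with
      | zero => exact Nat.zero_le _
      | succ n ih =>
        rw [Function.iterate_succ_apply']
        exact Nat.lt_of_le_of_lt ih (wt_lt (hcon n))
    have h1 := hgrow (B + 1)
    have h2 := wt_le (hInv (B + 1)).2.2
    omega
  obtain ⟨n, hn⟩ := hfix
  exact ⟨M.step^[n] F0, hn, hInv n⟩

section Fix

variable (hfix : M.step F = F)

include hfix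

theorem fix_noRejA {a : α} {s : σ} (h : M.propA F a = some s) : ¬ M.rejA F a s := by
  intro hrej
  have hs : s ∈ M.candA F a := (propA_eq_some h).2.1
  have hmem : s ∈ (M.step F).1 a :=
    Finset.mem_union_right _ (Finset.mem_filter.mpr ⟨(candA_spec hs).1, h, hrej⟩)
  rw [hfix] at hmem
  exact (candA_spec hs).2.2.1 hmem

theorem fix_noRejC {s : σ} {c : γ} (h : M.propC F s = some c) : ¬ M.rejC F s c := by
  intro hrej
  have hc : c ∈ M.candC F s := (propC_eq_some h).2.1
  have hmem : c ∈ (M.step F).2 s :=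
    Finset.mem_union_right _ (Finset.mem_filter.mpr ⟨(candC_spec hc).1, h, hrej⟩)
  rw [hfix] at hmem
  exact (candC_spec hc).2.2 hmem

theorem fix_accA {a : α} {s : σ} (h : M.propA F a = some s) :
    M.pSA s none < M.pSA s (some a) := by
  have := fix_noRejA hfix h
  unfold rejA at this
  push_neg at this
  exact this.1

theorem fix_ubA {a a' : α} {s : σ} (h : M.propA F a = some s)
    (h' : M.propA F a' = some s) : M.pSA s (some a') ≤ M.pSA s (some a) := by
  have := fix_noRejA hfix h
  unfold rejA at this
  push_neg at this
  exact this.2 a' h'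

theorem fix_accC {s : σ} {c : γ} (h : M.propC F s = some c) :
    M.pC c none < M.pC c (some s) := by
  have := fix_noRejC hfix h
  unfold rejC at this
  push_neg at this
  exact this.1

theorem fix_ubC {s s' : σ} {c : γ} (h : M.propC F s = some c)
    (h' : M.propC F s' = some c) : M.pC c (some s') ≤ M.pC c (some s) := by
  have := fix_noRejC hfix h
  unfold rejC at this
  push_neg at this
  exact this.2 s' h'

theorem fix_uniqueA (G : Good M) {a a' : α} {s : σ} (h : M.propA F a = some s)
    (h' : M.propA F a' = some s) : a = a' := by
  have hsS : s ∈ M.S := (candA_spec (propA_eq_some h).2.1).1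
  exact (G.hSA s hsS).inj_some (propA_eq_some h).1 (propA_eq_some h').1
    (le_antisymm (fix_ubA hfix h' h) (fix_ubA hfix h h'))

theorem fix_uniqueC (G : Good M) {s s' : σ} {c : γ} (h : M.propC F s = some c)
    (h' : M.propC F s' = some c) : s = s' := by
  have hcC : c ∈ M.C := (candC_spec (propC_eq_some h).2.1).1
  exact (G.hC c hcC).inj_some (propC_mem_S h) (propC_mem_S h')
    (le_antisymm (fix_ubC hfix h' h) (fix_ubC hfix h h'))

end Fix

/-- Main engine result: a fixpoint of `step` yields a stable three-sided matching. -/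
theorem exists_stable (G : Good M) :
    ∃ μ : TriMatching M.A M.S M.C,
      TriStable M.A M.S M.C M.pA M.pSA M.pSC M.pC μ := by
  classical
  obtain ⟨F, hfix, hIA, hIC, -⟩ := exists_fixpoint (M := M) G
  -- helper facts at the fixpoint
  have notHopeless : ∀ {s : σ} {a' : α}, M.propA F a' = some s → ¬ M.hopeless F s :=
    fun hp => (candA_spec (propA_eq_some hp).2.1).2.2.2
  have sA_eq : ∀ {s : σ} {a' : α}, M.propA F a' = some s →
      (if h : ∃ a, M.propA F a = some s then some h.choose else none) = some a' := by
    intro s a' hp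
    have hex : ∃ a, M.propA F a = some s := ⟨a', hp⟩
    rw [dif_pos hex]
    exact congrArg some (fix_uniqueA hfix G hex.choose_spec hp)
  have sA_some : ∀ {s : σ} {a' : α},
      (if h : ∃ a, M.propA F a = some s then some h.choose else none) = some a' →
      M.propA F a' = some s := by
    intro s a' h
    split_ifs at h with hex
    · obtain rfl := Option.some.inj h
      exact hex.choose_spec
  have cS_eq : ∀ {s' : σ} {c : γ}, M.propC F s' = some c →
      (if h : ∃ t, M.propC F t = some c then some h.choose else none) = some s' := by
    intro s' c hp
    have hex : ∃ t, M.propC F t = some c := ⟨s', hp⟩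
    rw [dif_pos hex]
    exact congrArg some (fix_uniqueC hfix G hex.choose_spec hp)
  have cS_some : ∀ {s' : σ} {c : γ},
      (if h : ∃ t, M.propC F t = some c then some h.choose else none) = some s' →
      M.propC F s' = some c := by
    intro s' c h
    split_ifs at h with hex
    · obtain rfl := Option.some.inj h
      exact hex.choose_spec
  have propC_isSome' : ∀ {s : σ} {a' : α}, M.propA F a' = some s →
      (M.propC F s).isSome := by
    intro s a' hp
    have hheld : M.heldA F s := ⟨a', (propA_eq_some hp).1, hp, fix_accA hfix hp⟩
    have hne : (M.candC F s).Nonempty :=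
      Finset.nonempty_iff_ne_empty.mpr (notHopeless hp)
    unfold propC
    rw [if_pos hheld]
    exact pick_isSome hne
  have propA_notlt : ∀ {a : α} {s : σ}, a ∈ M.A → s ∈ M.candA F a →
      ¬ M.pA a (M.propA F a) < M.pA a (some s) := by
    intro a s ha hs hlt
    unfold propA at hlt
    rw [if_pos ha] at hlt
    obtain ⟨b, hb⟩ := Option.isSome_iff_exists.mp
      (pick_isSome (f := fun t => M.pA a (some t)) ⟨s, hs⟩)
    rw [hb] at hlt
    exact absurd ((pick_eq_some hb).2 s hs) (not_le.mpr hlt)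
  have propC_notlt : ∀ {s : σ} {c : γ}, M.heldA F s → c ∈ M.candC F s →
      ¬ M.pSC s (M.propC F s) < M.pSC s (some c) := by
    intro s c hheld hc hlt
    unfold propC at hlt
    rw [if_pos hheld] at hlt
    obtain ⟨b, hb⟩ := Option.isSome_iff_exists.mp
      (pick_isSome (f := fun c' => M.pSC s (some c')) ⟨c, hc⟩)
    rw [hb] at hlt
    exact absurd ((pick_eq_some hb).2 c hc) (not_le.mpr hlt)
  have hASmem : ∀ {a : α} {s : σ}, a ∈ M.A → s ∈ M.S → M.pA a none < M.pA a (some s) →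
      M.pA a (M.propA F a) < M.pA a (some s) → s ∈ F.1 a ∨ M.hopeless F s := by
    intro a s ha hsS haccA hlt
    by_contra hcon
    push_neg at hcon
    exact propA_notlt ha (Finset.mem_filter.mpr ⟨hsS, haccA, hcon.1, hcon.2⟩) hlt
  have hAside : ∀ {a : α} {s : σ}, s ∈ F.1 a → M.pSA s none < M.pSA s (some a) →
      M.hopeless F s ∨
        ∃ a', M.propA F a' = some s ∧ M.pSA s (some a) < M.pSA s (some a') := by
    intro a s hs hacc
    rcases hIA a s hs with h1 | h2 | ⟨a', hp, hlt, -⟩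
    · exact absurd hacc h1
    · exact Or.inl h2
    · exact Or.inr ⟨a', hp, hlt⟩
  have hCside : ∀ {s : σ} {c : γ}, c ∈ F.2 s → M.pC c none < M.pC c (some s) →
      ∃ s', M.propC F s' = some c ∧ M.pC c (some s) < M.pC c (some s') := by
    intro s c hc hacc
    rcases (hIC s c hc).2 with h1 | ⟨s', hp, hlt, -⟩
    · exact absurd hacc h1
    · exact ⟨s', hp, hlt⟩
  have hHopeSC : ∀ {s : σ} {c : γ}, M.hopeless F s → c ∈ M.C →
      M.pSC s none < M.pSC s (some c) → M.pC c none < M.pC c (some s) →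
      ¬ M.pC c (if h : ∃ t, M.propC F t = some c then some h.choose else none) <
          M.pC c (some s) := by
    intro s c hhop hcC haccSC haccC hblock
    have hcR : c ∈ F.2 s := by
      by_contra hcR
      have hmem : c ∈ M.candC F s := Finset.mem_filter.mpr ⟨hcC, haccSC, hcR⟩
      unfold hopeless at hhop
      rw [hhop] at hmem
      simp at hmem
    obtain ⟨s', hp, hlt⟩ := hCside hcR haccC
    rw [cS_eq hp] at hblock
    exact lt_asymm hlt hblock
  refine ⟨⟨fun a => M.propA F a,
      fun s => if h : ∃ a, M.propA F a = some s then some h.choose else none,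
      fun s => M.propC F s,
      fun c => if h : ∃ t, M.propC F t = some c then some h.choose else none,
      ?_, ?_, ?_, ?_, ?_, ?_, ?_⟩, ⟨?_, ?_, ?_, ?_⟩, ?_⟩
  · -- consA
    intro a s
    exact ⟨fun h => sA_eq h, fun h => sA_some h⟩
  · -- consC
    intro c s
    exact ⟨fun h => cS_some h, fun h => cS_eq h⟩
  · -- full
    intro s
    constructor
    · intro h
      obtain ⟨a0, ha0⟩ := Option.isSome_iff_exists.mp h
      exact propC_isSome' (sA_some ha0)
    · intro h
      obtain ⟨c, hc⟩ := Option.isSome_iff_exists.mp h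
      obtain ⟨⟨a0, -, hp, -⟩, -, -⟩ := propC_eq_some hc
      exact Option.isSome_iff_exists.mpr ⟨a0, sA_eq hp⟩
  · -- suppA
    intro a ha
    show M.propA F a = none
    unfold propA
    rw [if_neg ha]
  · -- suppSA
    intro s hs
    exact dif_neg (by rintro ⟨a, hp⟩; exact hs (candA_spec (propA_eq_some hp).2.1).1)
  · -- suppSC
    intro s hs
    show M.propC F s = none
    rcases hpc : M.propC F s with _ | c
    · rfl
    · exact absurd (propC_mem_S hpc) hs
  · -- suppC
    intro c hc
    exact dif_neg (by rintro ⟨t, hp⟩; exact hc (candC_spec (propC_eq_some hp).2.1).1)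
  · -- IR for advisors
    intro a _ s h
    exact (candA_spec (propA_eq_some h).2.1).2.1
  · -- IR for students on A side
    intro s _ a h
    exact fix_accA hfix (sA_some h)
  · -- IR for students on C side
    intro s _ c h
    exact (candC_spec (propC_eq_some h).2.1).2.1
  · -- IR for co-advisors
    intro c _ s h
    exact fix_accC hfix (cS_some h)
  · -- no blocking triple
    intro a s c hB
    obtain ⟨⟨haA, hsS, hcC, haccA, haccSA, haccSC, haccC⟩, hrest⟩ := hB
    rcases hrest with ⟨hnone, hAS, hSC⟩ | ⟨hsome, hor⟩
    · -- s unmatched: both pairs block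
      obtain ⟨hb1, hb2⟩ := hAS
      obtain ⟨hb3, hb4⟩ := hSC
      rcases hASmem haA hsS haccA hb2 with hRA | hhop
      · rcases hAside hRA haccSA with hhop | ⟨a', hp', hlt'⟩
        · exact hHopeSC hhop hcC haccSC haccC hb4
        · exact Option.some_ne_none a' ((sA_eq hp').symm.trans hnone)
      · exact hHopeSC hhop hcC haccSC haccC hb4
    · -- s matched: one pair blocks
      obtain ⟨a0, ha0⟩ := Option.isSome_iff_exists.mp hsome
      have hp0 : M.propA F a0 = some s := sA_some ha0
      have hnh : ¬ M.hopeless F s := notHopeless hp0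
      rcases hor with ⟨hb1, hb2⟩ | ⟨hb3, hb4⟩
      · -- advisor--student pair blocks
        rcases hASmem haA hsS haccA hb2 with hRA | hhop
        · rcases hAside hRA haccSA with hhop | ⟨a', hp', hlt'⟩
          · exact hnh hhop
          · obtain rfl : a' = a0 := fix_uniqueA hfix G hp' hp0
            rw [ha0] at hb1
            exact lt_asymm hlt' hb1
        · exact hnh hhop
      · -- student--co-advisor pair blocks
        have hheld : M.heldA F s := ⟨a0, (propA_eq_some hp0).1, hp0, fix_accA hfix hp0⟩
        by_cases hcand : c ∈ M.candC F s
        · exact propC_notlt hheld hcand hb3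
        · have hcR : c ∈ F.2 s := by
            by_contra hcR
            exact hcand (Finset.mem_filter.mpr ⟨hcC, haccSC, hcR⟩)
          obtain ⟨s', hp, hlt⟩ := hCside hcR haccC
          have hb4' : M.pC c (some s') < M.pC c (some s) := by
            rw [← cS_eq hp]
            exact hb4
          exact lt_asymm hlt hb4'

end Mkt

end Engine

/-- Every three-sided PhD market (cooperative advisors and
co-advisors, consistent student preferences, possibly incomplete preference lists)
admits a stable three-sided matching. -/
theorem exists_stable_tri_matching
    (A : Finset α) (S : Finset σ) (C : Finset γ)
    (prefA : α → Option σ → ℕ) (prefC : γ → Option σ → ℕ)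
    (prefSA : σ → Option α → ℕ) (prefSC : σ → Option γ → ℕ)
    (hA : ∀ a ∈ A, StrictPref (prefA a) S)
    (hC : ∀ c ∈ C, StrictPref (prefC c) S)
    (hSA : ∀ s ∈ S, StrictPref (prefSA s) A)
    (hSC : ∀ s ∈ S, StrictPref (prefSC s) C) :
    ∃ μ : TriMatching A S C, TriStable A S C prefA prefSA prefSC prefC μ := by
  exact Mkt.exists_stable (M := ⟨A, S, C, prefA, prefC, prefSA, prefSC⟩) ⟨hA, hC, hSA, hSC⟩

end Stmt7
end

section
/- Every many-to-many two-sided matching market with quotas (M, W, P, Q), with strict preferences over individuals and each person treating all of their spots equally, admits a stable matching in which no man–woman pair is matched more than once; in particular, the extended Gale–Shapley algorithm with quotas (men propose to their most preferred woman not yet proposed to whenever they have a free spot; women hold the best offers up to their quota) terminates and outputs such a stable matching. -/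
open scoped Classical

namespace Stmt11

/-- Strict preferences over partners in `W` plus staying single (`none`), encoded by a
rank function injective on the relevant alternatives; higher rank = more preferred. -/
def StrictPref {β : Type*} (pref : Option β → ℕ) (W : Finset β) : Prop :=
  Set.InjOn pref (insert none (Option.some '' (W : Set β)))

variable {α β : Type*}

/-- The set of partners of man `m` in the many-to-many matching `ν`. -/
noncomputable def ptnrsM (ν : Finset (α × β)) (m : α) : Finset β :=
  (ν.filter fun p => p.1 = m).image Prod.snd

/-- The set of partners of woman `w` in the many-to-many matching `ν`. -/
noncomputable def ptnrsW (ν : Finset (α × β)) (w : β) : Finset α :=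
  (ν.filter fun p => p.2 = w).image Prod.fst

/-- A valid many-to-many matching with quotas `qM`, `qW`: all pairs lie in `M × W`,
every person is matched at most their quota many times, and (being a set of pairs)
no man–woman pair is matched more than once. -/
def ValidQ (M : Finset α) (W : Finset β) (qM : α → ℕ) (qW : β → ℕ)
    (ν : Finset (α × β)) : Prop :=
  (∀ p ∈ ν, p.1 ∈ M ∧ p.2 ∈ W) ∧
  (∀ m, (ptnrsM ν m).card ≤ qM m) ∧ (∀ w, (ptnrsW ν w).card ≤ qW w)

/-- `x` is preferred to the set `P` of current partners padded with self-matches up to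
the quota `q`: `x` beats some current partner, or there is a free spot and `x` is
acceptable. -/
def PrefOver {X : Type*} (pref : Option X → ℕ) (q : ℕ) (P : Finset X) (x : X) : Prop :=
  (∃ y ∈ P, pref (some y) < pref (some x)) ∨ (P.card < q ∧ pref none < pref (some x))

/-- Individual rationality: no spot is filled by an unacceptable partner. -/
def IndRatQ (prefM : α → Option β → ℕ) (prefW : β → Option α → ℕ)
    (ν : Finset (α × β)) : Prop :=
  ∀ p ∈ ν, prefM p.1 none < prefM p.1 (some p.2) ∧ prefW p.2 none < prefW p.2 (some p.1)

/-- The (unmatched) pair `(m, w)` blocks `ν`. -/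
def BlocksQ (prefM : α → Option β → ℕ) (prefW : β → Option α → ℕ)
    (qM : α → ℕ) (qW : β → ℕ) (ν : Finset (α × β)) (m : α) (w : β) : Prop :=
  (m, w) ∉ ν ∧ PrefOver (prefM m) (qM m) (ptnrsM ν m) w ∧
    PrefOver (prefW w) (qW w) (ptnrsW ν w) m

/-- Stability of a many-to-many matching with quotas. -/
def StableQ (M : Finset α) (W : Finset β) (prefM : α → Option β → ℕ)
    (prefW : β → Option α → ℕ) (qM : α → ℕ) (qW : β → ℕ) (ν : Finset (α × β)) : Prop :=
  IndRatQ prefM prefW ν ∧ ∀ m ∈ M, ∀ w ∈ W, ¬ BlocksQ prefM prefW qM qW ν m w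

section Aux
variable {α β : Type*}

lemma mem_ptnrsM {ν : Finset (α × β)} {m : α} {w : β} :
    w ∈ ptnrsM ν m ↔ (m, w) ∈ ν := by
  constructor
  · intro h
    simp only [ptnrsM, Finset.mem_image, Finset.mem_filter] at h
    obtain ⟨p, ⟨hp, h1⟩, h2⟩ := h
    have : p = (m, w) := Prod.ext h1 h2
    rwa [this] at hp
  · intro h
    simp only [ptnrsM, Finset.mem_image, Finset.mem_filter]
    exact ⟨(m, w), ⟨h, rfl⟩, rfl⟩

lemma mem_ptnrsW {ν : Finset (α × β)} {m : α} {w : β} :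
    m ∈ ptnrsW ν w ↔ (m, w) ∈ ν := by
  constructor
  · intro h
    simp only [ptnrsW, Finset.mem_image, Finset.mem_filter] at h
    obtain ⟨p, ⟨hp, h1⟩, h2⟩ := h
    have : p = (m, w) := Prod.ext h2 h1
    rwa [this] at hp
  · intro h
    simp only [ptnrsW, Finset.mem_image, Finset.mem_filter]
    exact ⟨(m, w), ⟨h, rfl⟩, rfl⟩

lemma ptnrsM_insert_self (ν : Finset (α × β)) (m : α) (w : β) :
    ptnrsM (insert (m, w) ν) m = insert w (ptnrsM ν m) := by
  ext x
  simp only [mem_ptnrsM, Finset.mem_insert, Prod.mk.injEq, mem_ptnrsM]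
  tauto

lemma ptnrsM_insert_ne {m₀ m : α} (ν : Finset (α × β)) (w : β) (h : m₀ ≠ m) :
    ptnrsM (insert (m, w) ν) m₀ = ptnrsM ν m₀ := by
  ext x
  simp only [mem_ptnrsM, Finset.mem_insert, Prod.mk.injEq]
  tauto

lemma ptnrsW_insert_self (ν : Finset (α × β)) (m : α) (w : β) :
    ptnrsW (insert (m, w) ν) w = insert m (ptnrsW ν w) := by
  ext x
  simp only [mem_ptnrsW, Finset.mem_insert, Prod.mk.injEq]
  tauto

lemma ptnrsW_insert_ne {w₀ w : β} (ν : Finset (α × β)) (m : α) (h : w₀ ≠ w) :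
    ptnrsW (insert (m, w) ν) w₀ = ptnrsW ν w₀ := by
  ext x
  simp only [mem_ptnrsW, Finset.mem_insert, Prod.mk.injEq]
  tauto

lemma ptnrsM_erase_self (ν : Finset (α × β)) (m : α) (w : β) :
    ptnrsM (ν.erase (m, w)) m = (ptnrsM ν m).erase w := by
  ext x
  simp only [mem_ptnrsM, Finset.mem_erase, Prod.mk.injEq, ne_eq, not_and]
  aesop

lemma ptnrsM_erase_ne {m₀ m : α} (ν : Finset (α × β)) (w : β) (h : m₀ ≠ m) :
    ptnrsM (ν.erase (m, w)) m₀ = ptnrsM ν m₀ := by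
  ext x
  simp only [mem_ptnrsM, Finset.mem_erase, Prod.mk.injEq, ne_eq, not_and]
  aesop

lemma ptnrsW_erase_self (ν : Finset (α × β)) (m : α) (w : β) :
    ptnrsW (ν.erase (m, w)) w = (ptnrsW ν w).erase m := by
  ext x
  simp only [mem_ptnrsW, Finset.mem_erase, Prod.mk.injEq, ne_eq, not_and]
  aesop

lemma ptnrsW_erase_ne {w₀ w : β} (ν : Finset (α × β)) (m : α) (h : w₀ ≠ w) :
    ptnrsW (ν.erase (m, w)) w₀ = ptnrsW ν w₀ := by
  ext x
  simp only [mem_ptnrsW, Finset.mem_erase, Prod.mk.injEq, ne_eq, not_and]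
  aesop

end Aux

section Main
variable {α β : Type*}

lemma terminal_case (M : Finset α) (W : Finset β)
    (prefM : α → Option β → ℕ) (prefW : β → Option α → ℕ)
    (qM : α → ℕ) (qW : β → ℕ) (P ν : Finset (α × β))
    (hνP : ν ⊆ P) (hPsub : P ⊆ M ×ˢ W)
    (I2a : ∀ p ∈ P, prefM p.1 none < prefM p.1 (some p.2))
    (I2b : ∀ p ∈ ν, prefW p.2 none < prefW p.2 (some p.1))
    (I3 : ∀ m, (ptnrsM ν m).card ≤ qM m)
    (I4 : ∀ w, (ptnrsW ν w).card ≤ qW w)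
    (I5 : ∀ p ∈ P, p ∉ ν → prefW p.2 none < prefW p.2 (some p.1) →
      (ptnrsW ν p.2).card = qW p.2 ∧
      ∀ x ∈ ptnrsW ν p.2, prefW p.2 (some p.1) < prefW p.2 (some x))
    (I6 : ∀ m w₁ w₂, (m, w₁) ∈ P → w₂ ∈ W →
      prefM m (some w₁) < prefM m (some w₂) → (m, w₂) ∈ P)
    (hterm : ∀ m ∈ M, (ptnrsM ν m).card < qM m → ∀ w ∈ W,
      prefM m none < prefM m (some w) → (m, w) ∈ P) :
    ValidQ M W qM qW ν ∧ StableQ M W prefM prefW qM qW ν := by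
  refine ⟨⟨fun p hp => Finset.mem_product.mp (hPsub (hνP hp)), I3, I4⟩,
    fun p hp => ⟨I2a p (hνP hp), I2b p hp⟩, ?_⟩
  rintro m hmM w hwW ⟨hnmem, hPm, hPw⟩
  have hmP : (m, w) ∈ P := by
    rcases hPm with ⟨w', hw', hlt⟩ | ⟨hcard, hacc⟩
    · exact I6 m w' w (hνP (mem_ptnrsM.mp hw')) hwW hlt
    · exact hterm m hmM hcard w hwW hacc
  have hmacc : prefW w none < prefW w (some m) := by
    rcases hPw with ⟨m', hm', hlt⟩ | ⟨_, hacc⟩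
    · exact lt_trans (I2b (m', w) (mem_ptnrsW.mp hm')) hlt
    · exact hacc
  obtain ⟨hcard, hbet⟩ := I5 (m, w) hmP hnmem hmacc
  rcases hPw with ⟨m', hm', hlt⟩ | ⟨hc, _⟩
  · exact absurd (hbet m' hm') (not_lt.mpr (le_of_lt hlt))
  · exact absurd hcard (Nat.ne_of_lt hc)

lemma main_aux (M : Finset α) (W : Finset β)
    (prefM : α → Option β → ℕ) (prefW : β → Option α → ℕ)
    (hW : ∀ w ∈ W, StrictPref (prefW w) M)
    (qM : α → ℕ) (qW : β → ℕ) :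
    ∀ n : ℕ, ∀ P ν : Finset (α × β),
    ν ⊆ P → P ⊆ M ×ˢ W →
    (∀ p ∈ P, prefM p.1 none < prefM p.1 (some p.2)) →
    (∀ p ∈ ν, prefW p.2 none < prefW p.2 (some p.1)) →
    (∀ m, (ptnrsM ν m).card ≤ qM m) →
    (∀ w, (ptnrsW ν w).card ≤ qW w) →
    (∀ p ∈ P, p ∉ ν → prefW p.2 none < prefW p.2 (some p.1) →
      (ptnrsW ν p.2).card = qW p.2 ∧
      ∀ x ∈ ptnrsW ν p.2, prefW p.2 (some p.1) < prefW p.2 (some x)) →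
    (∀ m w₁ w₂, (m, w₁) ∈ P → w₂ ∈ W →
      prefM m (some w₁) < prefM m (some w₂) → (m, w₂) ∈ P) →
    ((M ×ˢ W) \ P).card ≤ n →
    ∃ ν' : Finset (α × β), ValidQ M W qM qW ν' ∧ StableQ M W prefM prefW qM qW ν' := by
  intro n
  induction n with
  | zero =>
    intro P ν hνP hPsub I2a I2b I3 I4 I5 I6 hmeas
    refine ⟨ν, terminal_case M W prefM prefW qM qW P ν hνP hPsub I2a I2b I3 I4 I5 I6 ?_⟩
    intro m hmM _ w hwW _
    have hempty : (M ×ˢ W) \ P = ∅ := Finset.card_eq_zero.mp (Nat.le_zero.mp hmeas)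
    by_contra hmem
    have : (m, w) ∈ (M ×ˢ W) \ P :=
      Finset.mem_sdiff.mpr ⟨Finset.mem_product.mpr ⟨hmM, hwW⟩, hmem⟩
    rw [hempty] at this
    exact absurd this (Finset.notMem_empty _)
  | succ n ih =>
    intro P ν hνP hPsub I2a I2b I3 I4 I5 I6 hmeas
    by_cases hterm : ∀ m ∈ M, (ptnrsM ν m).card < qM m → ∀ w ∈ W,
        prefM m none < prefM m (some w) → (m, w) ∈ P
    · exact ⟨ν, terminal_case M W prefM prefW qM qW P ν hνP hPsub I2a I2b I3 I4 I5 I6 hterm⟩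
    push_neg at hterm
    obtain ⟨m, hmM, hmfree, w₀, hw₀W, hw₀acc, hw₀P⟩ := hterm
    set S : Finset β := W.filter (fun w' => prefM m none < prefM m (some w') ∧ (m, w') ∉ P)
      with hSdef
    have hS : S.Nonempty := ⟨w₀, Finset.mem_filter.mpr ⟨hw₀W, hw₀acc, hw₀P⟩⟩
    obtain ⟨w, hwS, hwmax⟩ := S.exists_max_image (fun w' => prefM m (some w')) hS
    obtain ⟨hwW, haccm, hwP⟩ := Finset.mem_filter.mp hwS
    set P' : Finset (α × β) := insert (m, w) P with hP'def
    -- facts shared by all branches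
    have hmemsd : (m, w) ∈ (M ×ˢ W) \ P :=
      Finset.mem_sdiff.mpr ⟨Finset.mem_product.mpr ⟨hmM, hwW⟩, hwP⟩
    have hmeas' : ((M ×ˢ W) \ P').card ≤ n := by
      rw [hP'def, Finset.sdiff_insert]
      have := Finset.card_erase_lt_of_mem hmemsd
      omega
    have hP'sub : P' ⊆ M ×ˢ W :=
      Finset.insert_subset (Finset.mem_product.mpr ⟨hmM, hwW⟩) hPsub
    have I2a' : ∀ p ∈ P', prefM p.1 none < prefM p.1 (some p.2) := by
      intro p hp
      rcases Finset.mem_insert.mp hp with rfl | hp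
      · exact haccm
      · exact I2a p hp
    have I6' : ∀ m₀ w₁ w₂, (m₀, w₁) ∈ P' → w₂ ∈ W →
        prefM m₀ (some w₁) < prefM m₀ (some w₂) → (m₀, w₂) ∈ P' := by
      intro m₀ w₁ w₂ hp hw₂W hlt
      rcases Finset.mem_insert.mp hp with heq | hp
      · obtain ⟨rfl, rfl⟩ := Prod.mk.inj heq
        · by_cases hP2 : (m₀, w₂) ∈ P
          · exact Finset.mem_insert_of_mem hP2
          · have hw₂S : w₂ ∈ S :=
              Finset.mem_filter.mpr ⟨hw₂W, lt_trans haccm hlt, hP2⟩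
            exact absurd (hwmax w₂ hw₂S) (not_le.mpr hlt)
      · exact Finset.mem_insert_of_mem (I6 m₀ w₁ w₂ hp hw₂W hlt)
    have hmwν : (m, w) ∉ ν := fun h => hwP (hνP h)
    have hmA : m ∉ ptnrsW ν w := fun h => hmwν (mem_ptnrsW.mp h)
    have hAM : ∀ x ∈ ptnrsW ν w, x ∈ M := fun x hx =>
      (Finset.mem_product.mp (hPsub (hνP (mem_ptnrsW.mp hx)))).1
    have hinj := hW w hwW
    have hneq : ∀ x ∈ ptnrsW ν w, prefW w (some x) ≠ prefW w (some m) := by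
      intro x hx h
      refine hmA ?_
      have hxmem : (some x : Option α) ∈ insert none (Option.some '' (M : Set α)) :=
        Set.mem_insert_of_mem _ ⟨x, by exact_mod_cast hAM x hx, rfl⟩
      have hmmem : (some m : Option α) ∈ insert none (Option.some '' (M : Set α)) :=
        Set.mem_insert_of_mem _ ⟨m, by exact_mod_cast hmM, rfl⟩
      have := hinj hxmem hmmem h
      rwa [Option.some_inj.mp this] at hx
    -- reject helper
    have reject_case :
        (prefW w none < prefW w (some m) → (ptnrsW ν w).card = qW w ∧
          ∀ x ∈ ptnrsW ν w, prefW w (some m) < prefW w (some x)) →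
        ∃ ν' : Finset (α × β),
          ValidQ M W qM qW ν' ∧ StableQ M W prefM prefW qM qW ν' := by
      intro hnew
      refine ih P' ν (hνP.trans (Finset.subset_insert _ _)) hP'sub I2a' I2b I3 I4
        ?_ I6' hmeas'
      intro p hp hpν hacc
      rcases Finset.mem_insert.mp hp with rfl | hp
      · exact hnew hacc
      · exact I5 p hp hpν hacc
    by_cases haccw : prefW w none < prefW w (some m)
    · by_cases hfree : (ptnrsW ν w).card < qW w
      · -- accept: ν' = insert (m, w) ν
        refine ih P' (insert (m, w) ν) (Finset.insert_subset_insert _ hνP) hP'sub I2a'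
          ?_ ?_ ?_ ?_ I6' hmeas'
        · intro p hp
          rcases Finset.mem_insert.mp hp with rfl | hp
          · exact haccw
          · exact I2b p hp
        · intro m₀
          by_cases hm₀ : m₀ = m
          · subst hm₀
            rw [ptnrsM_insert_self]
            have := Finset.card_insert_le w (ptnrsM ν m₀)
            omega
          · rw [ptnrsM_insert_ne ν w hm₀]; exact I3 m₀
        · intro w₀
          by_cases hw₀ : w₀ = w
          · subst hw₀
            rw [ptnrsW_insert_self]
            have := Finset.card_insert_le m (ptnrsW ν w₀)
            omega
          · rw [ptnrsW_insert_ne ν m hw₀]; exact I4 w₀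
        · intro p hp hpν' hacc
          have hpne : p ≠ (m, w) := fun h => hpν' (h ▸ Finset.mem_insert_self _ _)
          have hpP : p ∈ P := by
            rcases Finset.mem_insert.mp hp with h | h
            · exact absurd h hpne
            · exact h
          have hpν : p ∉ ν := fun h => hpν' (Finset.mem_insert_of_mem h)
          obtain ⟨hc, hb⟩ := I5 p hpP hpν hacc
          by_cases hw₀ : p.2 = w
          · rw [hw₀] at hc; omega
          · rw [ptnrsW_insert_ne ν m hw₀]
            exact ⟨hc, hb⟩
      · have hfull : (ptnrsW ν w).card = qW w := le_antisymm (I4 w) (not_lt.mp hfree)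
        by_cases hbeat : ∃ x ∈ ptnrsW ν w, prefW w (some x) < prefW w (some m)
        · -- replace worst partner m' of w by m
          obtain ⟨x₀, hx₀A, hx₀lt⟩ := hbeat
          obtain ⟨m', hm'A, hm'min⟩ :=
            (ptnrsW ν w).exists_min_image (fun x => prefW w (some x)) ⟨x₀, hx₀A⟩
          have hm'lt : prefW w (some m') < prefW w (some m) :=
            lt_of_le_of_lt (hm'min x₀ hx₀A) hx₀lt
          have hm'ν : (m', w) ∈ ν := mem_ptnrsW.mp hm'A
          have hm'm : m' ≠ m := fun h => hmA (h ▸ hm'A)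
          have hmm' : m ≠ m' := fun h => hm'm h.symm
          have hAw' : ptnrsW (insert (m, w) (ν.erase (m', w))) w
              = insert m ((ptnrsW ν w).erase m') := by
            rw [ptnrsW_insert_self, ptnrsW_erase_self]
          have hmeA : m ∉ (ptnrsW ν w).erase m' :=
            fun h => hmA (Finset.mem_of_mem_erase h)
          have hcardw : (ptnrsW (insert (m, w) (ν.erase (m', w))) w).card = qW w := by
            rw [hAw', Finset.card_insert_of_notMem hmeA,
              Finset.card_erase_of_mem hm'A]
            have : 0 < (ptnrsW ν w).card := Finset.card_pos.mpr ⟨m', hm'A⟩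
            omega
          -- the minimum is strictly worse than every other partner
          have hm'bet : ∀ x ∈ (ptnrsW ν w).erase m',
              prefW w (some m') < prefW w (some x) := by
            intro x hx
            obtain ⟨hxm', hxA⟩ := Finset.mem_erase.mp hx
            refine lt_of_le_of_ne (hm'min x hxA) (fun h => hxm' ?_)
            have hxmem : (some x : Option α) ∈ insert none (Option.some '' (M : Set α)) :=
              Set.mem_insert_of_mem _ ⟨x, by exact_mod_cast hAM x hxA, rfl⟩
            have hm'mem : (some m' : Option α) ∈ insert none (Option.some '' (M : Set α)) :=
              Set.mem_insert_of_mem _ ⟨m', by exact_mod_cast hAM m' hm'A, rfl⟩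
            exact Option.some_inj.mp (hinj hxmem hm'mem h.symm)
          refine ih P' (insert (m, w) (ν.erase (m', w)))
            (Finset.insert_subset_insert _ ((Finset.erase_subset _ _).trans hνP))
            hP'sub I2a' ?_ ?_ ?_ ?_ I6' hmeas'
          · intro p hp
            rcases Finset.mem_insert.mp hp with rfl | hp
            · exact haccw
            · exact I2b p (Finset.mem_of_mem_erase hp)
          · intro m₀
            by_cases hm₀ : m₀ = m
            · subst hm₀
              rw [ptnrsM_insert_self, ptnrsM_erase_ne ν w hmm']
              have := Finset.card_insert_le w (ptnrsM ν m₀)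
              omega
            · rw [ptnrsM_insert_ne _ w hm₀]
              by_cases hm₀' : m₀ = m'
              · subst hm₀'
                rw [ptnrsM_erase_self]
                exact (Finset.card_le_card (Finset.erase_subset _ _)).trans (I3 m₀)
              · rw [ptnrsM_erase_ne ν w hm₀']; exact I3 m₀
          · intro w₀
            by_cases hw₀ : w₀ = w
            · subst hw₀; exact le_of_eq hcardw
            · rw [ptnrsW_insert_ne _ m hw₀, ptnrsW_erase_ne ν m' hw₀]; exact I4 w₀
          · intro p hp hpν' hacc
            have hpne : p ≠ (m, w) := fun h => hpν' (h ▸ Finset.mem_insert_self _ _)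
            have hpP : p ∈ P := by
              rcases Finset.mem_insert.mp hp with h | h
              · exact absurd h hpne
              · exact h
            by_cases hpm' : p = (m', w)
            · subst hpm'
              refine ⟨hcardw, ?_⟩
              intro x hx
              rw [hAw'] at hx
              rcases Finset.mem_insert.mp hx with rfl | hx
              · exact hm'lt
              · exact hm'bet x hx
            · have hpν : p ∉ ν := by
                intro h
                exact hpν' (Finset.mem_insert_of_mem (Finset.mem_erase.mpr ⟨hpm', h⟩))
              obtain ⟨hc, hb⟩ := I5 p hpP hpν hacc
              by_cases hw₀ : p.2 = w
              · rw [hw₀] at hc hb ⊢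
                refine ⟨hcardw, ?_⟩
                intro x hx
                rw [hAw'] at hx
                rcases Finset.mem_insert.mp hx with rfl | hx
                · exact lt_trans (hb m' hm'A) hm'lt
                · exact hb x (Finset.mem_of_mem_erase hx)
              · rw [ptnrsW_insert_ne _ m hw₀, ptnrsW_erase_ne ν m' hw₀]
                exact ⟨hc, hb⟩
        · -- reject: m is worse than everyone w holds
          push_neg at hbeat
          refine reject_case (fun _ => ⟨hfull, ?_⟩)
          intro x hx
          exact lt_of_le_of_ne (hbeat x hx) (Ne.symm (hneq x hx))
    · exact reject_case (fun h => absurd h haccw)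

end Main

/-- Every many-to-many two-sided matching market with quotas (strict
preferences over individuals, all spots treated equally) admits a stable matching in
which no man–woman pair is matched more than once — the output of the extended
Gale–Shapley algorithm with quotas. -/
theorem exists_stable_matching_with_quotas
    (M : Finset α) (W : Finset β)
    (prefM : α → Option β → ℕ) (prefW : β → Option α → ℕ)
    (hM : ∀ m ∈ M, StrictPref (prefM m) W) (hW : ∀ w ∈ W, StrictPref (prefW w) M)
    (qM : α → ℕ) (qW : β → ℕ) :
    ∃ ν : Finset (α × β), ValidQ M W qM qW ν ∧ StableQ M W prefM prefW qM qW ν := by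
  exact main_aux M W prefM prefW hW qM qW ((M ×ˢ W) \ ∅).card ∅ ∅
    (Finset.Subset.refl _) (Finset.empty_subset _)
    (fun p hp => absurd hp (Finset.notMem_empty _))
    (fun p hp => absurd hp (Finset.notMem_empty _))
    (fun m => by simp [ptnrsM]) (fun w => by simp [ptnrsW])
    (fun p hp => absurd hp (Finset.notMem_empty _))
    (fun m w1 w2 hp => absurd hp (Finset.notMem_empty _))
    le_rfl


end Stmt11
end

section
/- Let (M, W, P, Q) be a many-to-many two-sided market with quotas and strict preferences, and let quotas Q₁ satisfy Q₁(m) ≤ Q(m) for all m ∈ M and Q₁(w) = Q(w) for all w ∈ W, and quotas Q₂ satisfy Q₂(m) = Q(m) for all m ∈ M and Q₂(w) ≤ Q(w) for all w ∈ W. Fix a proposing side and let μ, μ₁, μ₂ be the correspondingly optimal stable matchings under quotas Q, Q₁, Q₂ respectively (the outputs of the extended Gale–Shapley algorithm with that side proposing). Then μ₁(m)_k ≥_m μ(m)_k for all m ∈ M and k = 1,…,Q₁(m), μ₁(w)_k ≤_w μ(w)_k for all w ∈ W and k = 1,…,Q(w), μ₂(m)_k ≤_m μ(m)_k for all m ∈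 M and k = 1,…,Q(m), and μ₂(w)_k ≥_w μ(w)_k for all w ∈ W and k = 1,…,Q₂(w). -/
open scoped Classical

namespace Stmt13

/-- Strict preferences over partners in `W` plus staying single (`none`), encoded by a
rank function injective on the relevant alternatives; higher rank = more preferred. -/
def StrictPref {β : Type*} (pref : Option β → ℕ) (W : Finset β) : Prop :=
  Set.InjOn pref (insert none (Option.some '' (W : Set β)))

variable {α β : Type*}

/-- The set of partners of man `m` in the many-to-many matching `ν`. -/
noncomputable def ptnrsM (ν : Finset (α × β)) (m : α) : Finset β :=
  (ν.filter fun p => p.1 = m).image Prod.snd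

/-- The set of partners of woman `w` in the many-to-many matching `ν`. -/
noncomputable def ptnrsW (ν : Finset (α × β)) (w : β) : Finset α :=
  (ν.filter fun p => p.2 = w).image Prod.fst

/-- A valid many-to-many matching with quotas `qM`, `qW`: all pairs lie in `M × W`,
every person is matched at most their quota many times, and (being a set of pairs)
no man–woman pair is matched more than once. -/
def ValidQ (M : Finset α) (W : Finset β) (qM : α → ℕ) (qW : β → ℕ)
    (ν : Finset (α × β)) : Prop :=
  (∀ p ∈ ν, p.1 ∈ M ∧ p.2 ∈ W) ∧
  (∀ m, (ptnrsM ν m).card ≤ qM m) ∧ (∀ w, (ptnrsW ν w).card ≤ qW w)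

/-- `x` is preferred to the set `P` of current partners padded with self-matches up to
the quota `q`: `x` beats some current partner, or there is a free spot and `x` is
acceptable. -/
def PrefOver {X : Type*} (pref : Option X → ℕ) (q : ℕ) (P : Finset X) (x : X) : Prop :=
  (∃ y ∈ P, pref (some y) < pref (some x)) ∨ (P.card < q ∧ pref none < pref (some x))

/-- Individual rationality: no spot is filled by an unacceptable partner. -/
def IndRatQ (prefM : α → Option β → ℕ) (prefW : β → Option α → ℕ)
    (ν : Finset (α × β)) : Prop :=
  ∀ p ∈ ν, prefM p.1 none < prefM p.1 (some p.2) ∧ prefW p.2 none < prefW p.2 (some p.1)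

/-- The (unmatched) pair `(m, w)` blocks `ν`. -/
def BlocksQ (prefM : α → Option β → ℕ) (prefW : β → Option α → ℕ)
    (qM : α → ℕ) (qW : β → ℕ) (ν : Finset (α × β)) (m : α) (w : β) : Prop :=
  (m, w) ∉ ν ∧ PrefOver (prefM m) (qM m) (ptnrsM ν m) w ∧
    PrefOver (prefW w) (qW w) (ptnrsW ν w) m

/-- Stability of a many-to-many matching with quotas. -/
def StableQ (M : Finset α) (W : Finset β) (prefM : α → Option β → ℕ)
    (prefW : β → Option α → ℕ) (qM : α → ℕ) (qW : β → ℕ) (ν : Finset (α × β)) : Prop :=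
  IndRatQ prefM prefW ν ∧ ∀ m ∈ M, ∀ w ∈ W, ¬ BlocksQ prefM prefW qM qW ν m w

/-- The `k`-th best partner (0-indexed) of a person with preferences `pref` and quota
`q`, among the set `P` of actual partners padded with self-matches (`none`) up to the
quota: the list of partners is sorted from most to least preferred. -/
noncomputable def spot {X : Type*} (pref : Option X → ℕ) (q : ℕ) (P : Finset X) (k : ℕ) :
    Option X :=
  (((P.toList.map some ++ List.replicate (q - P.card) none).insertionSort
      fun x y => pref y ≤ pref x)[k]?).getD none

/-- The man-optimal stable matching with quotas (extended Gale–Shapley with men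
proposing): every man's `k`-th best spot is at least as good as in any other stable
matching. -/
def ManOptQ (M : Finset α) (W : Finset β) (prefM : α → Option β → ℕ)
    (prefW : β → Option α → ℕ) (qM : α → ℕ) (qW : β → ℕ) (ν : Finset (α × β)) : Prop :=
  ValidQ M W qM qW ν ∧ StableQ M W prefM prefW qM qW ν ∧
  ∀ ν' : Finset (α × β), ValidQ M W qM qW ν' → StableQ M W prefM prefW qM qW ν' →
    ∀ m ∈ M, ∀ k, k < qM m →
      prefM m (spot (prefM m) (qM m) (ptnrsM ν' m) k) ≤
        prefM m (spot (prefM m) (qM m) (ptnrsM ν m) k)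

/-- The woman-optimal stable matching with quotas (extended Gale–Shapley with women
proposing). -/
def WomanOptQ (M : Finset α) (W : Finset β) (prefM : α → Option β → ℕ)
    (prefW : β → Option α → ℕ) (qM : α → ℕ) (qW : β → ℕ) (ν : Finset (α × β)) : Prop :=
  ValidQ M W qM qW ν ∧ StableQ M W prefM prefW qM qW ν ∧
  ∀ ν' : Finset (α × β), ValidQ M W qM qW ν' → StableQ M W prefM prefW qM qW ν' →
    ∀ w ∈ W, ∀ k, k < qW w →
      prefW w (spot (prefW w) (qW w) (ptnrsW ν' w) k) ≤
        prefW w (spot (prefW w) (qW w) (ptnrsW ν w) k)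

/-!
Run the extended deferred-acceptance algorithm one rejection at a time. By induction along the
run, no rejection made with quotas `qa, qwa` is a pair of a stable matching `ν` for weakly larger
proposer quotas and weakly smaller receiver quotas: a receiver `w` only turns down her worst
suitor when more than `qwa w ≥ qwb w` men court her, and one of them would block `ν`. So in the
terminal state every proposer's `ν`-partners are still available to him and his proposals, his
favourite available partners, beat them spot by spot; and a suitor of `w` who is not her
`ν`-partner would block `ν` unless `w` is full of better partners in `ν`, which makes `ν`
spot-wise better for her. The terminal matching is stable and proposer-optimal, hence it is the
given optimal matching. Lowering the proposers' or the receivers' quotas are the two instances of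
this comparison; when the women propose, exchange the two sides.
-/

section TopSet

variable {γ : Type*}

noncomputable def numAbove (f : γ → ℕ) (V : Finset γ) (y : γ) : ℕ :=
  (V.filter fun z => f y < f z).card

noncomputable def topSet (f : γ → ℕ) (t : ℕ) (V : Finset γ) : Finset γ :=
  V.filter fun y => numAbove f V y < t

variable {f : γ → ℕ} {V : Finset γ}

lemma numAbove_le_numAbove {y z : γ} (h : f y ≤ f z) : numAbove f V z ≤ numAbove f V y :=
  Finset.card_le_card fun x hx => by
    simp only [Finset.mem_filter] at hx ⊢
    exact ⟨hx.1, h.trans_lt hx.2⟩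

lemma numAbove_lt_numAbove {y z : γ} (hz : z ∈ V) (h : f y < f z) :
    numAbove f V z < numAbove f V y := by
  refine Finset.card_lt_card ⟨fun x hx => ?_, fun hsub => ?_⟩
  · simp only [Finset.mem_filter] at hx ⊢
    exact ⟨hx.1, h.trans hx.2⟩
  · exact lt_irrefl _ (Finset.mem_filter.mp (hsub (Finset.mem_filter.mpr ⟨hz, h⟩))).2

lemma numAbove_lt_card {y : γ} (hy : y ∈ V) : numAbove f V y < V.card :=
  Finset.card_lt_card (Finset.filter_ssubset.mpr ⟨y, hy, lt_irrefl _⟩)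

lemma numAbove_injOn (hinj : Set.InjOn f V) : Set.InjOn (numAbove f V) V := by
  intro y hy z hz hyz
  by_contra hne
  rcases lt_or_gt_of_ne (hinj.ne hy hz hne) with h | h
  · exact (numAbove_lt_numAbove hz h).ne hyz.symm
  · exact (numAbove_lt_numAbove hy h).ne hyz

lemma image_numAbove (hinj : Set.InjOn f V) : V.image (numAbove f V) = Finset.range V.card :=
  Finset.eq_of_subset_of_card_le
    (fun i hi => by
      obtain ⟨y, hy, rfl⟩ := Finset.mem_image.mp hi
      exact Finset.mem_range.mpr (numAbove_lt_card hy))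
    (by rw [Finset.card_range, Finset.card_image_of_injOn (numAbove_injOn hinj)])

lemma topSet_subset (t : ℕ) : topSet f t V ⊆ V := Finset.filter_subset _ _

lemma mem_topSet_of_subset {V' : Finset γ} {t : ℕ} {x : γ} (hV' : V' ⊆ V)
    (hx : x ∈ topSet f t V) (hx' : x ∈ V') : x ∈ topSet f t V' :=
  Finset.mem_filter.mpr ⟨hx', (Finset.card_le_card (Finset.filter_subset_filter _ hV')).trans_lt
    (Finset.mem_filter.mp hx).2⟩

lemma card_topSet (hinj : Set.InjOn f V) (t : ℕ) : (topSet f t V).card = min t V.card := by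
  have hrange : (Finset.range V.card).filter (· < t) = Finset.range (min t V.card) := by
    ext i; simp only [Finset.mem_filter, Finset.mem_range]; omega
  rw [← Finset.card_image_of_injOn ((numAbove_injOn hinj).mono (topSet_subset t)), topSet,
    ← Finset.filter_image (p := (· < t)), image_numAbove hinj, hrange, Finset.card_range]

lemma card_topSet_le (hinj : Set.InjOn f V) (t : ℕ) : (topSet f t V).card ≤ t := by
  rw [card_topSet hinj]; exact min_le_left _ _

lemma topSet_full_above {x : γ} (hinj : Set.InjOn f V) {t : ℕ} (hx : x ∈ V)
    (hxt : x ∉ topSet f t V) : (topSet f t V).card = t ∧ ∀ y ∈ topSet f t V, f x < f y := by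
  have hxt : t ≤ numAbove f V x := by simpa [topSet, hx] using hxt
  refine ⟨?_, fun y hy => ?_⟩
  · rw [card_topSet hinj]
    exact min_eq_left (hxt.trans (numAbove_lt_card hx).le)
  · by_contra! hyx
    exact absurd ((Finset.mem_filter.mp hy).2) (not_lt.mpr (hxt.trans (numAbove_le_numAbove hyx)))

end TopSet

section SortedList

variable {δ : Type*} {g : δ → ℕ} {L : List δ}

lemma succ_le_countP_of_pairwise (hL : L.Pairwise fun x y => g y ≤ g x) {k : ℕ}
    (hk : k < L.length) : k + 1 ≤ L.countP fun x => g L[k] ≤ g x := by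
  have htake : ∀ x ∈ L.take (k + 1), g L[k] ≤ g x := by
    intro x hx
    obtain ⟨i, hi, rfl⟩ := List.mem_iff_getElem.mp hx
    simp only [List.length_take, lt_min_iff] at hi
    rw [List.getElem_take]
    rcases Nat.lt_succ_iff_lt_or_eq.mp hi.1 with hik | rfl
    · exact List.pairwise_iff_getElem.mp hL i k hi.2 hk hik
    · exact le_rfl
  calc k + 1 = (L.take (k + 1)).length := by rw [List.length_take]; omega
    _ = (L.take (k + 1)).countP fun x => g L[k] ≤ g x :=
      (List.countP_eq_length.mpr (by simpa using htake)).symm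
    _ ≤ _ := (List.take_sublist _ _).countP_le

lemma le_getElem_of_le_countP (hL : L.Pairwise fun x y => g y ≤ g x) {k n : ℕ}
    (hk : k < L.length) (hc : k + 1 ≤ L.countP fun x => n ≤ g x) : n ≤ g L[k] := by
  by_contra! hlt
  have hdrop : (L.drop k).countP (fun x => n ≤ g x) = 0 := by
    refine List.countP_eq_zero.mpr fun x hx => ?_
    obtain ⟨j, hj, rfl⟩ := List.mem_iff_getElem.mp hx
    simp only [List.length_drop] at hj
    rw [List.getElem_drop]
    have hle : g L[k + j] ≤ g L[k] := by
      rcases Nat.eq_zero_or_pos j with rfl | hj0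
      · exact le_rfl
      · exact List.pairwise_iff_getElem.mp hL k (k + j) hk (by omega) (by omega)
    simpa using hle.trans_lt hlt
  have htake : (L.take k).countP (fun x => n ≤ g x) ≤ k :=
    List.countP_le_length.trans (by simp)
  rw [← List.take_append_drop k L, List.countP_append, hdrop] at hc
  omega

end SortedList

section Spot

variable {γ : Type*} {f : Option γ → ℕ} {q : ℕ} {P : Finset γ}

noncomputable def spotList (f : Option γ → ℕ) (q : ℕ) (P : Finset γ) : List (Option γ) :=
  (P.toList.map some ++ List.replicate (q - P.card) none).insertionSort fun x y => f y ≤ f x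

lemma spot_eq_getD (k : ℕ) : spot f q P k = ((spotList f q P)[k]?).getD none := rfl

lemma spotList_perm :
    (spotList f q P).Perm (P.toList.map some ++ List.replicate (q - P.card) none) :=
  List.perm_insertionSort _ _

lemma length_spotList (hq : P.card ≤ q) : (spotList f q P).length = q := by
  rw [spotList_perm.length_eq]
  simp only [List.length_append, List.length_map, Finset.length_toList, List.length_replicate]
  omega

lemma pairwise_spotList : (spotList f q P).Pairwise fun x y => f y ≤ f x := by
  have : Std.Total fun x y : Option γ => f y ≤ f x := ⟨fun a b => le_total (f b) (f a)⟩
  have : IsTrans (Option γ) fun x y => f y ≤ f x := ⟨fun _ _ _ h1 h2 => h2.trans h1⟩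
  exact List.pairwise_insertionSort _ _

lemma some_mem_spotList {y : γ} : some y ∈ spotList f q P ↔ y ∈ P := by
  simp [spotList_perm.mem_iff, List.mem_replicate]

lemma countP_spotList {n : ℕ} (hn : f none < n) :
    (spotList f q P).countP (fun x => n ≤ f x) = (P.filter fun y => n ≤ f (some y)).card := by
  have htoList := (Finset.nodup_toList P).card_eq_countP (P := fun y => n ≤ f (some y))
  rw [Finset.toList_toFinset] at htoList
  rw [spotList_perm.countP_eq, List.countP_append, List.countP_replicate, List.countP_map,
    htoList]
  simp [Function.comp_def, hn]

lemma mem_of_spot_eq_some {k : ℕ} {x : γ} (hx : spot f q P k = some x) : x ∈ P := by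
  rw [spot_eq_getD] at hx
  obtain ⟨hk, hget⟩ : ∃ hk : k < (spotList f q P).length, (spotList f q P)[k] = some x := by
    by_cases hk : k < (spotList f q P).length
    · exact ⟨hk, by simpa [List.getElem?_eq_getElem hk] using hx⟩
    · simp [List.getElem?_eq_none (not_lt.mp hk)] at hx
  exact some_mem_spotList.mp (hget ▸ List.getElem_mem hk)

lemma mem_iff_exists_spot_eq (hq : P.card ≤ q) {y : γ} :
    y ∈ P ↔ ∃ k < q, spot f q P k = some y := by
  refine ⟨fun hy => ?_, fun ⟨k, _, hk⟩ => mem_of_spot_eq_some hk⟩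
  obtain ⟨k, hk, hget⟩ := List.mem_iff_getElem.mp (some_mem_spotList (f := f) (q := q) |>.mpr hy)
  refine ⟨k, length_spotList hq ▸ hk, ?_⟩
  rw [spot_eq_getD, List.getElem?_eq_getElem hk, hget, Option.getD_some]

lemma none_le_spot (hacc : ∀ y ∈ P, f none < f (some y)) (k : ℕ) :
    f none ≤ f (spot f q P k) := by
  cases hx : spot f q P k with
  | none => exact le_rfl
  | some x => exact (hacc x (mem_of_spot_eq_some hx)).le

lemma le_spot_of_le_card_filter (hq : P.card ≤ q) {k n : ℕ} (hk : k < q) (hn : f none < n)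
    (hc : k + 1 ≤ (P.filter fun y => n ≤ f (some y)).card) : n ≤ f (spot f q P k) := by
  have hk' : k < (spotList f q P).length := (length_spotList hq).symm ▸ hk
  rw [spot_eq_getD, List.getElem?_eq_getElem hk', Option.getD_some]
  exact le_getElem_of_le_countP pairwise_spotList hk' (countP_spotList hn ▸ hc)

lemma le_card_filter_of_spot_eq_some {k : ℕ} {x : γ} (hx : spot f q P k = some x)
    (hacc : f none < f (some x)) :
    k + 1 ≤ (P.filter fun y => f (some x) ≤ f (some y)).card := by
  rw [spot_eq_getD] at hx
  by_cases hk : k < (spotList f q P).length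
  · have hget : (spotList f q P)[k] = some x := by
      simpa [List.getElem?_eq_getElem hk] using hx
    have := succ_le_countP_of_pairwise pairwise_spotList hk
    rwa [hget, countP_spotList hacc] at this
  · simp [List.getElem?_eq_none (not_lt.mp hk)] at hx

lemma spot_le_spot {P' : Finset γ} {q' k : ℕ} (hP' : P'.card ≤ q') (hk : k < q')
    (haccP : ∀ x ∈ P, f none < f (some x)) (haccP' : ∀ x ∈ P', f none < f (some x))
    (hfull : ∀ x ∈ P, x ∉ P' → P'.card = q' ∧ ∀ y ∈ P', f (some x) < f (some y)) :
    f (spot f q P k) ≤ f (spot f q' P' k) := by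
  cases hx : spot f q P k with
  | none => exact none_le_spot haccP' k
  | some x =>
    have hxP := mem_of_spot_eq_some hx
    have hnone := haccP x hxP
    have hcount := le_card_filter_of_spot_eq_some hx hnone
    refine le_spot_of_le_card_filter hP' hk hnone ?_
    by_cases hsub : ∀ y ∈ P, f (some x) ≤ f (some y) → y ∈ P'
    · refine hcount.trans (Finset.card_le_card fun y hy => ?_)
      rw [Finset.mem_filter] at hy ⊢
      exact ⟨hsub y hy.1 hy.2, hy.2⟩
    · push Not at hsub
      obtain ⟨x', hx'P, hxx', hx'P'⟩ := hsub
      obtain ⟨hcard, habove⟩ := hfull x' hx'P hx'P'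
      rw [Finset.filter_true_of_mem fun y hy => hxx'.trans (habove y hy).le, hcard]
      exact hk

end Spot

section Preferences

variable {γ : Type*} {f : Option γ → ℕ} {q : ℕ} {P : Finset γ} {x : γ}

lemma StrictPref.injOn_some {W : Finset γ} (hf : StrictPref f W) :
    Set.InjOn (fun y => f (some y)) W :=
  fun _ hy _ hz hyz => Option.some_injective _ (hf (Set.mem_insert_of_mem _ ⟨_, hy, rfl⟩)
    (Set.mem_insert_of_mem _ ⟨_, hz, rfl⟩) hyz)

lemma StrictPref.ne {W : Finset γ} (hf : StrictPref f W) {y z : γ} (hy : y ∈ W) (hz : z ∈ W)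
    (hyz : y ≠ z) : f (some y) ≠ f (some z) :=
  hf.injOn_some.ne hy hz hyz

lemma none_lt_of_prefOver (hacc : ∀ y ∈ P, f none < f (some y)) (h : PrefOver f q P x) :
    f none < f (some x) := by
  rcases h with ⟨y, hy, hlt⟩ | ⟨_, hlt⟩
  · exact (hacc y hy).trans hlt
  · exact hlt

lemma not_prefOver_of_full_above (hcard : P.card = q)
    (habove : ∀ y ∈ P, f (some x) < f (some y)) : ¬ PrefOver f q P x := by
  rintro (⟨y, hy, hlt⟩ | ⟨hlt, _⟩)
  · exact lt_asymm hlt (habove y hy)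
  · exact hlt.ne hcard

lemma full_above_of_not_prefOver (hcard : P.card ≤ q) (hacc : f none < f (some x))
    (hne : ∀ y ∈ P, f (some y) ≠ f (some x)) (h : ¬ PrefOver f q P x) :
    P.card = q ∧ ∀ y ∈ P, f (some x) < f (some y) := by
  simp only [PrefOver, not_or, not_exists, not_and, not_lt] at h
  refine ⟨hcard.antisymm (not_lt.mp fun hlt => absurd hacc (not_lt.mpr (h.2 hlt))), fun y hy => ?_⟩
  exact (h.1 y hy).lt_of_ne (hne y hy).symm

lemma prefOver_of_mem_topSet {U S : Finset γ} {t : ℕ}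
    (hinj : Set.InjOn (fun y => f (some y)) U) (hacc : f none < f (some x)) (hS : S ⊆ U)
    (ht : t ≤ q) (hx : x ∈ topSet (fun y => f (some y)) t U) (hxS : x ∉ S) :
    PrefOver f q S x := by
  by_cases hbelow : ∃ y ∈ S, f (some y) < f (some x)
  · exact Or.inl hbelow
  push Not at hbelow
  refine Or.inr ⟨?_, hacc⟩
  have habove : S ⊆ U.filter fun y => f (some x) < f (some y) := fun y hy =>
    Finset.mem_filter.mpr ⟨hS hy, (hbelow y hy).lt_of_ne
      (hinj.ne (topSet_subset t hx) (hS hy) (ne_of_mem_of_not_mem hy hxS).symm)⟩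
  exact ((Finset.card_le_card habove).trans_lt (Finset.mem_filter.mp hx).2).trans_le ht

lemma StrictPref.eq_of_spot_eq {W P' : Finset γ} (hf : StrictPref f W) (hP : P ⊆ W)
    (hP' : P' ⊆ W) (hq : P.card ≤ q) (hq' : P'.card ≤ q)
    (h : ∀ k < q, f (spot f q P k) = f (spot f q P' k)) : P = P' := by
  have hspot : ∀ {Q : Finset γ}, Q ⊆ W → ∀ k, spot f q Q k ∈ insert none (some '' (W : Set γ)) := by
    intro Q hQ k
    cases hx : spot f q Q k with
    | none => exact Set.mem_insert _ _
    | some x => exact Set.mem_insert_of_mem _ ⟨x, hQ (mem_of_spot_eq_some hx), rfl⟩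
  ext y
  rw [mem_iff_exists_spot_eq hq, mem_iff_exists_spot_eq hq']
  refine exists_congr fun k => and_congr_right fun hk => ?_
  rw [hf (hspot hP k) (hspot hP' k) (h k hk)]

end Preferences

section Market

lemma mem_ptnrsM {ν : Finset (α × β)} {m : α} {w : β} : w ∈ ptnrsM ν m ↔ (m, w) ∈ ν := by
  simp [ptnrsM]

lemma mem_ptnrsW {ν : Finset (α × β)} {m : α} {w : β} : m ∈ ptnrsW ν w ↔ (m, w) ∈ ν := by
  simp [ptnrsW]

variable (M : Finset α) (W : Finset β) (pm : α → Option β → ℕ) (pw : β → Option α → ℕ)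

noncomputable def available (R : Finset (α × β)) (m : α) : Finset β :=
  W.filter fun w => pm m none < pm m (some w) ∧ (m, w) ∉ R

/-- A state of the algorithm is the set `R` of rejections made so far; in it every proposer `m`
proposes to his `qa m` favourite acceptable partners that have not rejected him. -/
noncomputable def proposals (qa : α → ℕ) (R : Finset (α × β)) (m : α) : Finset β :=
  topSet (fun w => pm m (some w)) (qa m) (available W pm R m)

noncomputable def suitors (qa : α → ℕ) (R : Finset (α × β)) (w : β) : Finset α :=
  M.filter fun m => w ∈ proposals W pm qa R m

inductive Reachable (qa : α → ℕ) (qwa : β → ℕ) : Finset (α × β) → Prop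
  | empty : Reachable qa qwa ∅
  | reject_unacceptable {R : Finset (α × β)} {m : α} {w : β} (hR : Reachable qa qwa R)
      (hm : m ∈ suitors M W pm qa R w) (hunacc : pw w (some m) ≤ pw w none) :
      Reachable qa qwa (insert (m, w) R)
  | reject_worst {R : Finset (α × β)} {m : α} {w : β} (hR : Reachable qa qwa R)
      (hm : m ∈ suitors M W pm qa R w) (hover : qwa w < (suitors M W pm qa R w).card)
      (hworst : ∀ m' ∈ suitors M W pm qa R w, pw w (some m) ≤ pw w (some m')) :
      Reachable qa qwa (insert (m, w) R)

def IsTerminal (qa : α → ℕ) (qwa : β → ℕ) (R : Finset (α × β)) : Prop :=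
  Reachable M W pm pw qa qwa R ∧ ∀ w, (∀ m ∈ suitors M W pm qa R w, pw w none < pw w (some m)) ∧
    (suitors M W pm qa R w).card ≤ qwa w

noncomputable def proposalMatching (qa : α → ℕ) (R : Finset (α × β)) : Finset (α × β) :=
  (M ×ˢ W).filter fun p => p.2 ∈ proposals W pm qa R p.1

def Saturated (qa : α → ℕ) (qwa : β → ℕ) (R : Finset (α × β)) (w : β) (t : ℕ) : Prop :=
  qwa w ≤ ((suitors M W pm qa R w).filter fun x => t < pw w (some x)).card

variable {M W pm pw} {qa qb : α → ℕ} {qwa qwb : β → ℕ} {R ν : Finset (α × β)} {m : α} {w : β}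

lemma mem_available : w ∈ available W pm R m ↔ w ∈ W ∧ pm m none < pm m (some w) ∧ (m, w) ∉ R :=
  Finset.mem_filter

lemma proposals_subset_available : proposals W pm qa R m ⊆ available W pm R m :=
  topSet_subset _

lemma mem_suitors : m ∈ suitors M W pm qa R w ↔ m ∈ M ∧ w ∈ proposals W pm qa R m :=
  Finset.mem_filter

lemma mem_and_mem_of_mem_suitors (h : m ∈ suitors M W pm qa R w) : m ∈ M ∧ w ∈ W :=
  ⟨(mem_suitors.mp h).1, (mem_available.mp (proposals_subset_available (mem_suitors.mp h).2)).1⟩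

lemma none_lt_of_mem_proposals (h : w ∈ proposals W pm qa R m) : pm m none < pm m (some w) :=
  (mem_available.mp (proposals_subset_available h)).2.1

lemma injOn_available (hm : StrictPref (pm m) W) :
    Set.InjOn (fun w => pm m (some w)) (available W pm R m) :=
  hm.injOn_some.mono fun _ hw => (mem_available.mp hw).1

lemma card_proposals_le (hm : StrictPref (pm m) W) : (proposals W pm qa R m).card ≤ qa m :=
  card_topSet_le (injOn_available hm) _

lemma mem_proposals_of_subset {R' : Finset (α × β)} (hRR' : R ⊆ R')
    (h : w ∈ proposals W pm qa R m) (hw : (m, w) ∉ R') : w ∈ proposals W pm qa R' m := by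
  have hav := mem_available.mp (proposals_subset_available h)
  refine mem_topSet_of_subset (fun y hy => ?_) h (mem_available.mpr ⟨hav.1, hav.2.1, hw⟩)
  obtain ⟨hyW, hyacc, hyR⟩ := mem_available.mp hy
  exact mem_available.mpr ⟨hyW, hyacc, fun h => hyR (hRR' h)⟩

lemma mem_suitors_insert {m' : α} {w' : β} (h : m ∈ suitors M W pm qa R w)
    (hne : (m, w) ≠ (m', w')) : m ∈ suitors M W pm qa (insert (m', w') R) w := by
  obtain ⟨hm, hw⟩ := mem_suitors.mp h
  refine mem_suitors.mpr ⟨hm, mem_proposals_of_subset (Finset.subset_insert _ _) hw ?_⟩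
  rw [Finset.mem_insert, not_or]
  exact ⟨hne, (mem_available.mp (proposals_subset_available hw)).2.2⟩

lemma ptnrsM_subset_available (hIR : IndRatQ pm pw ν) (hval : ValidQ M W qb qwb ν)
    (hdisj : Disjoint R ν) : ptnrsM ν m ⊆ available W pm R m := fun w hw => by
  have hmw := mem_ptnrsM.mp hw
  exact mem_available.mpr ⟨(hval.1 _ hmw).2, (hIR _ hmw).1, Finset.disjoint_right.mp hdisj hmw⟩

lemma prefOver_of_mem_proposals (hm : StrictPref (pm m) W) (hq : qa m ≤ qb m)
    (hIR : IndRatQ pm pw ν) (hval : ValidQ M W qb qwb ν) (hdisj : Disjoint R ν)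
    (hw : w ∈ proposals W pm qa R m) (hmw : (m, w) ∉ ν) :
    PrefOver (pm m) (qb m) (ptnrsM ν m) w :=
  prefOver_of_mem_topSet (injOn_available hm) (none_lt_of_mem_proposals hw)
    (ptnrsM_subset_available hIR hval hdisj) hq hw (mt mem_ptnrsM.mp hmw)

lemma Reachable.subset (h : Reachable M W pm pw qa qwa R) : R ⊆ M ×ˢ W := by
  induction h with
  | empty => exact Finset.empty_subset _
  | reject_unacceptable _ hm _ ih | reject_worst _ hm _ _ ih =>
    exact Finset.insert_subset (Finset.mem_product.mpr (mem_and_mem_of_mem_suitors hm)) ih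

theorem Reachable.disjoint (hM : ∀ m ∈ M, StrictPref (pm m) W)
    (hW : ∀ w ∈ W, StrictPref (pw w) M) (hq : ∀ m ∈ M, qa m ≤ qb m)
    (hqw : ∀ w ∈ W, qwb w ≤ qwa w) (hval : ValidQ M W qb qwb ν)
    (hstab : StableQ M W pm pw qb qwb ν) (h : Reachable M W pm pw qa qwa R) : Disjoint R ν := by
  induction h with
  | empty => exact Finset.disjoint_empty_left _
  | reject_unacceptable _ _ hunacc ih =>
    exact Finset.disjoint_insert_left.mpr
      ⟨fun hmw => absurd (hstab.1 _ hmw).2 (not_lt.mpr hunacc), ih⟩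
  | @reject_worst R m w _ hm hover hworst ih =>
    refine Finset.disjoint_insert_left.mpr ⟨fun hmw => ?_, ih⟩
    obtain ⟨hmM, hwW⟩ := mem_and_mem_of_mem_suitors hm
    -- `w` has more suitors than `ν`-partners; a suitor `m'` she is not matched to blocks `ν`
    obtain ⟨m', hm', hm'ν⟩ := Finset.exists_mem_notMem_of_card_lt_card
      (((hval.2.2 w).trans (hqw w hwW)).trans_lt hover)
    have hm'M := (mem_suitors.mp hm').1
    have hm'w : (m', w) ∉ ν := mt mem_ptnrsW.mpr hm'ν
    have hne : m ≠ m' := fun h => hm'w (h ▸ hmw)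
    refine hstab.2 m' hm'M w hwW ⟨hm'w, ?_, Or.inl ⟨m, mem_ptnrsW.mpr hmw, ?_⟩⟩
    · exact prefOver_of_mem_proposals (hM m' hm'M) (hq m' hm'M) hstab.1 hval ih
        (mem_suitors.mp hm').2 hm'w
    · exact (hworst m' hm').lt_of_ne ((hW w hwW).ne hmM hm'M hne)

lemma Saturated.insert {t : ℕ} {m' : α} {w' : β} (h : Saturated M W pm pw qa qwa R w t)
    (hm' : w = w' → pw w (some m') ≤ t) : Saturated M W pm pw qa qwa (insert (m', w') R) w t := by
  refine h.trans (Finset.card_le_card fun x hx => ?_)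
  obtain ⟨hx, hxt⟩ := Finset.mem_filter.mp hx
  refine Finset.mem_filter.mpr ⟨mem_suitors_insert hx ?_, hxt⟩
  rintro ⟨rfl, rfl⟩
  exact absurd hxt (not_lt.mpr (hm' rfl))

lemma saturated_insert_of_worst (hW : ∀ w ∈ W, StrictPref (pw w) M)
    (hm : m ∈ suitors M W pm qa R w) (hover : qwa w < (suitors M W pm qa R w).card)
    (hworst : ∀ m' ∈ suitors M W pm qa R w, pw w (some m) ≤ pw w (some m')) {t : ℕ}
    (ht : t ≤ pw w (some m)) : Saturated M W pm pw qa qwa (insert (m, w) R) w t := by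
  obtain ⟨hmM, hwW⟩ := mem_and_mem_of_mem_suitors hm
  have hsub : (suitors M W pm qa R w).erase m ⊆
      (suitors M W pm qa (insert (m, w) R) w).filter fun x => t < pw w (some x) := by
    intro x hx
    obtain ⟨hxm, hx⟩ := Finset.mem_erase.mp hx
    refine Finset.mem_filter.mpr ⟨mem_suitors_insert hx (by simp [hxm]), ht.trans_lt ?_⟩
    exact (hworst x hx).lt_of_ne ((hW w hwW).ne hmM (mem_suitors.mp hx).1 (Ne.symm hxm))
  have := Finset.card_le_card hsub
  rw [Finset.card_erase_of_mem hm] at this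
  unfold Saturated
  omega

theorem Reachable.saturated (hW : ∀ w ∈ W, StrictPref (pw w) M)
    (h : Reachable M W pm pw qa qwa R) (hmw : (m, w) ∈ R) (hacc : pw w none < pw w (some m)) :
    Saturated M W pm pw qa qwa R w (pw w (some m)) := by
  induction h with
  | empty => simp at hmw
  | reject_unacceptable _ _ hunacc ih =>
    rcases Finset.mem_insert.mp hmw with heq | hmw
    · obtain ⟨rfl, rfl⟩ := Prod.mk.inj heq
      omega
    · exact (ih hmw).insert fun hww => by subst hww; omega
  | @reject_worst R m₁ w₁ _ hm hover hworst ih =>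
    rcases Finset.mem_insert.mp hmw with heq | hmw
    · obtain ⟨rfl, rfl⟩ := Prod.mk.inj heq
      exact saturated_insert_of_worst hW hm hover hworst le_rfl
    · by_cases hbetter : w = w₁ ∧ pw w (some m) < pw w (some m₁)
      · obtain ⟨rfl, hlt⟩ := hbetter
        exact saturated_insert_of_worst hW hm hover hworst hlt.le
      · exact (ih hmw).insert fun hww => not_lt.mp fun hlt => hbetter ⟨hww, hww ▸ hlt⟩

variable (M W pm pw) in
theorem exists_isTerminal (qa : α → ℕ) (qwa : β → ℕ) : ∃ R, IsTerminal M W pm pw qa qwa R := by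
  obtain ⟨R, hR, hmax⟩ := Finset.exists_max_image
    ((M ×ˢ W).powerset.filter (Reachable M W pm pw qa qwa)) Finset.card
    ⟨∅, Finset.mem_filter.mpr ⟨Finset.empty_mem_powerset _, Reachable.empty⟩⟩
  have hR := (Finset.mem_filter.mp hR).2
  -- a reachable rejection set of maximal size admits no further rejection
  have hstuck : ∀ {m w}, m ∈ suitors M W pm qa R w →
      ¬ Reachable M W pm pw qa qwa (insert (m, w) R) := fun hm hreach => by
    have hnew : _ ∉ R := (mem_available.mp (proposals_subset_available (mem_suitors.mp hm).2)).2.2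
    have := hmax _ (Finset.mem_filter.mpr ⟨Finset.mem_powerset.mpr hreach.subset, hreach⟩)
    rw [Finset.card_insert_of_notMem hnew] at this
    omega
  refine ⟨R, hR, fun w => ⟨fun m hm => not_le.mp fun hunacc =>
    hstuck hm (hR.reject_unacceptable hm hunacc), not_lt.mp fun hover => ?_⟩⟩
  obtain ⟨m, hm, hworst⟩ := Finset.exists_min_image (suitors M W pm qa R w) (fun x => pw w (some x))
    (Finset.card_pos.mp (by omega))
  exact hstuck hm (hR.reject_worst hm hover hworst)

lemma IsTerminal.suitors_full_above (hW : ∀ w ∈ W, StrictPref (pw w) M)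
    (hfin : IsTerminal M W pm pw qa qwa R) (hmw : (m, w) ∈ R)
    (hacc : pw w none < pw w (some m)) :
    (suitors M W pm qa R w).card = qwa w ∧
      ∀ x ∈ suitors M W pm qa R w, pw w (some m) < pw w (some x) := by
  have hsat := hfin.1.saturated hW hmw hacc
  have heq := Finset.eq_of_subset_of_card_le (Finset.filter_subset _ _) ((hfin.2 w).2.trans hsat)
  refine ⟨(hfin.2 w).2.antisymm (heq ▸ hsat), fun x hx => ?_⟩
  rw [← heq] at hx
  exact (Finset.mem_filter.mp hx).2

lemma mem_proposalMatching :
    (m, w) ∈ proposalMatching M W pm qa R ↔ m ∈ M ∧ w ∈ proposals W pm qa R m := by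
  simp only [proposalMatching, Finset.mem_filter, Finset.mem_product]
  exact ⟨fun h => ⟨h.1.1, h.2⟩,
    fun h => ⟨⟨h.1, (mem_available.mp (proposals_subset_available h.2)).1⟩, h.2⟩⟩

lemma ptnrsM_proposalMatching (hm : m ∈ M) :
    ptnrsM (proposalMatching M W pm qa R) m = proposals W pm qa R m := by
  ext w
  rw [mem_ptnrsM, mem_proposalMatching]
  exact and_iff_right hm

lemma ptnrsW_proposalMatching :
    ptnrsW (proposalMatching M W pm qa R) w = suitors M W pm qa R w := by
  ext m
  rw [mem_ptnrsW, mem_proposalMatching, mem_suitors]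

lemma IsTerminal.validQ (hM : ∀ m ∈ M, StrictPref (pm m) W)
    (hfin : IsTerminal M W pm pw qa qwa R) :
    ValidQ M W qa qwa (proposalMatching M W pm qa R) := by
  refine ⟨fun p hp => Finset.mem_product.mp (Finset.mem_filter.mp hp).1, fun m => ?_, fun w => ?_⟩
  · by_cases hm : m ∈ M
    · rw [ptnrsM_proposalMatching hm]
      exact card_proposals_le (hM m hm)
    · rw [Finset.card_eq_zero.mpr (Finset.eq_empty_of_forall_notMem fun w hw =>
        hm (mem_proposalMatching.mp (mem_ptnrsM.mp hw)).1)]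
      exact Nat.zero_le _
  · rw [ptnrsW_proposalMatching]
    exact (hfin.2 w).2

lemma IsTerminal.indRatQ (hfin : IsTerminal M W pm pw qa qwa R) :
    IndRatQ pm pw (proposalMatching M W pm qa R) := by
  rintro ⟨m, w⟩ hp
  obtain ⟨hm, hw⟩ := mem_proposalMatching.mp hp
  exact ⟨none_lt_of_mem_proposals hw, (hfin.2 w).1 m (mem_suitors.mpr ⟨hm, hw⟩)⟩

lemma IsTerminal.stableQ (hM : ∀ m ∈ M, StrictPref (pm m) W)
    (hW : ∀ w ∈ W, StrictPref (pw w) M) (hfin : IsTerminal M W pm pw qa qwa R) :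
    StableQ M W pm pw qa qwa (proposalMatching M W pm qa R) := by
  refine ⟨hfin.indRatQ, fun m hm w hw ⟨hnot, hpm, hpw⟩ => ?_⟩
  rw [ptnrsM_proposalMatching hm] at hpm
  rw [ptnrsW_proposalMatching] at hpw
  by_cases hR : (m, w) ∈ R
  · obtain ⟨hcard, habove⟩ :=
      hfin.suitors_full_above hW hR (none_lt_of_prefOver (hfin.2 w).1 hpw)
    exact not_prefOver_of_full_above hcard habove hpw
  · have hav : w ∈ available W pm R m :=
      mem_available.mpr ⟨hw, none_lt_of_prefOver (fun _ => none_lt_of_mem_proposals) hpm, hR⟩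
    obtain ⟨hcard, habove⟩ := topSet_full_above (injOn_available (hM m hm)) hav
      fun h => hnot (mem_proposalMatching.mpr ⟨hm, h⟩)
    exact not_prefOver_of_full_above hcard habove hpm

lemma spot_ptnrsM_le_proposalMatching (hmW : StrictPref (pm m) W) (hm : m ∈ M)
    (hIR : IndRatQ pm pw ν) (hval : ValidQ M W qb qwb ν) (hdisj : Disjoint R ν) {k : ℕ}
    (hk : k < qa m) :
    pm m (spot (pm m) (qb m) (ptnrsM ν m) k) ≤
      pm m (spot (pm m) (qa m) (ptnrsM (proposalMatching M W pm qa R) m) k) := by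
  rw [ptnrsM_proposalMatching hm]
  have hsub := ptnrsM_subset_available hIR hval hdisj (m := m)
  exact spot_le_spot (card_proposals_le hmW) hk (fun _ hy => (mem_available.mp (hsub hy)).2.1)
    (fun _ => none_lt_of_mem_proposals)
    fun _ hx => topSet_full_above (injOn_available hmW) (hsub hx)

lemma IsTerminal.spot_proposalMatching_le_ptnrsW (hM : ∀ m ∈ M, StrictPref (pm m) W)
    (hW : ∀ w ∈ W, StrictPref (pw w) M) (hfin : IsTerminal M W pm pw qa qwa R)
    (hq : ∀ m ∈ M, qa m ≤ qb m) (hval : ValidQ M W qb qwb ν)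
    (hstab : StableQ M W pm pw qb qwb ν) (hdisj : Disjoint R ν) (hw : w ∈ W) {k : ℕ}
    (hk : k < qwb w) :
    pw w (spot (pw w) (qwa w) (ptnrsW (proposalMatching M W pm qa R) w) k) ≤
      pw w (spot (pw w) (qwb w) (ptnrsW ν w) k) := by
  rw [ptnrsW_proposalMatching]
  refine spot_le_spot (hval.2.2 w) hk (hfin.2 w).1 (fun _ hx => (hstab.1 _ (mem_ptnrsW.mp hx)).2)
    fun x hx hxν => ?_
  obtain ⟨hxM, hwx⟩ := mem_suitors.mp hx
  have hxw : (x, w) ∉ ν := mt mem_ptnrsW.mpr hxν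
  -- `x` still courts `w` and prefers her to his `ν`-partners, so by stability `w` is full of
  -- better partners in `ν`
  have hxprefers := prefOver_of_mem_proposals (hM x hxM) (hq x hxM) hstab.1 hval hdisj hwx hxw
  refine full_above_of_not_prefOver (hval.2.2 w) ((hfin.2 w).1 x hx) (fun y hy => ?_)
    fun hwprefers => hstab.2 x hxM w hw ⟨hxw, hxprefers, hwprefers⟩
  exact (hW w hw).ne (hval.1 _ (mem_ptnrsW.mp hy)).1 hxM (ne_of_mem_of_not_mem hy hxν)

theorem IsTerminal.manOptQ (hM : ∀ m ∈ M, StrictPref (pm m) W)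
    (hW : ∀ w ∈ W, StrictPref (pw w) M) (hfin : IsTerminal M W pm pw qa qwa R) :
    ManOptQ M W pm pw qa qwa (proposalMatching M W pm qa R) :=
  ⟨hfin.validQ hM, hfin.stableQ hM hW, fun _ hval hstab m hm _ hk =>
    spot_ptnrsM_le_proposalMatching (hM m hm) hm hstab.1 hval
      (hfin.1.disjoint hM hW (fun _ _ => le_rfl) (fun _ _ => le_rfl) hval hstab) hk⟩

theorem ManOptQ.eq {μ μ' : Finset (α × β)} (hM : ∀ m ∈ M, StrictPref (pm m) W)
    (h : ManOptQ M W pm pw qa qwa μ) (h' : ManOptQ M W pm pw qa qwa μ') : μ = μ' := by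
  have hptnrs : ∀ m ∈ M, ptnrsM μ m = ptnrsM μ' m := fun m hm =>
    (hM m hm).eq_of_spot_eq (fun _ hw => (h.1.1 _ (mem_ptnrsM.mp hw)).2)
      (fun _ hw => (h'.1.1 _ (mem_ptnrsM.mp hw)).2) (h.1.2.1 m) (h'.1.2.1 m) fun k hk =>
        (h'.2.2 μ h.1 h.2.1 m hm k hk).antisymm (h.2.2 μ' h'.1 h'.2.1 m hm k hk)
  ext ⟨m, w⟩
  by_cases hm : m ∈ M
  · rw [← mem_ptnrsM, ← mem_ptnrsM, hptnrs m hm]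
  · exact iff_of_false (fun hmw => hm (h.1.1 _ hmw).1) fun hmw => hm (h'.1.1 _ hmw).1

theorem ManOptQ.spot_comparison {μ : Finset (α × β)} (hM : ∀ m ∈ M, StrictPref (pm m) W)
    (hW : ∀ w ∈ W, StrictPref (pw w) M) (hμ : ManOptQ M W pm pw qa qwa μ)
    (hval : ValidQ M W qb qwb ν) (hstab : StableQ M W pm pw qb qwb ν)
    (hq : ∀ m ∈ M, qa m ≤ qb m) (hqw : ∀ w ∈ W, qwb w ≤ qwa w) :
    (∀ m ∈ M, ∀ k < qa m,
      pm m (spot (pm m) (qb m) (ptnrsM ν m) k) ≤ pm m (spot (pm m) (qa m) (ptnrsM μ m) k)) ∧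
    (∀ w ∈ W, ∀ k < qwb w,
      pw w (spot (pw w) (qwa w) (ptnrsW μ w) k) ≤ pw w (spot (pw w) (qwb w) (ptnrsW ν w) k)) := by
  obtain ⟨R, hfin⟩ := exists_isTerminal M W pm pw qa qwa
  obtain rfl := hμ.eq hM (hfin.manOptQ hM hW)
  have hdisj := hfin.1.disjoint hM hW hq hqw hval hstab
  exact ⟨fun m hm _ hk => spot_ptnrsM_le_proposalMatching (hM m hm) hm hstab.1 hval hdisj hk,
    fun _ hw _ hk => hfin.spot_proposalMatching_le_ptnrsW hM hW hq hval hstab hdisj hw hk⟩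

end Market

section Swap

noncomputable def swapPairs (ν : Finset (α × β)) : Finset (β × α) := ν.image Prod.swap

variable {M : Finset α} {W : Finset β} {pm : α → Option β → ℕ} {pw : β → Option α → ℕ}
  {qa qb : α → ℕ} {qwa qwb : β → ℕ} {μ ν : Finset (α × β)}

@[simp]
lemma mem_swapPairs {w : β} {m : α} : (w, m) ∈ swapPairs ν ↔ (m, w) ∈ ν := by
  simp [swapPairs]

lemma ptnrsM_swapPairs (w : β) : ptnrsM (swapPairs ν) w = ptnrsW ν w := by
  ext m
  simp [mem_ptnrsM, mem_ptnrsW]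

lemma ptnrsW_swapPairs (m : α) : ptnrsW (swapPairs ν) m = ptnrsM ν m := by
  ext w
  simp [mem_ptnrsM, mem_ptnrsW]

lemma ValidQ.swapPairs (h : ValidQ M W qa qwa ν) : ValidQ W M qwa qa (swapPairs ν) :=
  ⟨fun ⟨_, _⟩ hp => (h.1 _ (mem_swapPairs.mp hp)).symm,
    fun w => ptnrsM_swapPairs w ▸ h.2.2 w, fun m => ptnrsW_swapPairs m ▸ h.2.1 m⟩

lemma StableQ.swapPairs (h : StableQ M W pm pw qa qwa ν) :
    StableQ W M pw pm qwa qa (swapPairs ν) := by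
  refine ⟨fun ⟨_, _⟩ hp => (h.1 _ (mem_swapPairs.mp hp)).symm, fun w hw m hm hblock => ?_⟩
  rw [BlocksQ, ptnrsM_swapPairs, ptnrsW_swapPairs, mem_swapPairs] at hblock
  exact h.2 m hm w hw ⟨hblock.1, hblock.2.2, hblock.2.1⟩

lemma WomanOptQ.manOptQ_swapPairs (h : WomanOptQ M W pm pw qa qwa μ) :
    ManOptQ W M pw pm qwa qa (swapPairs μ) := by
  refine ⟨h.1.swapPairs, h.2.1.swapPairs, fun ν hval hstab w hw k hk => ?_⟩
  have := h.2.2 (swapPairs ν) hval.swapPairs hstab.swapPairs w hw k hk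
  rwa [ptnrsW_swapPairs, ← ptnrsM_swapPairs] at this

theorem WomanOptQ.spot_comparison (hM : ∀ m ∈ M, StrictPref (pm m) W)
    (hW : ∀ w ∈ W, StrictPref (pw w) M) (hμ : WomanOptQ M W pm pw qa qwa μ)
    (hval : ValidQ M W qb qwb ν) (hstab : StableQ M W pm pw qb qwb ν)
    (hq : ∀ m ∈ M, qb m ≤ qa m) (hqw : ∀ w ∈ W, qwa w ≤ qwb w) :
    (∀ w ∈ W, ∀ k < qwa w,
      pw w (spot (pw w) (qwb w) (ptnrsW ν w) k) ≤ pw w (spot (pw w) (qwa w) (ptnrsW μ w) k)) ∧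
    (∀ m ∈ M, ∀ k < qb m,
      pm m (spot (pm m) (qa m) (ptnrsM μ m) k) ≤ pm m (spot (pm m) (qb m) (ptnrsM ν m) k)) := by
  simpa only [ptnrsM_swapPairs, ptnrsW_swapPairs] using
    hμ.manOptQ_swapPairs.spot_comparison hW hM hval.swapPairs hstab.swapPairs hqw hq

end Swap

/-- Comparative statics of the extended Gale–Shapley algorithm with
quotas: lowering men's quotas (`q1M ≤ qM`) makes every man weakly better off spot-wise
and every woman weakly worse off; lowering women's quotas (`q2W ≤ qW`) makes every man
weakly worse off and every woman weakly better off. Here `μ`, `μ₁`, `μ₂` are the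
σ-optimal stable matchings under quotas `Q`, `Q₁`, `Q₂` respectively, for the same
fixed proposing side σ. -/
theorem quota_comparative_statics
    (M : Finset α) (W : Finset β)
    (prefM : α → Option β → ℕ) (prefW : β → Option α → ℕ)
    (hM : ∀ m ∈ M, StrictPref (prefM m) W) (hW : ∀ w ∈ W, StrictPref (prefW w) M)
    (qM q1M : α → ℕ) (qW q2W : β → ℕ)
    (hq1 : ∀ m ∈ M, q1M m ≤ qM m) (hq2 : ∀ w ∈ W, q2W w ≤ qW w)
    (μ μ₁ μ₂ : Finset (α × β))
    (hopt :
      (ManOptQ M W prefM prefW qM qW μ ∧ ManOptQ M W prefM prefW q1M qW μ₁ ∧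
        ManOptQ M W prefM prefW qM q2W μ₂) ∨
      (WomanOptQ M W prefM prefW qM qW μ ∧ WomanOptQ M W prefM prefW q1M qW μ₁ ∧
        WomanOptQ M W prefM prefW qM q2W μ₂)) :
    (∀ m ∈ M, ∀ k, k < q1M m →
        prefM m (spot (prefM m) (qM m) (ptnrsM μ m) k) ≤
          prefM m (spot (prefM m) (q1M m) (ptnrsM μ₁ m) k)) ∧
    (∀ w ∈ W, ∀ k, k < qW w →
        prefW w (spot (prefW w) (qW w) (ptnrsW μ₁ w) k) ≤
          prefW w (spot (prefW w) (qW w) (ptnrsW μ w) k)) ∧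
    (∀ m ∈ M, ∀ k, k < qM m →
        prefM m (spot (prefM m) (qM m) (ptnrsM μ₂ m) k) ≤
          prefM m (spot (prefM m) (qM m) (ptnrsM μ m) k)) ∧
    (∀ w ∈ W, ∀ k, k < q2W w →
        prefW w (spot (prefW w) (qW w) (ptnrsW μ w) k) ≤
          prefW w (spot (prefW w) (q2W w) (ptnrsW μ₂ w) k)) := by
  rcases hopt with ⟨hμ, hμ₁, hμ₂⟩ | ⟨hμ, hμ₁, hμ₂⟩
  · obtain ⟨hmen₁, hwomen₁⟩ := hμ₁.spot_comparison hM hW hμ.1 hμ.2.1 hq1 fun _ _ => le_rfl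
    obtain ⟨hmen₂, hwomen₂⟩ := hμ.spot_comparison hM hW hμ₂.1 hμ₂.2.1 (fun _ _ => le_rfl) hq2
    exact ⟨hmen₁, hwomen₁, hmen₂, hwomen₂⟩
  · obtain ⟨hwomen₁, hmen₁⟩ := hμ.spot_comparison hM hW hμ₁.1 hμ₁.2.1 hq1 fun _ _ => le_rfl
    obtain ⟨hwomen₂, hmen₂⟩ := hμ₂.spot_comparison hM hW hμ.1 hμ.2.1 (fun _ _ => le_rfl) hq2
    exact ⟨hmen₁, hwomen₁, hmen₂, hwomen₂⟩

end Stmt13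
end
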